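/- arXiv:2507.17137 — 11 statements merged into one kernel-verified Lean document; each statement's English description precedes it below -/
import Mathlib

section
/- Under the logistic missingness model, the random variable R·exp(α₀ + β·X₁ + γ·Y) is integrable and E[R·exp(α₀ + β·X₁ + γ·Y)] = 1 − η = P(R = 0). -/
open MeasureTheory ProbabilityTheory

theorem ipw_aux
    {Ω : Type*} {mΩ : MeasurableSpace Ω} (P : Measure Ω) [IsProbabilityMeasure P]
    {d d₁ : ℕ}
    (X : Ω → (Fin d → ℝ)) (Y : Ω → ℝ) (R : Ω → ℝ)
    (hX : Measurable X) (hY : Measurable Y) (hR : Measurable R)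
    (hR01 : ∀ ω, R ω = 0 ∨ R ω = 1)
    (proj : (Fin d → ℝ) →ₗ[ℝ] (Fin d₁ → ℝ))
    (α₀ : ℝ) (β : Fin d₁ → ℝ) (γ : ℝ)
    (hmodel : (fun ω => (1 + Real.exp (α₀ + ∑ i, β i * proj (X ω) i + γ * Y ω))⁻¹)
      =ᵐ[P] P[R | MeasurableSpace.comap (fun ω => (X ω, Y ω)) inferInstance])
    (η : ℝ) (hη : η = (P {ω | R ω = 1}).toReal) :
    Integrable (fun ω => R ω * Real.exp (α₀ + ∑ i, β i * proj (X ω) i + γ * Y ω)) P ∧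
    ∫ ω, R ω * Real.exp (α₀ + ∑ i, β i * proj (X ω) i + γ * Y ω) ∂P = 1 - η ∧
    1 - η = (P {ω | R ω = 0}).toReal := by
  classical
  have hm : MeasurableSpace.comap (fun ω => (X ω, Y ω)) inferInstance ≤ mΩ :=
    (hX.prodMk hY).comap_le
  set S : Ω → ℝ := fun ω => α₀ + ∑ i, β i * proj (X ω) i + γ * Y ω with hS_def
  have hXYm : Measurable[MeasurableSpace.comap (fun ω => (X ω, Y ω)) inferInstance]
      (fun ω => (X ω, Y ω)) := fun s hs => ⟨s, hs, rfl⟩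
  have hφ : Measurable (fun p : (Fin d → ℝ) × ℝ => α₀ + ∑ i, β i * proj p.1 i + γ * p.2) := by
    have hproj : Measurable (fun x : Fin d → ℝ => proj x) :=
      proj.continuous_of_finiteDimensional.measurable
    fun_prop
  have hSm : Measurable[MeasurableSpace.comap (fun ω => (X ω, Y ω)) inferInstance] S :=
    hφ.comp hXYm
  have hS : Measurable S := hSm.mono hm le_rfl
  set g : Ω → ℝ := fun ω => Real.exp (S ω) with hg_def
  have hgm : Measurable[MeasurableSpace.comap (fun ω => (X ω, Y ω)) inferInstance] g :=
    Real.measurable_exp.comp hSm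
  have hg : Measurable g := Real.measurable_exp.comp hS
  have hg0 : ∀ ω, 0 < g ω := fun ω => Real.exp_pos _
  set π : Ω → ℝ := fun ω => (1 + g ω)⁻¹ with hπ_def
  have hπmeas : Measurable π := (measurable_const.add hg).inv
  have hπ0 : ∀ ω, 0 < π ω := fun ω => inv_pos.mpr (by linarith [hg0 ω])
  have hπ1 : ∀ ω, π ω ≤ 1 := fun ω => by
    rw [hπ_def, inv_le_one_iff₀]; right; linarith [hg0 ω]
  have hgπ : ∀ ω, g ω * π ω = 1 - π ω := fun ω => by
    have h1 : (0:ℝ) < 1 + g ω := by linarith [hg0 ω]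
    rw [hπ_def]; field_simp; ring
  have hgπ1 : ∀ ω, g ω * π ω ≤ 1 := fun ω => by
    rw [hgπ ω]; linarith [hπ0 ω]
  have hR0 : ∀ ω, 0 ≤ R ω := fun ω => by rcases hR01 ω with h | h <;> simp [h]
  have hR1 : ∀ ω, R ω ≤ 1 := fun ω => by rcases hR01 ω with h | h <;> simp [h]
  have hRint : Integrable R P := by
    refine ⟨hR.aestronglyMeasurable, ?_⟩
    apply HasFiniteIntegral.of_bounded (C := 1)
    filter_upwards with ω
    rw [Real.norm_eq_abs, abs_le]
    exact ⟨by linarith [hR0 ω], hR1 ω⟩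
  have hπint : Integrable π P := by
    refine ⟨hπmeas.aestronglyMeasurable, ?_⟩
    apply HasFiniteIntegral.of_bounded (C := 1)
    filter_upwards with ω
    rw [Real.norm_eq_abs, abs_le]
    exact ⟨by linarith [hπ0 ω], hπ1 ω⟩
  -- key identity for comap-measurable h with h*R integrable
  have key : ∀ h : Ω → ℝ,
      Measurable[MeasurableSpace.comap (fun ω => (X ω, Y ω)) inferInstance] h →
      Integrable (fun ω => h ω * R ω) P →
      ∫ ω, h ω * R ω ∂P = ∫ ω, h ω * π ω ∂P := by
    intro h hhm hhint
    have h1 : P[fun ω => h ω * R ω|MeasurableSpace.comap (fun ω => (X ω, Y ω)) inferInstance]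
        =ᵐ[P] fun ω => h ω * (P[R|MeasurableSpace.comap (fun ω => (X ω, Y ω)) inferInstance]) ω :=
      condExp_mul_of_stronglyMeasurable_left hhm.stronglyMeasurable hhint hRint
    have h2 : (fun ω => h ω * (P[R|MeasurableSpace.comap (fun ω => (X ω, Y ω)) inferInstance]) ω)
        =ᵐ[P] fun ω => h ω * π ω := by
      filter_upwards [hmodel] with ω hω
      rw [← hω]
    calc ∫ ω, h ω * R ω ∂P
        = ∫ ω, (P[fun ω => h ω * R ω|MeasurableSpace.comap (fun ω => (X ω, Y ω)) inferInstance]) ω ∂P :=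
          (integral_condExp hm).symm
      _ = ∫ ω, h ω * π ω ∂P := integral_congr_ae (h1.trans h2)
  have htruncInt : ∀ n : ℕ, Integrable (fun ω => min (g ω) n * R ω) P := by
    intro n
    refine ⟨((hg.min measurable_const).mul hR).aestronglyMeasurable, ?_⟩
    apply HasFiniteIntegral.of_bounded (C := (n : ℝ))
    filter_upwards with ω
    rw [Real.norm_eq_abs,
      abs_of_nonneg (mul_nonneg (le_min (hg0 ω).le (Nat.cast_nonneg n)) (hR0 ω))]
    calc min (g ω) n * R ω ≤ (n : ℝ) * 1 :=
          mul_le_mul (min_le_right _ _) (hR1 ω) (hR0 ω) (Nat.cast_nonneg n)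
      _ = n := mul_one _
  have htrunc : ∀ n : ℕ, ∫ ω, min (g ω) n * R ω ∂P ≤ 1 := by
    intro n
    rw [key _ (hgm.min measurable_const) (htruncInt n)]
    calc ∫ ω, min (g ω) n * π ω ∂P ≤ ∫ ω, (1:ℝ) ∂P := by
          apply integral_mono_of_nonneg
          · filter_upwards with ω
            exact mul_nonneg (le_min (hg0 ω).le (Nat.cast_nonneg n)) (hπ0 ω).le
          · exact integrable_const 1
          · filter_upwards with ω
            calc min (g ω) n * π ω ≤ g ω * π ω :=
                  mul_le_mul_of_nonneg_right (min_le_left _ _) (hπ0 ω).le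
              _ ≤ 1 := hgπ1 ω
      _ = 1 := by simp
  have hIntgR : Integrable (fun ω => g ω * R ω) P := by
    refine ⟨(hg.mul hR).aestronglyMeasurable, ?_⟩
    rw [hasFiniteIntegral_iff_ofReal
      (Filter.Eventually.of_forall fun ω => mul_nonneg (hg0 ω).le (hR0 ω))]
    have hle : ∫⁻ ω, ENNReal.ofReal (g ω * R ω) ∂P ≤ 1 := by
      have hsup : ∀ ω, (⨆ n : ℕ, ENNReal.ofReal (min (g ω) n * R ω)) =
          ENNReal.ofReal (g ω * R ω) := by
        intro ω
        obtain ⟨n, hn⟩ := exists_nat_ge (g ω)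
        apply le_antisymm
        · exact iSup_le fun k => ENNReal.ofReal_le_ofReal
            (mul_le_mul_of_nonneg_right (min_le_left _ _) (hR0 ω))
        · exact le_trans (le_of_eq (by rw [min_eq_left hn])) (le_iSup _ n)
      calc ∫⁻ ω, ENNReal.ofReal (g ω * R ω) ∂P
          = ∫⁻ ω, ⨆ n : ℕ, ENNReal.ofReal (min (g ω) n * R ω) ∂P := by
            apply lintegral_congr; intro ω; rw [hsup ω]
        _ = ⨆ n : ℕ, ∫⁻ ω, ENNReal.ofReal (min (g ω) n * R ω) ∂P := by
            apply lintegral_iSup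
            · intro n
              exact ((hg.min measurable_const).mul hR).ennreal_ofReal
            · intro a b hab ω
              apply ENNReal.ofReal_le_ofReal
              exact mul_le_mul_of_nonneg_right
                (min_le_min le_rfl (Nat.cast_le.mpr hab)) (hR0 ω)
        _ ≤ 1 := by
            apply iSup_le
            intro n
            rw [← ofReal_integral_eq_lintegral_ofReal (htruncInt n)
              (Filter.Eventually.of_forall fun ω =>
                mul_nonneg (le_min (hg0 ω).le (Nat.cast_nonneg n)) (hR0 ω))]
            calc ENNReal.ofReal (∫ ω, min (g ω) n * R ω ∂P) ≤ ENNReal.ofReal 1 :=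
                  ENNReal.ofReal_le_ofReal (htrunc n)
              _ = 1 := ENNReal.ofReal_one
    exact lt_of_le_of_lt hle ENNReal.one_lt_top
  -- ∫ R = η
  have hRset : MeasurableSet {ω | R ω = 1} := hR (measurableSet_singleton 1)
  have hintR : ∫ ω, R ω ∂P = η := by
    have hre : R = Set.indicator {ω | R ω = 1} (fun _ => (1:ℝ)) := by
      funext ω
      rcases hR01 ω with h | h
      · simp [Set.indicator, h]
      · simp [Set.indicator, h]
    rw [hre, integral_indicator_const _ hRset, hη]
    simp [measureReal_def]
  have hintπ : ∫ ω, π ω ∂P = η := by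
    calc ∫ ω, π ω ∂P
        = ∫ ω, (P[R|MeasurableSpace.comap (fun ω => (X ω, Y ω)) inferInstance]) ω ∂P :=
          integral_congr_ae hmodel
      _ = ∫ ω, R ω ∂P := integral_condExp hm
      _ = η := hintR
  have hval : ∫ ω, g ω * R ω ∂P = 1 - η := by
    rw [key g hgm hIntgR]
    calc ∫ ω, g ω * π ω ∂P = ∫ ω, (1 - π ω) ∂P := by
          apply integral_congr_ae
          filter_upwards with ω
          exact hgπ ω
      _ = ∫ ω, (1:ℝ) ∂P - ∫ ω, π ω ∂P := integral_sub (integrable_const 1) hπint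
      _ = 1 - η := by rw [hintπ]; simp
  have hcompl : {ω | R ω = 0} = {ω | R ω = 1}ᶜ := by
    ext ω
    rcases hR01 ω with h | h <;> simp [h]
  have hlast : 1 - η = (P {ω | R ω = 0}).toReal := by
    rw [hcompl, prob_compl_eq_one_sub hRset, hη,
      ENNReal.toReal_sub_of_le prob_le_one (by simp), ENNReal.toReal_one]
  have hcomm : (fun ω => R ω * g ω) = fun ω => g ω * R ω := by
    funext ω; ring
  refine ⟨?_, ?_, hlast⟩
  · show Integrable (fun ω => R ω * g ω) P
    rw [hcomm]; exact hIntgR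
  · show ∫ ω, R ω * g ω ∂P = 1 - η
    rw [hcomm]; exact hval

/-- Under the logistic missingness model, `R · exp(α₀ + β·X₁ + γ·Y)` is integrable and
`E[R · exp(α₀ + β·X₁ + γ·Y)] = 1 − η = P(R = 0)`. -/
theorem ipw_weight_integrable_and_mean_one_sub_eta
    {Ω : Type*} [MeasurableSpace Ω] (P : Measure Ω) [IsProbabilityMeasure P]
    {d d₁ : ℕ}
    (X : Ω → (Fin d → ℝ)) (Y : Ω → ℝ) (R : Ω → ℝ)
    (hX : Measurable X) (hY : Measurable Y) (hR : Measurable R)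
    (hR01 : ∀ ω, R ω = 0 ∨ R ω = 1)
    (proj : (Fin d → ℝ) →ₗ[ℝ] (Fin d₁ → ℝ))
    (α₀ : ℝ) (β : Fin d₁ → ℝ) (γ : ℝ)
    (hmodel : (fun ω => (1 + Real.exp (α₀ + ∑ i, β i * proj (X ω) i + γ * Y ω))⁻¹)
      =ᵐ[P] P[R | MeasurableSpace.comap (fun ω => (X ω, Y ω)) inferInstance])
    (η : ℝ) (hη : η = (P {ω | R ω = 1}).toReal) (hη0 : 0 < η) (hη1 : η < 1) :
    Integrable (fun ω => R ω * Real.exp (α₀ + ∑ i, β i * proj (X ω) i + γ * Y ω)) P ∧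
    ∫ ω, R ω * Real.exp (α₀ + ∑ i, β i * proj (X ω) i + γ * Y ω) ∂P = 1 - η ∧
    1 - η = (P {ω | R ω = 0}).toReal :=
  ipw_aux P X Y R hX hY hR hR01 proj α₀ β γ hmodel η hη
end

section
/- Under the logistic missingness model, E[R·exp(α₀ + β·X₁ + γ·Y) + R | σ(X)] = 1 almost surely; equivalently, the inverse-probability-weighting function (x,y,r) ↦ r·exp(α₀ + β·x₁ + γ·y) + r − 1 has conditional mean zero given X. -/
open MeasureTheory ProbabilityTheory

/-- Under the logistic missingness model,
`E[R·exp(α₀ + β·X₁ + γ·Y) + R | σ(X)] = 1` almost surely; equivalently the IPW function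
`(x,y,r) ↦ r·exp(α₀ + β·x₁ + γ·y) + r − 1` has conditional mean zero given `X`. -/
theorem ipw_conditional_mean_one
    {Ω : Type*} [MeasurableSpace Ω] (P : Measure Ω) [IsProbabilityMeasure P]
    {d d₁ : ℕ}
    (X : Ω → (Fin d → ℝ)) (Y : Ω → ℝ) (R : Ω → ℝ)
    (hX : Measurable X) (hY : Measurable Y) (hR : Measurable R)
    (hR01 : ∀ ω, R ω = 0 ∨ R ω = 1)
    (proj : (Fin d → ℝ) →ₗ[ℝ] (Fin d₁ → ℝ))
    (α₀ : ℝ) (β : Fin d₁ → ℝ) (γ : ℝ)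
    (hmodel : (fun ω => (1 + Real.exp (α₀ + ∑ i, β i * proj (X ω) i + γ * Y ω))⁻¹)
      =ᵐ[P] P[R | MeasurableSpace.comap (fun ω => (X ω, Y ω)) inferInstance])
    (η : ℝ) (hη : η = (P {ω | R ω = 1}).toReal) (hη0 : 0 < η) (hη1 : η < 1) :
    (P[fun ω => R ω * Real.exp (α₀ + ∑ i, β i * proj (X ω) i + γ * Y ω) + R ω |
        MeasurableSpace.comap X inferInstance] =ᵐ[P] fun _ => 1) ∧
    (P[fun ω => R ω * Real.exp (α₀ + ∑ i, β i * proj (X ω) i + γ * Y ω) + R ω - 1 |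
        MeasurableSpace.comap X inferInstance] =ᵐ[P] fun _ => 0) := by
  classical
  rename_i m0 _hPP
  -- basic inequalities between σ-algebras
  have hleXY : (MeasurableSpace.comap (fun ω => (X ω, Y ω)) inferInstance) ≤ m0 := (hX.prodMk hY).comap_le
  have hleX : (MeasurableSpace.comap X inferInstance) ≤ m0 := hX.comap_le
  have hXsub : (MeasurableSpace.comap X inferInstance) ≤ (MeasurableSpace.comap (fun ω => (X ω, Y ω)) inferInstance) := by
    have hXc : X = Prod.fst ∘ (fun ω => (X ω, Y ω)) := rfl
    rw [hXc, ← MeasurableSpace.comap_comp]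
    exact MeasurableSpace.comap_mono measurable_fst.comap_le
  -- the exponent and its measurability
  set e : Ω → ℝ := fun ω => α₀ + ∑ i, β i * proj (X ω) i + γ * Y ω with he_def
  have hprojm : Measurable (fun x : Fin d → ℝ => proj x) :=
    proj.continuous_of_finiteDimensional.measurable
  have hφ : Measurable (fun p : (Fin d → ℝ) × ℝ => α₀ + ∑ i, β i * proj p.1 i + γ * p.2) := by
    apply Measurable.add
    · apply Measurable.add measurable_const
      exact Finset.measurable_sum _ fun i _ =>
        (measurable_const.mul (((measurable_pi_apply i).comp hprojm).comp measurable_fst))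
    · exact measurable_const.mul measurable_snd
  have hZ : Measurable[(MeasurableSpace.comap (fun ω => (X ω, Y ω)) inferInstance)] (fun ω => (X ω, Y ω)) := Measurable.of_comap_le le_rfl
  have he : Measurable[(MeasurableSpace.comap (fun ω => (X ω, Y ω)) inferInstance)] e := hφ.comp hZ
  -- f = 1 + exp(e) ≥ 1
  set f : Ω → ℝ := fun ω => 1 + Real.exp (e ω) with hf_def
  have hf1 : ∀ ω, 1 ≤ f ω := fun ω => le_add_of_nonneg_right (Real.exp_pos _).le
  have hf0 : ∀ ω, 0 < f ω := fun ω => lt_of_lt_of_le one_pos (hf1 ω)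
  have hfm : Measurable[(MeasurableSpace.comap (fun ω => (X ω, Y ω)) inferInstance)] f := measurable_const.add (Real.measurable_exp.comp he)
  have hfm0 : Measurable[m0] f := hfm.mono hleXY le_rfl
  have hR0 : ∀ ω, 0 ≤ R ω := fun ω => by rcases hR01 ω with h | h <;> simp [h]
  have hR1 : ∀ ω, R ω ≤ 1 := fun ω => by rcases hR01 ω with h | h <;> simp [h]
  have hRint : Integrable R P := by
    refine (integrable_const (1 : ℝ)).mono' hR.aestronglyMeasurable (ae_of_all _ fun ω => ?_)
    rw [Real.norm_eq_abs, abs_of_nonneg (hR0 ω)]; exact hR1 ω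
  -- truncations
  set g : ℕ → Ω → ℝ := fun n ω => min (f ω) n with hg_def
  have hgm : ∀ n, Measurable[(MeasurableSpace.comap (fun ω => (X ω, Y ω)) inferInstance)] (g n) := fun n => hfm.min measurable_const
  have hgm0 : ∀ n, Measurable[m0] (g n) := fun n => (hgm n).mono hleXY le_rfl
  have hg0 : ∀ n ω, 0 ≤ g n ω := fun n ω => le_min (hf0 ω).le (Nat.cast_nonneg n)
  have hgle : ∀ n ω, g n ω ≤ f ω := fun n ω => min_le_left _ _
  have hgRm : ∀ n, Measurable[m0] (fun ω => g n ω * R ω) := fun n => (hgm0 n).mul hR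
  have hgint : ∀ n, Integrable (fun ω => g n ω * R ω) P := by
    intro n
    refine (integrable_const ((n : ℝ))).mono' (hgRm n).aestronglyMeasurable
      (ae_of_all _ fun ω => ?_)
    rw [Real.norm_eq_abs, abs_of_nonneg (mul_nonneg (hg0 n ω) (hR0 ω))]
    calc g n ω * R ω ≤ g n ω * 1 := by
          exact mul_le_mul_of_nonneg_left (hR1 ω) (hg0 n ω)
      _ = g n ω := mul_one _
      _ ≤ n := min_le_right _ _
  -- pull-out property for truncations
  have hpull : ∀ n, P[fun ω => g n ω * R ω | (MeasurableSpace.comap (fun ω => (X ω, Y ω)) inferInstance)] =ᵐ[P] fun ω => g n ω * (P[R | (MeasurableSpace.comap (fun ω => (X ω, Y ω)) inferInstance)]) ω := by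
    intro n
    exact condExp_mul_of_stronglyMeasurable_left ((hgm n).stronglyMeasurable) (hgint n) hRint
  -- the key set-integral identity for truncations
  have hkeyn : ∀ (s : Set Ω), MeasurableSet[(MeasurableSpace.comap (fun ω => (X ω, Y ω)) inferInstance)] s → ∀ n,
      ∫ ω in s, g n ω * R ω ∂P = ∫ ω in s, g n ω * (f ω)⁻¹ ∂P := by
    intro s hs n
    rw [← setIntegral_condExp hleXY (hgint n) hs]
    refine setIntegral_congr_ae (μ := P) (hleXY s hs) ?_
    filter_upwards [hpull n, hmodel] with ω h1 h2 _
    rw [h1]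
    simp only [← h2]
    rfl
  -- dominated convergence: ∫_s gₙ/f → P s
  have hratio_tendsto : ∀ ω, Filter.Tendsto (fun n => g n ω * (f ω)⁻¹)
      Filter.atTop (nhds 1) := by
    intro ω
    have hev : (fun n : ℕ => g n ω * (f ω)⁻¹) =ᶠ[Filter.atTop] fun _ => (1 : ℝ) := by
      filter_upwards [Filter.eventually_ge_atTop (⌈f ω⌉₊)] with n hn
      have : f ω ≤ (n : ℝ) := le_trans (Nat.le_ceil _) (Nat.cast_le.mpr hn)
      rw [hg_def]; simp only [min_eq_left this]
      exact mul_inv_cancel₀ (hf0 ω).ne'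
    exact Filter.Tendsto.congr' hev.symm tendsto_const_nhds
  have hratio_bound : ∀ n ω, ‖g n ω * (f ω)⁻¹‖ ≤ 1 := by
    intro n ω
    rw [Real.norm_eq_abs, abs_of_nonneg (mul_nonneg (hg0 n ω) (inv_nonneg.mpr (hf0 ω).le))]
    rw [← mul_inv_cancel₀ (hf0 ω).ne']
    exact mul_le_mul_of_nonneg_right (hgle n ω) (inv_nonneg.mpr (hf0 ω).le)
  have hlim2 : ∀ (s : Set Ω), MeasurableSet[m0] s →
      Filter.Tendsto (fun n => ∫ ω in s, g n ω * (f ω)⁻¹ ∂P) Filter.atTop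
        (nhds ((P s).toReal)) := by
    intro s hs
    have := MeasureTheory.tendsto_integral_of_dominated_convergence (μ := P.restrict s)
      (F := fun n ω => g n ω * (f ω)⁻¹) (f := fun _ => (1 : ℝ)) (bound := fun _ => 1)
      (fun n => ((hgm0 n).mul hfm0.inv).aestronglyMeasurable)
      (integrable_const 1)
      (fun n => ae_of_all _ fun ω => hratio_bound n ω)
      (ae_of_all _ fun ω => hratio_tendsto ω)
    rw [← measureReal_def]
    simpa [Measure.restrict_apply_univ, measure_lt_top] using this
  -- key: integrability and set-integral identity for R * f
  have hkey : ∀ (s : Set Ω), MeasurableSet[m0] s → MeasurableSet[(MeasurableSpace.comap (fun ω => (X ω, Y ω)) inferInstance)] s →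
      IntegrableOn (fun ω => R ω * f ω) s P ∧
      ∫ ω in s, R ω * f ω ∂P = (P s).toReal := by
    intro s hs hsm
    -- lintegral convergence
    have hmono : ∀ ω, Monotone fun n => ENNReal.ofReal (g n ω * R ω) := by
      intro ω n m hnm
      exact ENNReal.ofReal_le_ofReal (mul_le_mul_of_nonneg_right
        (min_le_min le_rfl (Nat.cast_le.mpr hnm)) (hR0 ω))
    have htend : ∀ ω, Filter.Tendsto (fun n => ENNReal.ofReal (g n ω * R ω)) Filter.atTop
        (nhds (ENNReal.ofReal (R ω * f ω))) := by
      intro ω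
      have h1 : Filter.Tendsto (fun n => g n ω * R ω) Filter.atTop (nhds (f ω * R ω)) := by
        have hev : (fun n : ℕ => g n ω * R ω) =ᶠ[Filter.atTop] fun _ => f ω * R ω := by
          filter_upwards [Filter.eventually_ge_atTop (⌈f ω⌉₊)] with n hn
          have : f ω ≤ (n : ℝ) := le_trans (Nat.le_ceil _) (Nat.cast_le.mpr hn)
          rw [hg_def]; simp [min_eq_left this]
        exact Filter.Tendsto.congr' hev.symm tendsto_const_nhds
      rw [mul_comm (R ω)]
      exact (ENNReal.continuous_ofReal.tendsto _).comp h1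
    have hlint : Filter.Tendsto (fun n => ∫⁻ ω in s, ENNReal.ofReal (g n ω * R ω) ∂P)
        Filter.atTop (nhds (∫⁻ ω in s, ENNReal.ofReal (R ω * f ω) ∂P)) := by
      refine MeasureTheory.lintegral_tendsto_of_tendsto_of_monotone
        (fun n => (ENNReal.measurable_ofReal.comp (hgRm n)).aemeasurable)
        (ae_of_all _ hmono) (ae_of_all _ htend)
    -- each lintegral equals ofReal of the Bochner integral
    have heq : ∀ n, ∫⁻ ω in s, ENNReal.ofReal (g n ω * R ω) ∂P
        = ENNReal.ofReal (∫ ω in s, g n ω * R ω ∂P) := by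
      intro n
      rw [MeasureTheory.ofReal_integral_eq_lintegral_ofReal ((hgint n).integrableOn)
        (ae_of_all _ fun ω => mul_nonneg (hg0 n ω) (hR0 ω))]
    -- so the real sequence converges to P s
    have hreal : Filter.Tendsto (fun n => ∫ ω in s, g n ω * R ω ∂P) Filter.atTop
        (nhds ((P s).toReal)) := by
      have := hlim2 s hs
      refine this.congr fun n => (hkeyn s hsm n).symm
    -- hence the lintegral equals ofReal (P s).toReal = P s
    have hlint_eq : ∫⁻ ω in s, ENNReal.ofReal (R ω * f ω) ∂P = P s := by
      have h1 : Filter.Tendsto (fun n => ENNReal.ofReal (∫ ω in s, g n ω * R ω ∂P))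
          Filter.atTop (nhds (ENNReal.ofReal ((P s).toReal))) :=
        (ENNReal.continuous_ofReal.tendsto _).comp hreal
      have h2 : Filter.Tendsto (fun n => ∫⁻ ω in s, ENNReal.ofReal (g n ω * R ω) ∂P)
          Filter.atTop (nhds (ENNReal.ofReal ((P s).toReal))) := by
        refine h1.congr fun n => (heq n).symm
      have := tendsto_nhds_unique hlint h2
      rw [this, ENNReal.ofReal_toReal (measure_ne_top P s)]
    have hRfm : Measurable[m0] (fun ω => R ω * f ω) := hR.mul hfm0
    have hint : IntegrableOn (fun ω => R ω * f ω) s P := by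
      refine ⟨hRfm.aestronglyMeasurable, ?_⟩
      rw [hasFiniteIntegral_iff_ofReal (ae_of_all _ fun ω => mul_nonneg (hR0 ω) (hf0 ω).le)]
      rw [hlint_eq]
      exact measure_lt_top P s
    refine ⟨hint, ?_⟩
    rw [MeasureTheory.integral_eq_lintegral_of_nonneg_ae
      (ae_of_all _ fun ω => mul_nonneg (hR0 ω) (hf0 ω).le) hRfm.aestronglyMeasurable,
      hlint_eq]
  -- global integrability
  have hint_univ := hkey Set.univ MeasurableSet.univ MeasurableSet.univ
  have hIntRf : Integrable (fun ω => R ω * f ω) P :=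
    (integrableOn_univ).mp hint_univ.1
  -- the IPW function is R * f
  have hfun_eq : (fun ω => R ω * Real.exp (α₀ + ∑ i, β i * proj (X ω) i + γ * Y ω) + R ω)
      = fun ω => R ω * f ω := by
    funext ω; rw [hf_def, he_def]; ring
  haveI : SigmaFinite (P.trim hleX) := by
    haveI : IsFiniteMeasure (P.trim hleX) := isFiniteMeasure_trim hleX
    infer_instance
  have hmain : (fun _ => (1 : ℝ)) =ᵐ[P] P[fun ω => R ω * f ω | (MeasurableSpace.comap X inferInstance)] := by
    refine ae_eq_condExp_of_forall_setIntegral_eq hleX hIntRf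
      (fun s _ _ => (integrable_const 1).integrableOn) (fun s hs _ => ?_)
      (stronglyMeasurable_const.aestronglyMeasurable)
    rw [(hkey s (hleX s hs) (hXsub s hs)).2]
    simp
    rfl
  have hfirst : P[fun ω => R ω * Real.exp (α₀ + ∑ i, β i * proj (X ω) i + γ * Y ω) + R ω | (MeasurableSpace.comap X inferInstance)]
      =ᵐ[P] fun _ => 1 := by
    rw [hfun_eq]; exact hmain.symm
  refine ⟨hfirst, ?_⟩
  have hsub_eq : (fun ω => R ω * Real.exp (α₀ + ∑ i, β i * proj (X ω) i + γ * Y ω) + R ω - 1)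
      = (fun ω => R ω * Real.exp (α₀ + ∑ i, β i * proj (X ω) i + γ * Y ω) + R ω)
        - (fun _ => (1 : ℝ)) := rfl
  rw [hsub_eq, hfun_eq]
  have hsub := condExp_sub (μ := P) (m := (MeasurableSpace.comap X inferInstance)) hIntRf (integrable_const (1 : ℝ))
  refine hsub.trans ?_
  have hc : P[(fun _ => (1:ℝ)) | (MeasurableSpace.comap X inferInstance)] = fun _ => (1:ℝ) := condExp_const hleX 1
  filter_upwards [hmain] with ω hω
  simp only [Pi.sub_apply, hc, ← hω]
  ring
end

section
/- Under the logistic missingness model, the conditional distribution of (X,Y) given R = 0 is an exponential tilt of that given R = 1: for every bounded measurable function h : ℝ^d × ℝ → ℝ, E[h(X,Y) | R = 0] = E[h(X,Y)·exp(α₁ + β·X₁ + γ·Y) | R = 1]. -/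
open MeasureTheory ProbabilityTheory

private lemma tower_aux {Ω : Type*} [mΩ : MeasurableSpace Ω] (P : Measure Ω) [IsProbabilityMeasure P]
    {E : Type*} [MeasurableSpace E] (Z : Ω → E) (hZ : Measurable Z)
    (R : Ω → ℝ) (hR : Measurable R) (hRb : ∀ ω, |R ω| ≤ 1)
    (π : Ω → ℝ) (hmodel : π =ᵐ[P] P[R | MeasurableSpace.comap Z inferInstance])
    (φ : E → ℝ) (hφ : Measurable φ)
    (hint : Integrable (fun ω => φ (Z ω) * R ω) P) :
    ∫ ω, φ (Z ω) * R ω ∂P = ∫ ω, φ (Z ω) * π ω ∂P := by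
  set m : MeasurableSpace Ω := MeasurableSpace.comap Z inferInstance with hmdef
  have hm : m ≤ mΩ := hZ.comap_le
  have hRint : Integrable R P :=
    ⟨hR.aestronglyMeasurable, HasFiniteIntegral.of_bounded
      (Filter.Eventually.of_forall fun ω => by simpa using hRb ω)⟩
  have hsm : StronglyMeasurable[m] fun ω => φ (Z ω) := by
    have : Measurable[m] Z := measurable_iff_comap_le.mpr le_rfl
    exact (hφ.comp this).stronglyMeasurable
  have hpull : P[(fun ω => φ (Z ω)) * R|m] =ᵐ[P] (fun ω => φ (Z ω)) * P[R|m] :=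
    condExp_mul_of_stronglyMeasurable_left hsm (by exact hint) hRint
  have h1 : ∫ ω, φ (Z ω) * R ω ∂P = ∫ ω, (P[(fun ω => φ (Z ω)) * R|m]) ω ∂P :=
    (integral_condExp (μ := P) (f := (fun ω => φ (Z ω)) * R) hm).symm
  rw [h1]
  refine integral_congr_ae ?_
  filter_upwards [hpull, hmodel] with ω h1 h2
  rw [h1, Pi.mul_apply, ← h2]

/-- Under the logistic missingness model, the conditional distribution of `(X,Y)` given
`R = 0` is an exponential tilt of that given `R = 1`: for every bounded measurable
`h : ℝ^d × ℝ → ℝ`, `E[h(X,Y) | R = 0] = E[h(X,Y)·exp(α₁ + β·X₁ + γ·Y) | R = 1]`. -/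
theorem exponential_tilt_of_missing_distribution
    {Ω : Type*} [MeasurableSpace Ω] (P : Measure Ω) [IsProbabilityMeasure P]
    {d d₁ : ℕ}
    (X : Ω → (Fin d → ℝ)) (Y : Ω → ℝ) (R : Ω → ℝ)
    (hX : Measurable X) (hY : Measurable Y) (hR : Measurable R)
    (hR01 : ∀ ω, R ω = 0 ∨ R ω = 1)
    (proj : (Fin d → ℝ) →ₗ[ℝ] (Fin d₁ → ℝ))
    (α₀ : ℝ) (β : Fin d₁ → ℝ) (γ : ℝ)
    (hmodel : (fun ω => (1 + Real.exp (α₀ + ∑ i, β i * proj (X ω) i + γ * Y ω))⁻¹)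
      =ᵐ[P] P[R | MeasurableSpace.comap (fun ω => (X ω, Y ω)) inferInstance])
    (η : ℝ) (hη : η = (P {ω | R ω = 1}).toReal) (hη0 : 0 < η) (hη1 : η < 1)
    (α₁ : ℝ) (hα₁ : α₁ = α₀ + Real.log (η / (1 - η))) :
    ∀ h : (Fin d → ℝ) × ℝ → ℝ, Measurable h → (∃ C, ∀ z, |h z| ≤ C) →
      ∫ ω, h (X ω, Y ω) ∂(P[|{ω | R ω = 0}])
        = ∫ ω, h (X ω, Y ω) * Real.exp (α₁ + ∑ i, β i * proj (X ω) i + γ * Y ω)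
            ∂(P[|{ω | R ω = 1}]) := by
  rintro h hmeas ⟨C, hC⟩
  have hC0 : 0 ≤ C := le_trans (abs_nonneg _) (hC (0, 0))
  -- basic notation
  set ℓ : (Fin d → ℝ) × ℝ → ℝ := fun z => α₀ + ∑ i, β i * proj z.1 i + γ * z.2 with hℓdef
  have hℓZ : ∀ ω, ℓ (X ω, Y ω) = α₀ + ∑ i, β i * proj (X ω) i + γ * Y ω := fun ω => rfl
  have hZmeas : Measurable fun ω => (X ω, Y ω) := hX.prodMk hY
  have hprojc : Continuous fun v : Fin d → ℝ => proj v := proj.continuous_of_finiteDimensional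
  have hℓc : Continuous ℓ := by
    refine Continuous.add (Continuous.add continuous_const ?_) (continuous_const.mul continuous_snd)
    exact continuous_finset_sum _ fun i _ =>
      continuous_const.mul ((continuous_apply i).comp (hprojc.comp continuous_fst))
  have hR0 : ∀ ω, 0 ≤ R ω := fun ω => by rcases hR01 ω with h'|h' <;> simp [h']
  have hRb : ∀ ω, |R ω| ≤ 1 := fun ω => by rcases hR01 ω with h'|h' <;> simp [h']
  -- bounded measurable functions are integrable
  have hbint : ∀ (g : Ω → ℝ) (D : ℝ), Measurable g → (∀ ω, |g ω| ≤ D) → Integrable g P :=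
    fun g D hg hD => ⟨hg.aestronglyMeasurable, HasFiniteIntegral.of_bounded
      (Filter.Eventually.of_forall fun ω => by simpa using hD ω)⟩
  -- π
  set π : Ω → ℝ := fun ω => (1 + Real.exp (α₀ + ∑ i, β i * proj (X ω) i + γ * Y ω))⁻¹ with hπdef
  have hπpos : ∀ ω, 0 < π ω := fun ω => by positivity
  have hπle : ∀ ω, π ω ≤ 1 := fun ω => by
    rw [hπdef]
    have := Real.exp_pos (α₀ + ∑ i, β i * proj (X ω) i + γ * Y ω)
    rw [inv_le_one_iff₀]; right; linarith
  have hπmeas : Measurable π := by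
    have : Measurable fun ω => ℓ (X ω, Y ω) := hℓc.measurable.comp hZmeas
    simp only [hℓZ] at this
    exact (measurable_const.add this.exp).inv
  -- key tower identity
  have keyA : ∀ φ : (Fin d → ℝ) × ℝ → ℝ, Measurable φ →
      Integrable (fun ω => φ (X ω, Y ω) * R ω) P →
      ∫ ω, φ (X ω, Y ω) * R ω ∂P = ∫ ω, φ (X ω, Y ω) * π ω ∂P := by
    intro φ hφ hint
    exact tower_aux P (fun ω => (X ω, Y ω)) hZmeas R hR hRb π hmodel φ hφ hint
  -- q := exp(L)
  set q : Ω → ℝ := fun ω => Real.exp (α₀ + ∑ i, β i * proj (X ω) i + γ * Y ω) with hqdef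
  have hqpos : ∀ ω, 0 < q ω := fun ω => Real.exp_pos _
  have hqmeas : Measurable q := by
    have : Measurable fun ω => ℓ (X ω, Y ω) := hℓc.measurable.comp hZmeas
    simp only [hℓZ] at this
    exact this.exp
  have hqπ : ∀ ω, q ω * π ω = 1 - π ω := by
    intro ω
    rw [hπdef, hqdef]
    set e := Real.exp (α₀ + ∑ i, β i * proj (X ω) i + γ * Y ω) with he
    have h1 : (0:ℝ) < 1 + e := by positivity
    field_simp
    ring
  -- integrability of q * R via truncation and MCT
  have hqR_nonneg : ∀ ω, 0 ≤ q ω * R ω := fun ω => mul_nonneg (hqpos ω).le (hR0 ω)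
  have htrunc : ∀ n : ℕ, ∫ ω, min (q ω) n * R ω ∂P ≤ 1 := by
    intro n
    have hφ : Measurable fun z : (Fin d → ℝ) × ℝ => min (Real.exp (ℓ z)) (n:ℝ) :=
      (Real.measurable_exp.comp hℓc.measurable).min measurable_const
    have hminb : ∀ ω, |min (q ω) n * R ω| ≤ n := by
      intro ω
      rw [abs_mul]
      have h1 : |min (q ω) n| ≤ n := by
        rw [abs_of_nonneg (le_min (hqpos ω).le (Nat.cast_nonneg n))]
        exact min_le_right _ _
      calc |min (q ω) n| * |R ω| ≤ n * 1 := by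
            exact mul_le_mul h1 (hRb ω) (abs_nonneg _) (Nat.cast_nonneg n)
        _ = n := mul_one _
    have hint : Integrable (fun ω => min (q ω) n * R ω) P :=
      hbint _ n ((hqmeas.min measurable_const).mul hR) hminb
    have hA := keyA (fun z => min (Real.exp (ℓ z)) (n:ℝ)) hφ (by simpa only [hℓZ] using hint)
    simp only [hℓZ] at hA
    rw [show (fun ω => min (q ω) ↑n * R ω)
        = fun ω => min (Real.exp (α₀ + ∑ i, β i * proj (X ω) i + γ * Y ω)) ↑n * R ω from rfl, hA]
    have hle : ∀ ω, min (Real.exp (α₀ + ∑ i, β i * proj (X ω) i + γ * Y ω)) ↑n * π ω ≤ 1 := by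
      intro ω
      calc min (q ω) ↑n * π ω ≤ q ω * π ω :=
            mul_le_mul_of_nonneg_right (min_le_left _ _) (hπpos ω).le
        _ = 1 - π ω := hqπ ω
        _ ≤ 1 := by linarith [hπpos ω]
    have hintπ : Integrable (fun ω => min (q ω) ↑n * π ω) P := by
      refine hbint _ n ((hqmeas.min measurable_const).mul hπmeas) fun ω => ?_
      rw [abs_mul, abs_of_nonneg (le_min (hqpos ω).le (Nat.cast_nonneg n)),
        abs_of_nonneg (hπpos ω).le]
      calc min (q ω) ↑n * π ω ≤ ↑n * 1 :=
            mul_le_mul (min_le_right _ _) (hπle ω) (hπpos ω).le (Nat.cast_nonneg n)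
        _ = n := mul_one _
    calc ∫ ω, min (Real.exp (α₀ + ∑ i, β i * proj (X ω) i + γ * Y ω)) ↑n * π ω ∂P
        ≤ ∫ _ω, (1:ℝ) ∂P := integral_mono hintπ (integrable_const 1) hle
      _ = 1 := by simp
  have hqRint : Integrable (fun ω => q ω * R ω) P := by
    refine ⟨(hqmeas.mul hR).aestronglyMeasurable, ?_⟩
    rw [hasFiniteIntegral_iff_ofReal (Filter.Eventually.of_forall hqR_nonneg)]
    have hmono : Monotone fun (n : ℕ) (ω : Ω) => ENNReal.ofReal (min (q ω) n * R ω) := by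
      intro a b hab
      intro ω
      exact ENNReal.ofReal_le_ofReal
        (mul_le_mul_of_nonneg_right (min_le_min le_rfl (Nat.cast_le.mpr hab)) (hR0 ω))
    have hsup : ∀ ω, (⨆ n : ℕ, ENNReal.ofReal (min (q ω) n * R ω))
        = ENNReal.ofReal (q ω * R ω) := by
      intro ω
      refine le_antisymm (iSup_le fun n => ENNReal.ofReal_le_ofReal
        (mul_le_mul_of_nonneg_right (min_le_left _ _) (hR0 ω))) ?_
      refine le_iSup_of_le ⌈q ω⌉₊ ?_
      rw [min_eq_left (Nat.le_ceil _)]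
    have hcalc : ∫⁻ ω, ENNReal.ofReal (q ω * R ω) ∂P
        = ⨆ n : ℕ, ∫⁻ ω, ENNReal.ofReal (min (q ω) n * R ω) ∂P := by
      rw [← lintegral_iSup (f := fun (n : ℕ) ω => ENNReal.ofReal (min (q ω) n * R ω)) (fun n => ((hqmeas.min measurable_const).mul hR).ennreal_ofReal) hmono]
      exact lintegral_congr fun ω => (hsup ω).symm
    rw [hcalc]
    refine lt_of_le_of_lt (iSup_le fun n => ?_) ENNReal.one_lt_top
    have hminb : ∀ ω, |min (q ω) n * R ω| ≤ n := by
      intro ω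
      rw [abs_mul]
      have h1 : |min (q ω) n| ≤ n := by
        rw [abs_of_nonneg (le_min (hqpos ω).le (Nat.cast_nonneg n))]
        exact min_le_right _ _
      calc |min (q ω) n| * |R ω| ≤ n * 1 :=
            mul_le_mul h1 (hRb ω) (abs_nonneg _) (Nat.cast_nonneg n)
        _ = n := mul_one _
    have hint : Integrable (fun ω => min (q ω) n * R ω) P :=
      hbint _ n ((hqmeas.min measurable_const).mul hR) hminb
    rw [← ofReal_integral_eq_lintegral_ofReal hint
      (Filter.Eventually.of_forall fun ω =>
        mul_nonneg (le_min (hqpos ω).le (Nat.cast_nonneg n)) (hR0 ω))]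
    exact ENNReal.ofReal_le_one.mpr (htrunc n)
  -- integrability of h * q * R
  have hhqRint : Integrable (fun ω => h (X ω, Y ω) * q ω * R ω) P := by
    refine Integrable.mono' (hqRint.const_mul C)
      (((hmeas.comp hZmeas).mul hqmeas).mul hR).aestronglyMeasurable
      (Filter.Eventually.of_forall fun ω => ?_)
    rw [Real.norm_eq_abs, abs_mul, abs_mul, abs_of_pos (hqpos ω), abs_of_nonneg (hR0 ω),
      mul_assoc]
    exact mul_le_mul_of_nonneg_right (hC _) (hqR_nonneg ω)
  -- the two tower identities
  have A1 : ∫ ω, h (X ω, Y ω) * R ω ∂P = ∫ ω, h (X ω, Y ω) * π ω ∂P :=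
    keyA h hmeas (hbint _ C ((hmeas.comp hZmeas).mul hR) fun ω => by
      rw [abs_mul]
      calc |h (X ω, Y ω)| * |R ω| ≤ C * 1 :=
            mul_le_mul (hC _) (hRb ω) (abs_nonneg _) hC0
        _ = C := mul_one _)
  have A2 : ∫ ω, h (X ω, Y ω) * q ω * R ω ∂P = ∫ ω, h (X ω, Y ω) * q ω * π ω ∂P := by
    have := keyA (fun z => h z * Real.exp (ℓ z)) (hmeas.mul (Real.measurable_exp.comp hℓc.measurable))
      (by simpa only [hℓZ] using hhqRint)
    simpa only [hℓZ] using this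
  -- set measure facts
  have hs0 : MeasurableSet {ω | R ω = 0} := hR (measurableSet_singleton 0)
  have hs1 : MeasurableSet {ω | R ω = 1} := hR (measurableSet_singleton 1)
  have hcompl : {ω | R ω = 0} = {ω | R ω = 1}ᶜ := by
    ext ω; rcases hR01 ω with h'|h' <;> simp [h']
  have hPs1 : (P {ω | R ω = 1}).toReal = η := hη.symm
  have hPs0 : (P {ω | R ω = 0}).toReal = 1 - η := by
    rw [hcompl, prob_compl_eq_one_sub hs1,
      ENNReal.toReal_sub_of_le prob_le_one ENNReal.one_ne_top, ENNReal.toReal_one, hPs1]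
  -- conditional integrals
  have hcond : ∀ (s : Set Ω) (f : Ω → ℝ),
      ∫ ω, f ω ∂(P[|s]) = (P s).toReal⁻¹ * ∫ ω in s, f ω ∂P := by
    intro s f
    rw [ProbabilityTheory.cond, integral_smul_measure, ENNReal.toReal_inv, smul_eq_mul]
  have hset0 : ∫ ω in {ω | R ω = 0}, h (X ω, Y ω) ∂P
      = ∫ ω, h (X ω, Y ω) * (1 - R ω) ∂P := by
    rw [← integral_indicator hs0]
    refine integral_congr_ae (Filter.Eventually.of_forall fun ω => ?_)
    rcases hR01 ω with h'|h' <;> simp [Set.indicator_apply, Set.mem_setOf_eq, h']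
  have hset1 : ∀ f : Ω → ℝ, ∫ ω in {ω | R ω = 1}, f ω ∂P = ∫ ω, f ω * R ω ∂P := by
    intro f
    rw [← integral_indicator hs1]
    refine integral_congr_ae (Filter.Eventually.of_forall fun ω => ?_)
    rcases hR01 ω with h'|h' <;> simp [Set.indicator_apply, Set.mem_setOf_eq, h']
  -- exponent rewriting
  have hη1' : (0:ℝ) < 1 - η := by linarith
  have hexp : ∀ ω, Real.exp (α₁ + ∑ i, β i * proj (X ω) i + γ * Y ω)
      = (η / (1 - η)) * q ω := by
    intro ω
    rw [hqdef]
    have : α₁ + ∑ i, β i * proj (X ω) i + γ * Y ω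
        = Real.log (η / (1 - η)) + (α₀ + ∑ i, β i * proj (X ω) i + γ * Y ω) := by
      rw [hα₁]; ring
    rw [this, Real.exp_add, Real.exp_log (by positivity)]
  -- integrability of h and h·π pieces
  have hhint : Integrable (fun ω => h (X ω, Y ω)) P :=
    hbint _ C (hmeas.comp hZmeas) fun ω => hC _
  have hhRint : Integrable (fun ω => h (X ω, Y ω) * R ω) P :=
    hbint _ C ((hmeas.comp hZmeas).mul hR) fun ω => by
      rw [abs_mul]
      calc |h (X ω, Y ω)| * |R ω| ≤ C * 1 :=
            mul_le_mul (hC _) (hRb ω) (abs_nonneg _) hC0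
        _ = C := mul_one _
  -- Assemble
  rw [hcond, hcond, hPs0, hPs1, hset0, hset1]
  have lhs_eq : ∫ ω, h (X ω, Y ω) * (1 - R ω) ∂P
      = ∫ ω, h (X ω, Y ω) * (1 - π ω) ∂P := by
    have e1 : ∫ ω, h (X ω, Y ω) * (1 - R ω) ∂P
        = ∫ ω, h (X ω, Y ω) ∂P - ∫ ω, h (X ω, Y ω) * R ω ∂P := by
      rw [← integral_sub hhint hhRint]
      refine integral_congr_ae (Filter.Eventually.of_forall fun ω => ?_)
      ring
    have e2 : ∫ ω, h (X ω, Y ω) * (1 - π ω) ∂P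
        = ∫ ω, h (X ω, Y ω) ∂P - ∫ ω, h (X ω, Y ω) * π ω ∂P := by
      have hhπint : Integrable (fun ω => h (X ω, Y ω) * π ω) P := by
        refine hbint (fun ω => h (X ω, Y ω) * π ω) C ((hmeas.comp hZmeas).mul hπmeas) fun ω => ?_
        rw [abs_mul, abs_of_pos (hπpos ω)]
        calc |h (X ω, Y ω)| * π ω ≤ C * 1 :=
              mul_le_mul (hC _) (hπle ω) (hπpos ω).le hC0
          _ = C := mul_one _
      rw [← integral_sub hhint hhπint]
      refine integral_congr_ae (Filter.Eventually.of_forall fun ω => ?_)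
      ring
    rw [e1, e2, A1]
  have rhs_eq : ∫ ω, h (X ω, Y ω) * Real.exp (α₁ + ∑ i, β i * proj (X ω) i + γ * Y ω) * R ω ∂P
      = (η / (1 - η)) * ∫ ω, h (X ω, Y ω) * (1 - π ω) ∂P := by
    have e1 : (fun ω => h (X ω, Y ω) * Real.exp (α₁ + ∑ i, β i * proj (X ω) i + γ * Y ω) * R ω)
        = fun ω => (η / (1 - η)) * (h (X ω, Y ω) * q ω * R ω) := by
      funext ω; rw [hexp ω]; ring
    rw [e1, integral_const_mul, A2]
    congr 1
    refine integral_congr_ae (Filter.Eventually.of_forall fun ω => ?_)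
    simp only [mul_assoc, hqπ]
  rw [lhs_eq, rhs_eq]
  rw [← mul_assoc]
  congr 1
  field_simp
end

section
/- Under the logistic missingness model, for every measurable function h : ℝ → [0, ∞) one has the identity (with both sides possibly infinite) E[h(Y) | R = 0] = E[h(Y)·exp(α₁ + β·X₁ + γ·Y) | R = 1]. -/
open MeasureTheory ProbabilityTheory

/-- The σ-algebra generated by the pair `(X, Y)`. -/
def exponentialTilt.pairComap {Ω : Type*} {d : ℕ} (X : Ω → (Fin d → ℝ)) (Y : Ω → ℝ) :
    MeasurableSpace Ω :=
  MeasurableSpace.comap (fun ω => (X ω, Y ω)) inferInstance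

/-- Transfer lemma: if two densities have equal set-lintegrals on all sets of a
sub-σ-algebra `m`, then lintegrals against any `m`-measurable weight agree. -/
lemma exponentialTilt.lintegral_mul_eq {Ω : Type*} {m m0 : MeasurableSpace Ω} (hm : m ≤ m0)
    (P : Measure[m0] Ω) {u v : Ω → ENNReal}
    (hu : Measurable[m0] u) (hv : Measurable[m0] v)
    (huv : ∀ s, MeasurableSet[m] s → ∫⁻ ω in s, u ω ∂P = ∫⁻ ω in s, v ω ∂P)
    {f : Ω → ENNReal} (hf : Measurable[m] f) :
    ∫⁻ ω, f ω * u ω ∂P = ∫⁻ ω, f ω * v ω ∂P := by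
  have hfm : Measurable[m0] f := hf.mono hm le_rfl
  have h1 : (P.withDensity u).trim hm = (P.withDensity v).trim hm := by
    refine @Measure.ext Ω m _ _ fun s hs => ?_
    rw [trim_measurableSet_eq hm hs, trim_measurableSet_eq hm hs,
      withDensity_apply _ (hm s hs), withDensity_apply _ (hm s hs)]
    exact huv s hs
  calc ∫⁻ ω, f ω * u ω ∂P = ∫⁻ ω, (u * f) ω ∂P := by
        simp only [Pi.mul_apply, mul_comm]
    _ = ∫⁻ ω, f ω ∂(P.withDensity u) :=
        (lintegral_withDensity_eq_lintegral_mul P hu hfm).symm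
    _ = ∫⁻ ω, f ω ∂((P.withDensity u).trim hm) := (lintegral_trim hm hf).symm
    _ = ∫⁻ ω, f ω ∂((P.withDensity v).trim hm) := by rw [h1]
    _ = ∫⁻ ω, f ω ∂(P.withDensity v) := lintegral_trim hm hf
    _ = ∫⁻ ω, (v * f) ω ∂P := lintegral_withDensity_eq_lintegral_mul P hv hfm
    _ = ∫⁻ ω, f ω * v ω ∂P := by simp only [Pi.mul_apply, mul_comm]

/-- Under the logistic missingness model, for every measurable `h : ℝ → [0, ∞)` one has the
identity (with both sides possibly infinite)
`E[h(Y) | R = 0] = E[h(Y)·exp(α₁ + β·X₁ + γ·Y) | R = 1]`. -/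
theorem exponential_tilt_nonneg_outcome
    {Ω : Type*} [MeasurableSpace Ω] (P : Measure Ω) [IsProbabilityMeasure P]
    {d d₁ : ℕ}
    (X : Ω → (Fin d → ℝ)) (Y : Ω → ℝ) (R : Ω → ℝ)
    (hX : Measurable X) (hY : Measurable Y) (hR : Measurable R)
    (hR01 : ∀ ω, R ω = 0 ∨ R ω = 1)
    (proj : (Fin d → ℝ) →ₗ[ℝ] (Fin d₁ → ℝ))
    (α₀ : ℝ) (β : Fin d₁ → ℝ) (γ : ℝ)
    (hmodel : (fun ω => (1 + Real.exp (α₀ + ∑ i, β i * proj (X ω) i + γ * Y ω))⁻¹)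
      =ᵐ[P] P[R | MeasurableSpace.comap (fun ω => (X ω, Y ω)) inferInstance])
    (η : ℝ) (hη : η = (P {ω | R ω = 1}).toReal) (hη0 : 0 < η) (hη1 : η < 1)
    (α₁ : ℝ) (hα₁ : α₁ = α₀ + Real.log (η / (1 - η))) :
    ∀ h : ℝ → ENNReal, Measurable h →
      ∫⁻ ω, h (Y ω) ∂(P[|{ω | R ω = 0}])
        = ∫⁻ ω, h (Y ω) * ENNReal.ofReal (Real.exp (α₁ + ∑ i, β i * proj (X ω) i + γ * Y ω))
            ∂(P[|{ω | R ω = 1}]) := by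
  intro h hmeas
  classical
  rename_i mΩ hPM
  have hm : exponentialTilt.pairComap X Y ≤ mΩ := (hX.prodMk hY).comap_le
  have hpair : Measurable[exponentialTilt.pairComap X Y] (fun ω => (X ω, Y ω)) :=
    Measurable.of_comap_le le_rfl
  have hYm : Measurable[exponentialTilt.pairComap X Y] Y := measurable_snd.comp hpair
  have hXm : Measurable[exponentialTilt.pairComap X Y] X := measurable_fst.comp hpair
  -- score function
  set score : Ω → ℝ := fun ω => α₀ + ∑ i, β i * proj (X ω) i + γ * Y ω with hscoredef
  have hprojm : Measurable (proj : (Fin d → ℝ) → (Fin d₁ → ℝ)) :=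
    proj.continuous_of_finiteDimensional.measurable
  have hscorem : Measurable[exponentialTilt.pairComap X Y] score := by
    apply Measurable.add
    apply Measurable.add measurable_const
    · exact Finset.measurable_sum _ fun i _ =>
        (measurable_const.mul ((measurable_pi_apply i).comp (hprojm.comp hXm)))
    · exact measurable_const.mul hYm
  have hscore : Measurable score := hscorem.mono hm le_rfl
  -- π
  set π : Ω → ℝ := fun ω => (1 + Real.exp (score ω))⁻¹ with hπdef
  have hπm : Measurable π := (measurable_const.add hscore.exp).inv
  have hdenom : ∀ ω, 0 < 1 + Real.exp (score ω) := fun ω => by positivity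
  have hπpos : ∀ ω, 0 < π ω := fun ω => inv_pos.mpr (hdenom ω)
  have hπle : ∀ ω, π ω ≤ 1 := fun ω =>
    inv_le_one_of_one_le₀ (by nlinarith [Real.exp_pos (score ω)])
  have hone_sub_π : ∀ ω, 1 - π ω = π ω * Real.exp (score ω) := fun ω => by
    have h0 := hdenom ω
    have hrfl : π ω = (1 + Real.exp (score ω))⁻¹ := rfl
    rw [hrfl]; field_simp; ring
  -- integrability
  have hRint : Integrable R P := by
    refine (integrable_const (1:ℝ)).mono' hR.aestronglyMeasurable (ae_of_all _ fun ω => ?_)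
    rcases hR01 ω with h' | h' <;> simp [h']
  have hπint : Integrable π P := by
    refine (integrable_const (1:ℝ)).mono' hπm.aestronglyMeasurable (ae_of_all _ fun ω => ?_)
    rw [Real.norm_eq_abs, abs_of_pos (hπpos ω)]; exact hπle ω
  have hRnonneg : ∀ ω, (0:ℝ) ≤ R ω := fun ω => by rcases hR01 ω with h' | h' <;> simp [h']
  -- the basic integral identity from the conditional expectation model
  have hbase : ∀ s : Set Ω, MeasurableSet[exponentialTilt.pairComap X Y] s →
      ∫ ω in s, R ω ∂P = ∫ ω in s, π ω ∂P := by
    intro s hs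
    have hs' : MeasurableSet s := hm s hs
    rw [← setIntegral_condExp hm hRint hs]
    exact setIntegral_congr_ae hs' (hmodel.symm.mono fun ω hω _ => hω)
  -- key set-lintegral equalities
  have hkey : ∀ s, MeasurableSet[exponentialTilt.pairComap X Y] s →
      ∫⁻ ω in s, ENNReal.ofReal (R ω) ∂P = ∫⁻ ω in s, ENNReal.ofReal (π ω) ∂P := by
    intro s hs
    rw [← ofReal_integral_eq_lintegral_ofReal hRint.restrict (ae_of_all _ hRnonneg),
      ← ofReal_integral_eq_lintegral_ofReal hπint.restrict (ae_of_all _ fun ω => (hπpos ω).le),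
      hbase s hs]
  have hkey' : ∀ s, MeasurableSet[exponentialTilt.pairComap X Y] s →
      ∫⁻ ω in s, ENNReal.ofReal (1 - R ω) ∂P = ∫⁻ ω in s, ENNReal.ofReal (1 - π ω) ∂P := by
    intro s hs
    have h2 : ∫ ω in s, (1 - R ω) ∂P = ∫ ω in s, (1 - π ω) ∂P := by
      rw [integral_sub (integrable_const 1).restrict hRint.restrict,
        integral_sub (integrable_const 1).restrict hπint.restrict, hbase s hs]
    have hRint1 : Integrable (fun ω => 1 - R ω) P := (integrable_const 1).sub hRint
    have hπint1 : Integrable (fun ω => 1 - π ω) P := (integrable_const 1).sub hπint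
    rw [← ofReal_integral_eq_lintegral_ofReal hRint1.restrict
        (ae_of_all _ fun ω => by
          show (0:ℝ) ≤ 1 - R ω
          rcases hR01 ω with h' | h' <;> simp [h']),
      ← ofReal_integral_eq_lintegral_ofReal hπint1.restrict
        (ae_of_all _ fun ω => by
          show (0:ℝ) ≤ 1 - π ω
          linarith [hπle ω]),
      h2]
  -- measurable sets
  have hset1 : MeasurableSet {ω | R ω = 1} := hR (measurableSet_singleton 1)
  have hset0 : MeasurableSet {ω | R ω = 0} := hR (measurableSet_singleton 0)
  have hcompl : {ω | R ω = 0} = {ω | R ω = 1}ᶜ := by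
    ext ω; rcases hR01 ω with h' | h' <;> simp [h']
  -- measures of the two events
  have hP1 : P {ω | R ω = 1} = ENNReal.ofReal η := by
    rw [hη, ENNReal.ofReal_toReal (measure_ne_top P _)]
  have hP0 : P {ω | R ω = 0} = ENNReal.ofReal (1 - η) := by
    rw [hcompl, prob_compl_eq_one_sub hset1, hP1, ← ENNReal.ofReal_one,
      ← ENNReal.ofReal_sub _ hη0.le]
  -- lintegral over restrict as weighted lintegral
  have hres0 : ∫⁻ ω in {ω | R ω = 0}, h (Y ω) ∂P
      = ∫⁻ ω, h (Y ω) * ENNReal.ofReal (1 - R ω) ∂P := by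
    rw [← lintegral_indicator hset0]
    refine lintegral_congr fun ω => ?_
    rcases hR01 ω with h' | h' <;> simp [Set.indicator, h']
  have hres1 : ∫⁻ ω in {ω | R ω = 1}, h (Y ω) * ENNReal.ofReal (Real.exp (score ω)) ∂P
      = ∫⁻ ω, (h (Y ω) * ENNReal.ofReal (Real.exp (score ω))) * ENNReal.ofReal (R ω) ∂P := by
    rw [← lintegral_indicator hset1]
    refine lintegral_congr fun ω => ?_
    rcases hR01 ω with h' | h' <;> simp [Set.indicator, h']
  -- m-measurability of weights
  have hhYm : Measurable[exponentialTilt.pairComap X Y] fun ω => h (Y ω) := hmeas.comp hYm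
  have hwm : Measurable[exponentialTilt.pairComap X Y]
      fun ω => h (Y ω) * ENNReal.ofReal (Real.exp (score ω)) :=
    hhYm.mul (ENNReal.measurable_ofReal.comp (Real.measurable_exp.comp hscorem))
  -- chain of equalities for the central integral
  have hchain : ∫⁻ ω, h (Y ω) * ENNReal.ofReal (1 - R ω) ∂P
      = ∫⁻ ω in {ω | R ω = 1}, h (Y ω) * ENNReal.ofReal (Real.exp (score ω)) ∂P := by
    rw [exponentialTilt.lintegral_mul_eq hm P (u := fun ω => ENNReal.ofReal (1 - R ω))
        (v := fun ω => ENNReal.ofReal (1 - π ω))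
        (measurable_const.sub hR).ennreal_ofReal
        (measurable_const.sub hπm).ennreal_ofReal
        hkey' hhYm]
    have heq : ∀ ω, h (Y ω) * ENNReal.ofReal (1 - π ω)
        = (h (Y ω) * ENNReal.ofReal (Real.exp (score ω))) * ENNReal.ofReal (π ω) := by
      intro ω
      rw [hone_sub_π ω, ENNReal.ofReal_mul (hπpos ω).le, mul_comm (ENNReal.ofReal (π ω)),
        mul_assoc]
    rw [lintegral_congr heq,
      exponentialTilt.lintegral_mul_eq hm P
        hπm.ennreal_ofReal
        hR.ennreal_ofReal
        (fun s hs => (hkey s hs).symm) hwm,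
      ← hres1]
  -- exponential tilt factor
  have htilt : ∀ ω, ENNReal.ofReal (Real.exp (α₁ + ∑ i, β i * proj (X ω) i + γ * Y ω))
      = ENNReal.ofReal (Real.exp (score ω)) * ENNReal.ofReal (η / (1 - η)) := by
    intro ω
    have hpos : (0:ℝ) < η / (1 - η) := div_pos hη0 (by linarith)
    have hsc : score ω = α₀ + ∑ i, β i * proj (X ω) i + γ * Y ω := rfl
    have harg : α₁ + ∑ i, β i * proj (X ω) i + γ * Y ω
        = score ω + Real.log (η / (1 - η)) := by rw [hα₁, hsc]; ring
    rw [harg, Real.exp_add, Real.exp_log hpos, ENNReal.ofReal_mul (Real.exp_pos _).le]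
  -- constants
  have hηE : ENNReal.ofReal η ≠ 0 := by simp [hη0, hη0.le, not_le]
  have hηE' : ENNReal.ofReal η ≠ ⊤ := ENNReal.ofReal_ne_top
  have h1ηE : ENNReal.ofReal (1 - η) ≠ 0 := by
    simp only [ne_eq, ENNReal.ofReal_eq_zero, not_le]; linarith
  have hcv : ENNReal.ofReal (η / (1 - η))
      = ENNReal.ofReal η * (ENNReal.ofReal (1 - η))⁻¹ := by
    rw [ENNReal.ofReal_div_of_pos (by linarith), div_eq_mul_inv]
  have hcT : ENNReal.ofReal (η / (1 - η)) ≠ ⊤ := ENNReal.ofReal_ne_top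
  -- put everything together
  rw [ProbabilityTheory.cond, ProbabilityTheory.cond, lintegral_smul_measure,
    lintegral_smul_measure, hP0, hP1, hres0, hchain]
  calc (ENNReal.ofReal (1 - η))⁻¹
        * ∫⁻ ω in {ω | R ω = 1}, h (Y ω) * ENNReal.ofReal (Real.exp (score ω)) ∂P
      = ((ENNReal.ofReal η)⁻¹ * (ENNReal.ofReal η * (ENNReal.ofReal (1 - η))⁻¹))
        * ∫⁻ ω in {ω | R ω = 1}, h (Y ω) * ENNReal.ofReal (Real.exp (score ω)) ∂P := by
        rw [← mul_assoc, ENNReal.inv_mul_cancel hηE hηE', one_mul]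
    _ = (ENNReal.ofReal η)⁻¹
        * ∫⁻ ω in {ω | R ω = 1}, (h (Y ω) * ENNReal.ofReal (Real.exp (score ω)))
            * ENNReal.ofReal (η / (1 - η)) ∂P := by
        rw [lintegral_mul_const' _ _ hcT, hcv]; ring
    _ = (ENNReal.ofReal η)⁻¹
        * ∫⁻ ω in {ω | R ω = 1}, h (Y ω)
            * ENNReal.ofReal (Real.exp (α₁ + ∑ i, β i * proj (X ω) i + γ * Y ω)) ∂P := by
        congr 1
        refine lintegral_congr fun ω => ?_
        rw [htilt ω, mul_assoc]
end

section
/- Under the logistic missingness model, the tilting weight integrates to one on the observed subpopulation: E[exp(α₁ + β·X₁ + γ·Y) | R = 1] = 1. -/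
open MeasureTheory ProbabilityTheory

set_option maxHeartbeats 1000000

/-- Under the logistic missingness model, the tilting weight integrates to one on the
observed subpopulation: `E[exp(α₁ + β·X₁ + γ·Y) | R = 1] = 1`. -/
theorem tilting_weight_integrates_to_one
    {Ω : Type*} [MeasurableSpace Ω] (P : Measure Ω) [IsProbabilityMeasure P]
    {d d₁ : ℕ}
    (X : Ω → (Fin d → ℝ)) (Y : Ω → ℝ) (R : Ω → ℝ)
    (hX : Measurable X) (hY : Measurable Y) (hR : Measurable R)
    (hR01 : ∀ ω, R ω = 0 ∨ R ω = 1)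
    (proj : (Fin d → ℝ) →ₗ[ℝ] (Fin d₁ → ℝ))
    (α₀ : ℝ) (β : Fin d₁ → ℝ) (γ : ℝ)
    (hmodel : (fun ω => (1 + Real.exp (α₀ + ∑ i, β i * proj (X ω) i + γ * Y ω))⁻¹)
      =ᵐ[P] P[R | MeasurableSpace.comap (fun ω => (X ω, Y ω)) inferInstance])
    (η : ℝ) (hη : η = (P {ω | R ω = 1}).toReal) (hη0 : 0 < η) (hη1 : η < 1)
    (α₁ : ℝ) (hα₁ : α₁ = α₀ + Real.log (η / (1 - η))) :
    ∫ ω, Real.exp (α₁ + ∑ i, β i * proj (X ω) i + γ * Y ω) ∂(P[|{ω | R ω = 1}]) = 1 := by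
  classical
  have hφ : Measurable (fun ω => (X ω, Y ω)) := hX.prodMk hY
  set g : Ω → ℝ := fun ω => Real.exp (α₀ + ∑ i, β i * proj (X ω) i + γ * Y ω) with hgdef
  set q : Ω → ℝ := fun ω => (1 + g ω)⁻¹ with hqdef
  have hm : MeasurableSpace.comap (fun ω => (X ω, Y ω)) inferInstance ≤ ‹MeasurableSpace Ω› := hφ.comap_le
  have hproj : Continuous proj := proj.continuous_of_finiteDimensional
  have hGc : Continuous fun p : (Fin d → ℝ) × ℝ =>
      Real.exp (α₀ + ∑ i, β i * proj p.1 i + γ * p.2) := by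
    apply Real.continuous_exp.comp
    apply Continuous.add
    · apply continuous_const.add
      exact continuous_finset_sum _ fun i _ =>
        continuous_const.mul ((continuous_apply i).comp (hproj.comp continuous_fst))
    · exact continuous_const.mul continuous_snd
  have hφm : Measurable[MeasurableSpace.comap (fun ω => (X ω, Y ω)) inferInstance] (fun ω => (X ω, Y ω)) := Measurable.of_comap_le le_rfl
  have hg_m : Measurable[MeasurableSpace.comap (fun ω => (X ω, Y ω)) inferInstance] g := by
    rw [hgdef]
    have h := hGc.measurable.comp (f := fun ω => (X ω, Y ω)) (Measurable.of_comap_le le_rfl)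
    exact h
  have hg_meas : Measurable g := hg_m.mono hm le_rfl
  have hg_pos : ∀ ω, 0 < g ω := fun ω => Real.exp_pos _
  have hq_pos : ∀ ω, 0 < q ω := fun ω => by
    have := hg_pos ω; simp only [hqdef]; positivity
  have hq_le : ∀ ω, q ω ≤ 1 := fun ω => by
    have h1 : (1:ℝ) ≤ 1 + g ω := by linarith [hg_pos ω]
    simpa using inv_le_one_of_one_le₀ h1
  have hqg : ∀ ω, q ω * g ω = 1 - q ω := fun ω => by
    have h0 : (1:ℝ) + g ω ≠ 0 := by positivity
    show (1 + g ω)⁻¹ * g ω = 1 - (1 + g ω)⁻¹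
    rw [eq_sub_iff_add_eq, ← mul_add_one, add_comm (g ω) 1, inv_mul_cancel₀ h0]
  have hq_meas : Measurable q := (measurable_const.add hg_meas).inv
  set A : Set Ω := {ω | R ω = 1} with hAdef
  have hA : MeasurableSet A := hR (measurableSet_singleton 1)
  have hRind : ∀ ω, R ω = A.indicator (fun _ => (1:ℝ)) ω := fun ω => by
    rcases hR01 ω with h | h <;> simp [Set.indicator, hAdef, h]
  have hRint : Integrable R P := by
    refine (integrable_const (1:ℝ)).mono' hR.aestronglyMeasurable ?_
    filter_upwards with ω
    rcases hR01 ω with h | h <;> simp [h]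
  have hIR : ∫ ω, R ω ∂P = η := by
    rw [integral_congr_ae (Filter.Eventually.of_forall hRind), integral_indicator hA]
    simp [hη, measureReal_def]
  -- the truncations
  set f : ℕ → Ω → ℝ := fun n ω => min (g ω) n with hfdef
  have hf_m : ∀ n, StronglyMeasurable[MeasurableSpace.comap (fun ω => (X ω, Y ω)) inferInstance] (f n) :=
    fun n => (hg_m.min (@measurable_const _ _ _ (MeasurableSpace.comap (fun ω => (X ω, Y ω)) inferInstance) _)).stronglyMeasurable
  have hf_meas : ∀ n, Measurable (f n) := fun n => hg_meas.min measurable_const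
  have hf_nonneg : ∀ n ω, 0 ≤ f n ω := fun n ω => le_min (hg_pos ω).le (Nat.cast_nonneg n)
  have hf_le_g : ∀ n ω, f n ω ≤ g ω := fun n ω => min_le_left _ _
  have hfR_int : ∀ n, Integrable (fun ω => f n ω * R ω) P := by
    intro n
    refine (integrable_const ((n:ℝ))).mono'
      ((hf_meas n).mul hR).aestronglyMeasurable ?_
    filter_upwards with ω
    rcases hR01 ω with h | h
    · simp [h, Nat.cast_nonneg]
    · rw [h, mul_one, Real.norm_eq_abs,
        abs_of_nonneg (hf_nonneg n ω)]
      exact min_le_right _ _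
  -- pull-out property on truncations
  have hstep : ∀ n, ∫ ω, f n ω * R ω ∂P = ∫ ω, f n ω * q ω ∂P := by
    intro n
    rw [← integral_condExp hm (f := fun ω => f n ω * R ω)]
    have h1 : P[f n * R | MeasurableSpace.comap (fun ω => (X ω, Y ω)) inferInstance] =ᵐ[P] f n * P[R | MeasurableSpace.comap (fun ω => (X ω, Y ω)) inferInstance] :=
      condExp_mul_of_stronglyMeasurable_left (hf_m n) (hfR_int n) hRint
    have h2 : f n * P[R | MeasurableSpace.comap (fun ω => (X ω, Y ω)) inferInstance] =ᵐ[P] fun ω => f n ω * q ω := by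
      filter_upwards [hmodel] with ω hω
      simp only [Pi.mul_apply, ← hω]
    exact integral_congr_ae (h1.trans h2)
  -- lintegral limits
  have hsup : ∀ (h : Ω → ℝ), (∀ ω, 0 ≤ h ω) → (∀ ω, h ω ≤ 1) → ∀ ω,
      (⨆ n : ℕ, ENNReal.ofReal (f n ω * h ω)) = ENNReal.ofReal (g ω * h ω) := by
    intro h h0 h1 ω
    apply le_antisymm
    · exact iSup_le fun n => ENNReal.ofReal_le_ofReal
        (mul_le_mul_of_nonneg_right (hf_le_g n ω) (h0 ω))
    · have hn : f ⌈g ω⌉₊ ω = g ω := min_eq_left (Nat.le_ceil _)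
      calc ENNReal.ofReal (g ω * h ω) = ENNReal.ofReal (f ⌈g ω⌉₊ ω * h ω) := by rw [hn]
        _ ≤ _ := le_iSup (fun n => ENNReal.ofReal (f n ω * h ω)) ⌈g ω⌉₊
  have hmono : ∀ (h : Ω → ℝ), (∀ ω, 0 ≤ h ω) →
      Monotone (fun n (ω : Ω) => ENNReal.ofReal (f n ω * h ω)) := by
    intro h h0 a b hab ω
    exact ENNReal.ofReal_le_ofReal (mul_le_mul_of_nonneg_right
      (min_le_min le_rfl (Nat.cast_le.2 hab)) (h0 ω))
  have hR0 : ∀ ω, 0 ≤ R ω := fun ω => by rcases hR01 ω with h | h <;> simp [h]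
  have hR1 : ∀ ω, R ω ≤ 1 := fun ω => by rcases hR01 ω with h | h <;> simp [h]
  have hlimR : ∫⁻ ω, ENNReal.ofReal (g ω * R ω) ∂P
      = ⨆ n : ℕ, ∫⁻ ω, ENNReal.ofReal (f n ω * R ω) ∂P := by
    rw [← lintegral_iSup (f := fun n ω => ENNReal.ofReal (f n ω * R ω)) (fun n => ((hf_meas n).mul hR).ennreal_ofReal) (hmono R hR0)]
    exact lintegral_congr fun ω => (hsup R hR0 hR1 ω).symm
  have hlimq : ∫⁻ ω, ENNReal.ofReal (g ω * q ω) ∂P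
      = ⨆ n : ℕ, ∫⁻ ω, ENNReal.ofReal (f n ω * q ω) ∂P := by
    rw [← lintegral_iSup (f := fun n ω => ENNReal.ofReal (f n ω * q ω)) (fun n => ((hf_meas n).mul hq_meas).ennreal_ofReal)
      (hmono q fun ω => (hq_pos ω).le)]
    exact lintegral_congr fun ω => (hsup q (fun ω => (hq_pos ω).le) hq_le ω).symm
  have hfq_int : ∀ n, Integrable (fun ω => f n ω * q ω) P := by
    intro n
    refine (integrable_const ((n:ℝ))).mono'
      ((hf_meas n).mul hq_meas).aestronglyMeasurable ?_
    filter_upwards with ω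
    rw [Real.norm_eq_abs, abs_of_nonneg (mul_nonneg (hf_nonneg n ω) (hq_pos ω).le)]
    calc f n ω * q ω ≤ f n ω * 1 := by
          exact mul_le_mul_of_nonneg_left (hq_le ω) (hf_nonneg n ω)
      _ ≤ n := by rw [mul_one]; exact min_le_right _ _
  -- the key lintegral identity
  have hkey : ∫⁻ ω, ENNReal.ofReal (g ω * R ω) ∂P
      = ∫⁻ ω, ENNReal.ofReal (g ω * q ω) ∂P := by
    rw [hlimR, hlimq]
    congr 1
    funext n
    have e1 : ENNReal.ofReal (∫ ω, f n ω * R ω ∂P) = ∫⁻ ω, ENNReal.ofReal (f n ω * R ω) ∂P :=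
      ofReal_integral_eq_lintegral_ofReal (hfR_int n)
        (Filter.Eventually.of_forall fun ω => mul_nonneg (hf_nonneg n ω) (hR0 ω))
    have e2 : ENNReal.ofReal (∫ ω, f n ω * q ω ∂P) = ∫⁻ ω, ENNReal.ofReal (f n ω * q ω) ∂P :=
      ofReal_integral_eq_lintegral_ofReal (hfq_int n)
        (Filter.Eventually.of_forall fun ω => mul_nonneg (hf_nonneg n ω) (hq_pos ω).le)
    rw [← e1, ← e2, hstep n]
  -- ∫ q = η
  have hq_int : Integrable q P := by
    refine (integrable_const (1:ℝ)).mono' hq_meas.aestronglyMeasurable ?_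
    filter_upwards with ω
    rw [Real.norm_eq_abs, abs_of_nonneg (hq_pos ω).le]; exact hq_le ω
  have hIq : ∫ ω, q ω ∂P = η := by
    rw [integral_congr_ae hmodel, integral_condExp hm, hIR]
  -- value of ∫⁻ gq
  have hgq_int : Integrable (fun ω => g ω * q ω) P := by
    refine (integrable_const (1:ℝ)).mono'
      (hg_meas.mul hq_meas).aestronglyMeasurable ?_
    filter_upwards with ω
    rw [Real.norm_eq_abs, mul_comm, hqg ω, abs_of_nonneg (by linarith [hq_le ω])]
    linarith [hq_pos ω]
  have hIgq : ∫ ω, g ω * q ω ∂P = 1 - η := by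
    have : ∫ ω, g ω * q ω ∂P = ∫ ω, (1 - q ω) ∂P := by
      congr 1; funext ω; rw [mul_comm]; exact hqg ω
    rw [this, integral_sub (integrable_const 1) hq_int, hIq]
    simp
  -- integrability and value of ∫ g·R
  have hgR_nonneg : ∀ ω, 0 ≤ g ω * R ω := fun ω => mul_nonneg (hg_pos ω).le (hR0 ω)
  have hgRlt : ∫⁻ ω, ENNReal.ofReal (g ω * R ω) ∂P = ENNReal.ofReal (1 - η) := by
    rw [hkey, ← ofReal_integral_eq_lintegral_ofReal hgq_int
      (Filter.Eventually.of_forall fun ω => mul_nonneg (hg_pos ω).le (hq_pos ω).le), hIgq]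
  have hgR_int : Integrable (fun ω => g ω * R ω) P := by
    refine ⟨(hg_meas.mul hR).aestronglyMeasurable, ?_⟩
    rw [hasFiniteIntegral_iff_ofReal (Filter.Eventually.of_forall hgR_nonneg), hgRlt]
    exact ENNReal.ofReal_lt_top
  have hIgR : ∫ ω, g ω * R ω ∂P = 1 - η := by
    have h1 : ENNReal.ofReal (∫ ω, g ω * R ω ∂P) = ENNReal.ofReal (1 - η) := by
      rw [ofReal_integral_eq_lintegral_ofReal hgR_int
        (Filter.Eventually.of_forall hgR_nonneg), hgRlt]
    have h2 : 0 ≤ ∫ ω, g ω * R ω ∂P :=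
      integral_nonneg hgR_nonneg
    have h3 : (0:ℝ) ≤ 1 - η := by linarith
    exact (ENNReal.ofReal_eq_ofReal_iff h2 h3).mp h1
  -- set integral over A
  have hsetA : ∫ ω in A, g ω ∂P = 1 - η := by
    rw [← hIgR, ← integral_indicator hA]
    congr 1; funext ω
    rw [hRind ω]
    rcases hR01 ω with h | h
    · have : ω ∉ A := by simp [hAdef, h]
      simp [Set.indicator_of_notMem this]
    · have : ω ∈ A := h
      simp [Set.indicator_of_mem this]
  -- measure of A
  have hPA : P A ≠ 0 := by
    intro h0
    rw [hη, hAdef] at hη0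
    rw [h0] at hη0
    simp at hη0
  have hPAtop : P A ≠ ⊤ := (measure_lt_top P A).ne
  -- compute the conditional integral
  have hcond : ∫ ω, g ω ∂(P[|A]) = η⁻¹ * (1 - η) := by
    rw [ProbabilityTheory.cond, integral_smul_measure, hsetA, smul_eq_mul,
      ENNReal.toReal_inv, ← hη]
  have hexp : Real.exp (α₁ - α₀) = η / (1 - η) := by
    have h : α₁ - α₀ = Real.log (η / (1 - η)) := by rw [hα₁]; ring
    rw [h, Real.exp_log (div_pos hη0 (by linarith))]
  have htarget : ∀ ω, Real.exp (α₁ + ∑ i, β i * proj (X ω) i + γ * Y ω)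
      = Real.exp (α₁ - α₀) * g ω := fun ω => by
    rw [hgdef, ← Real.exp_add]; ring_nf
  calc ∫ ω, Real.exp (α₁ + ∑ i, β i * proj (X ω) i + γ * Y ω) ∂(P[|A])
      = ∫ ω, Real.exp (α₁ - α₀) * g ω ∂(P[|A]) := by
        exact integral_congr_ae (Filter.Eventually.of_forall htarget)
    _ = Real.exp (α₁ - α₀) * ∫ ω, g ω ∂(P[|A]) := integral_const_mul _ _
    _ = (η / (1 - η)) * (η⁻¹ * (1 - η)) := by rw [hexp, hcond]
    _ = 1 := by
        have h1 : (1:ℝ) - η ≠ 0 := by linarith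
        have h2 : η ≠ 0 := ne_of_gt hη0
        field_simp
end

section
/- Under the logistic missingness model, let c : ℝ^d → ℝ be a measurable function such that exp(c(X)) is a version of the conditional expectation of exp(γ·Y) given σ(X) under the conditional measure P(· | R = 1). Then the marginal covariate distributions in the two subpopulations are exponentially tilted: for every bounded measurable g : ℝ^d → ℝ, E[g(X) | R = 0] = E[g(X)·exp(α₁ + β·X₁ + c(X)) | R = 1]. -/
open MeasureTheory ProbabilityTheory Filter

/-- Under the logistic missingness model, with `exp(c(X))` a version of
`E[exp(γ·Y) | σ(X)]` under `P(· | R = 1)`, the marginal covariate distributions in the two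
subpopulations are exponentially tilted: for every bounded measurable `g : ℝ^d → ℝ`,
`E[g(X) | R = 0] = E[g(X)·exp(α₁ + β·X₁ + c(X)) | R = 1]`. -/
theorem covariate_distribution_tilt
    {Ω : Type*} [MeasurableSpace Ω] (P : Measure Ω) [IsProbabilityMeasure P]
    {d d₁ : ℕ}
    (X : Ω → (Fin d → ℝ)) (Y : Ω → ℝ) (R : Ω → ℝ)
    (hX : Measurable X) (hY : Measurable Y) (hR : Measurable R)
    (hR01 : ∀ ω, R ω = 0 ∨ R ω = 1)
    (proj : (Fin d → ℝ) →ₗ[ℝ] (Fin d₁ → ℝ))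
    (α₀ : ℝ) (β : Fin d₁ → ℝ) (γ : ℝ)
    (hmodel : (fun ω => (1 + Real.exp (α₀ + ∑ i, β i * proj (X ω) i + γ * Y ω))⁻¹)
      =ᵐ[P] P[R | MeasurableSpace.comap (fun ω => (X ω, Y ω)) inferInstance])
    (η : ℝ) (hη : η = (P {ω | R ω = 1}).toReal) (hη0 : 0 < η) (hη1 : η < 1)
    (α₁ : ℝ) (hα₁ : α₁ = α₀ + Real.log (η / (1 - η)))
    (c : (Fin d → ℝ) → ℝ) (hc : Measurable c)
    (hcver : (fun ω => Real.exp (c (X ω)))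
      =ᵐ[P[|{ω | R ω = 1}]]
        (P[|{ω | R ω = 1}])[fun ω => Real.exp (γ * Y ω) |
          MeasurableSpace.comap X inferInstance]) :
    ∀ g : (Fin d → ℝ) → ℝ, Measurable g → (∃ C, ∀ x, |g x| ≤ C) →
      ∫ ω, g (X ω) ∂(P[|{ω | R ω = 0}])
        = ∫ ω, g (X ω) * Real.exp (α₁ + ∑ i, β i * proj (X ω) i + c (X ω))
            ∂(P[|{ω | R ω = 1}]) := by
  intro g hg hgb
  obtain ⟨C, hgC⟩ := hgb
  -- basic sets
  set s1 : Set Ω := {ω | R ω = 1} with hs1def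
  set s0 : Set Ω := {ω | R ω = 0} with hs0def
  have hs1 : MeasurableSet s1 := hR (measurableSet_singleton 1)
  have hs0c : s0 = s1ᶜ := by
    ext ω
    simp only [hs0def, hs1def, Set.mem_compl_iff, Set.mem_setOf_eq]
    rcases hR01 ω with h | h <;> simp [h]
  have hp1top : P s1 ≠ ⊤ := measure_ne_top P s1
  have hp1 : (P s1).toReal = η := hη.symm
  have hp1ne : P s1 ≠ 0 := by
    intro h
    rw [h] at hp1
    simp at hp1
    linarith
  have hp0 : (P s0).toReal = 1 - η := by
    rw [hs0c, prob_compl_eq_one_sub hs1,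
      ENNReal.toReal_sub_of_le prob_le_one ENNReal.one_ne_top, ENNReal.toReal_one, hp1]
  have hp0ne : P s0 ≠ 0 := by
    intro h
    rw [h] at hp0
    simp at hp0
    linarith
  -- sigma algebras
  have hZ : Measurable fun ω => (X ω, Y ω) := hX.prodMk hY
  have hmZ : MeasurableSpace.comap (fun ω => (X ω, Y ω)) inferInstance
      ≤ ‹MeasurableSpace Ω› := hZ.comap_le
  have hZm : Measurable[MeasurableSpace.comap (fun ω => (X ω, Y ω)) inferInstance]
      fun ω => (X ω, Y ω) := Measurable.of_comap_le le_rfl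
  have hmXle : MeasurableSpace.comap X inferInstance ≤ ‹MeasurableSpace Ω› := hX.comap_le
  have hXm : Measurable[MeasurableSpace.comap X inferInstance] X :=
    Measurable.of_comap_le le_rfl
  -- measurable building blocks
  have hprojm : Measurable fun x : Fin d → ℝ => (proj x : Fin d₁ → ℝ) :=
    proj.continuous_of_finiteDimensional.measurable
  have hB : Measurable fun x : Fin d → ℝ => α₀ + ∑ i, β i * proj x i := by
    apply measurable_const.add
    exact Finset.measurable_sum _ fun i _ =>
      measurable_const.mul ((measurable_pi_apply i).comp hprojm)
  -- main functions
  set A : Ω → ℝ := fun ω => α₀ + ∑ i, β i * proj (X ω) i + γ * Y ω with hAdef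
  set eA : Ω → ℝ := fun ω => Real.exp (A ω) with heAdef
  set pp : Ω → ℝ := fun ω => (1 + eA ω)⁻¹ with hppdef
  have hAm : Measurable A := (hB.comp hX).add (measurable_const.mul hY)
  have heAm : Measurable eA := hAm.exp
  have hppm : Measurable pp := (measurable_const.add heAm).inv
  have heApos : ∀ ω, 0 < eA ω := fun ω => Real.exp_pos _
  have hpppos : ∀ ω, 0 < pp ω := by
    intro ω
    have := heApos ω
    rw [hppdef]
    positivity
  have hpple1 : ∀ ω, pp ω ≤ 1 := by
    intro ω
    have h1 := heApos ω
    rw [hppdef]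
    exact inv_le_one_of_one_le₀ (by linarith)
  have hppeA : ∀ ω, pp ω * eA ω = 1 - pp ω := by
    intro ω
    have h1 := heApos ω
    have h2 : (1 : ℝ) + eA ω ≠ 0 := by linarith
    rw [hppdef]
    field_simp
    ring
  have hR0 : ∀ ω, 0 ≤ R ω := by
    intro ω; rcases hR01 ω with h | h <;> rw [h] <;> norm_num
  have hRb : ∀ ω, ‖R ω‖ ≤ 1 := by
    intro ω; rcases hR01 ω with h | h <;> rw [h] <;> norm_num
  have hRint : Integrable R P :=
    (integrable_const (1:ℝ)).mono' hR.aestronglyMeasurable (ae_of_all _ hRb)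
  have hmodel' : (fun ω => pp ω) =ᵐ[P] P[R|MeasurableSpace.comap (fun ω => (X ω, Y ω)) inferInstance] := hmodel
  have hC0 : 0 ≤ C := le_trans (abs_nonneg _) (hgC 0)
  -- KEY: tower property for bounded (X,Y)-measurable factors
  have key : ∀ φ : (Fin d → ℝ) × ℝ → ℝ, Measurable φ → ∀ K : ℝ, (∀ p, |φ p| ≤ K) →
      ∫ ω, φ (X ω, Y ω) * R ω ∂P = ∫ ω, φ (X ω, Y ω) * pp ω ∂P := by
    intro φ hφ K hK
    have hsm : StronglyMeasurable[MeasurableSpace.comap (fun ω => (X ω, Y ω)) inferInstance] fun ω => φ (X ω, Y ω) :=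
      (hφ.comp hZm).stronglyMeasurable
    have hint : Integrable ((fun ω => φ (X ω, Y ω)) * R) P := by
      refine (integrable_const (K * 1)).mono'
        (((hφ.comp hZ).mul hR).aestronglyMeasurable) (ae_of_all _ fun ω => ?_)
      have h1 := hK (X ω, Y ω)
      have h2 := hRb ω
      rw [Pi.mul_apply, norm_mul]
      exact mul_le_mul (by simpa using h1) h2 (norm_nonneg _) (le_trans (abs_nonneg _) h1)
    have hmul := condExp_mul_of_stronglyMeasurable_left (μ := P) (m := MeasurableSpace.comap (fun ω => (X ω, Y ω)) inferInstance) hsm hint hRint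
    have e1 : ∫ ω, φ (X ω, Y ω) * R ω ∂P
        = ∫ ω, (P[(fun ω => φ (X ω, Y ω)) * R|MeasurableSpace.comap (fun ω => (X ω, Y ω)) inferInstance]) ω ∂P := (integral_condExp hmZ).symm
    have e2 : ∫ ω, (P[(fun ω => φ (X ω, Y ω)) * R|MeasurableSpace.comap (fun ω => (X ω, Y ω)) inferInstance]) ω ∂P
        = ∫ ω, φ (X ω, Y ω) * pp ω ∂P := by
      refine integral_congr_ae ?_
      filter_upwards [hmul, hmodel'] with ω h1 h2
      rw [h1, Pi.mul_apply, ← h2]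
    rw [e1, e2]
  -- key applied to truncated exponential
  have keymin : ∀ n : ℕ, ∀ u : (Fin d → ℝ) → ℝ, Measurable u → (∀ x, |u x| ≤ C) →
      ∫ ω, min (eA ω) n * u (X ω) * R ω ∂P = ∫ ω, min (eA ω) n * u (X ω) * pp ω ∂P := by
    intro n u hu huC
    have hφm : Measurable fun p : (Fin d → ℝ) × ℝ =>
        min (Real.exp (α₀ + ∑ i, β i * proj p.1 i + γ * p.2)) n * u p.1 := by
      refine Measurable.mul ?_ (hu.comp measurable_fst)
      exact (((hB.comp measurable_fst).add (measurable_const.mul measurable_snd)).exp).min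
        measurable_const
    have hφb : ∀ p : (Fin d → ℝ) × ℝ,
        |min (Real.exp (α₀ + ∑ i, β i * proj p.1 i + γ * p.2)) n * u p.1| ≤ n * C := by
      intro p
      rw [abs_mul]
      have h1 : 0 ≤ min (Real.exp (α₀ + ∑ i, β i * proj p.1 i + γ * p.2)) (n : ℝ) :=
        le_min (Real.exp_pos _).le (Nat.cast_nonneg n)
      have h2 : |min (Real.exp (α₀ + ∑ i, β i * proj p.1 i + γ * p.2)) (n : ℝ)| ≤ n := by
        rw [abs_of_nonneg h1]; exact min_le_right _ _
      exact mul_le_mul h2 (huC p.1) (abs_nonneg _) (Nat.cast_nonneg n)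
    exact key _ hφm (n * C) hφb
  -- pointwise bound
  have hminpp : ∀ (n : ℕ) (ω), min (eA ω) n * pp ω ≤ 1 := by
    intro n ω
    have h1 : min (eA ω) n * pp ω ≤ eA ω * pp ω :=
      mul_le_mul_of_nonneg_right (min_le_left _ _) (hpppos ω).le
    have h2 : eA ω * pp ω = 1 - pp ω := by rw [mul_comm]; exact hppeA ω
    have := hpppos ω
    linarith
  -- convergence of truncations (pointwise, at the ofReal level will be derived)
  have htendmin : ∀ ω, ∀ᶠ n : ℕ in atTop, min (eA ω) (n : ℝ) = eA ω := by
    intro ω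
    filter_upwards [eventually_ge_atTop ⌈eA ω⌉₊] with n hn
    exact min_eq_left (le_trans (Nat.le_ceil _) (Nat.cast_le.mpr hn))
  -- integrability of each truncation (with factor R or pp)
  have hminRint : ∀ (n : ℕ) (u : (Fin d → ℝ) → ℝ), Measurable u → (∀ x, |u x| ≤ C) →
      Integrable (fun ω => min (eA ω) n * u (X ω) * R ω) P := by
    intro n u hu huC
    refine (integrable_const ((n : ℝ) * C * 1)).mono'
      (((heAm.min measurable_const).mul (hu.comp hX)).mul hR).aestronglyMeasurable
      (ae_of_all _ fun ω => ?_)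
    rw [norm_mul, norm_mul]
    have h1 : 0 ≤ min (eA ω) (n : ℝ) := le_min (heApos ω).le (Nat.cast_nonneg n)
    have h2 : ‖min (eA ω) (n : ℝ)‖ ≤ n := by
      rw [Real.norm_eq_abs, abs_of_nonneg h1]; exact min_le_right _ _
    have h3 : ‖u (X ω)‖ ≤ C := by rw [Real.norm_eq_abs]; exact huC _
    have h4 := hRb ω
    have := mul_le_mul h2 h3 (norm_nonneg _) (Nat.cast_nonneg n)
    exact mul_le_mul this h4 (norm_nonneg _) (by positivity)
  have hminppint : ∀ (n : ℕ) (u : (Fin d → ℝ) → ℝ), Measurable u → (∀ x, |u x| ≤ C) →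
      Integrable (fun ω => min (eA ω) n * u (X ω) * pp ω) P := by
    intro n u hu huC
    refine (integrable_const ((n : ℝ) * C * 1)).mono'
      (((heAm.min measurable_const).mul (hu.comp hX)).mul hppm).aestronglyMeasurable
      (ae_of_all _ fun ω => ?_)
    rw [norm_mul, norm_mul]
    have h1 : 0 ≤ min (eA ω) (n : ℝ) := le_min (heApos ω).le (Nat.cast_nonneg n)
    have h2 : ‖min (eA ω) (n : ℝ)‖ ≤ n := by
      rw [Real.norm_eq_abs, abs_of_nonneg h1]; exact min_le_right _ _
    have h3 : ‖u (X ω)‖ ≤ C := by rw [Real.norm_eq_abs]; exact huC _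
    have h4 : ‖pp ω‖ ≤ 1 := by
      rw [Real.norm_eq_abs, abs_of_nonneg (hpppos ω).le]; exact hpple1 ω
    have := mul_le_mul h2 h3 (norm_nonneg _) (Nat.cast_nonneg n)
    exact mul_le_mul this h4 (norm_nonneg _) (by positivity)
  -- integrability of eA * |g(X)| * R via monotone convergence
  have habs : ∀ x, |(|g x|)| ≤ C := fun x => by rw [abs_abs]; exact hgC x
  have hbddint : Integrable (fun ω => eA ω * |g (X ω)| * R ω) P := by
    have hFm : Measurable fun ω => eA ω * |g (X ω)| * R ω :=
      (heAm.mul (hg.comp hX).abs).mul hR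
    have hnn : ∀ ω, 0 ≤ eA ω * |g (X ω)| * R ω := fun ω =>
      mul_nonneg (mul_nonneg (heApos ω).le (abs_nonneg _)) (hR0 ω)
    have hTl : Tendsto
        (fun n : ℕ => ∫⁻ ω, ENNReal.ofReal (min (eA ω) n * |g (X ω)| * R ω) ∂P) atTop
        (nhds (∫⁻ ω, ENNReal.ofReal (eA ω * |g (X ω)| * R ω) ∂P)) := by
      apply lintegral_tendsto_of_tendsto_of_monotone
      · intro n
        exact (((heAm.min measurable_const).mul (hg.comp hX).abs).mul hR).ennreal_ofReal.aemeasurable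
      · refine ae_of_all _ fun ω a b hab => ?_
        apply ENNReal.ofReal_le_ofReal
        have h1 : min (eA ω) a ≤ min (eA ω) b := min_le_min le_rfl (Nat.cast_le.mpr hab)
        exact mul_le_mul_of_nonneg_right
          (mul_le_mul_of_nonneg_right h1 (abs_nonneg _)) (hR0 ω)
      · refine ae_of_all _ fun ω => ?_
        refine Tendsto.congr' ?_ tendsto_const_nhds
        filter_upwards [htendmin ω] with n hn
        rw [hn]
    have hball : ∀ n : ℕ,
        ∫⁻ ω, ENNReal.ofReal (min (eA ω) n * |g (X ω)| * R ω) ∂P ≤ ENNReal.ofReal C := by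
      intro n
      have hint1 := hminRint n (fun x => |g x|) hg.abs habs
      have hnn1 : 0 ≤ᵐ[P] fun ω => min (eA ω) n * |g (X ω)| * R ω :=
        ae_of_all _ fun ω => mul_nonneg
          (mul_nonneg (le_min (heApos ω).le (Nat.cast_nonneg n)) (abs_nonneg _)) (hR0 ω)
      rw [← ofReal_integral_eq_lintegral_ofReal hint1 hnn1]
      apply ENNReal.ofReal_le_ofReal
      have e : ∫ ω, min (eA ω) (n:ℝ) * |g (X ω)| * R ω ∂P
          = ∫ ω, min (eA ω) (n:ℝ) * |g (X ω)| * pp ω ∂P :=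
        keymin n (fun x => |g x|) hg.abs habs
      rw [e]
      have hle : ∀ ω, min (eA ω) (n:ℝ) * |g (X ω)| * pp ω ≤ C := by
        intro ω
        have h1 := hminpp n ω
        have h2 := hgC (X ω)
        have h3 : 0 ≤ min (eA ω) (n:ℝ) := le_min (heApos ω).le (Nat.cast_nonneg n)
        have h4 := (hpppos ω).le
        have h5 := abs_nonneg (g (X ω))
        nlinarith
      calc ∫ ω, min (eA ω) (n:ℝ) * |g (X ω)| * pp ω ∂P
          ≤ ∫ _ω, C ∂P := integral_mono (hminppint n (fun x => |g x|) hg.abs habs)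
            (integrable_const C) hle
        _ = C := by simp
    have hfin : ∫⁻ ω, ENNReal.ofReal (eA ω * |g (X ω)| * R ω) ∂P ≤ ENNReal.ofReal C :=
      le_of_tendsto' hTl hball
    refine ⟨hFm.aestronglyMeasurable, ?_⟩
    rw [hasFiniteIntegral_iff_ofReal (ae_of_all _ hnn)]
    exact lt_of_le_of_lt hfin ENNReal.ofReal_lt_top
  -- the central identity: ∫ (1-pp) g = ∫ eA g R
  have hgeAintP : Integrable (fun ω => eA ω * g (X ω) * R ω) P := by
    refine hbddint.mono' ((heAm.mul (hg.comp hX)).mul hR).aestronglyMeasurable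
      (ae_of_all _ fun ω => ?_)
    have h1 := heApos ω
    have h2 := hR0 ω
    simp only [Real.norm_eq_abs, abs_mul, abs_of_nonneg h1.le, abs_of_nonneg h2, abs_abs]
    exact le_rfl
  have E2 : ∫ ω, (1 - pp ω) * g (X ω) ∂P = ∫ ω, eA ω * g (X ω) * R ω ∂P := by
    have T1 : Tendsto (fun n : ℕ => ∫ ω, min (eA ω) n * g (X ω) * R ω ∂P) atTop
        (nhds (∫ ω, eA ω * g (X ω) * R ω ∂P)) := by
      apply tendsto_integral_of_dominated_convergence (fun ω => eA ω * |g (X ω)| * R ω)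
      · intro n
        exact (((heAm.min measurable_const).mul (hg.comp hX)).mul hR).aestronglyMeasurable
      · exact hbddint
      · intro n
        refine ae_of_all _ fun ω => ?_
        have h1 : 0 ≤ min (eA ω) (n : ℝ) := le_min (heApos ω).le (Nat.cast_nonneg n)
        have h2 := hR0 ω
        simp only [Real.norm_eq_abs, abs_mul, abs_of_nonneg h1, abs_of_nonneg h2]
        exact mul_le_mul_of_nonneg_right
          (mul_le_mul_of_nonneg_right (min_le_left _ _) (abs_nonneg _)) (hR0 ω)
      · refine ae_of_all _ fun ω => ?_
        refine Tendsto.congr' ?_ tendsto_const_nhds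
        filter_upwards [htendmin ω] with n hn
        rw [hn]
    have T2 : Tendsto (fun n : ℕ => ∫ ω, min (eA ω) n * g (X ω) * pp ω ∂P) atTop
        (nhds (∫ ω, eA ω * g (X ω) * pp ω ∂P)) := by
      apply tendsto_integral_of_dominated_convergence (fun _ω => C)
      · intro n
        exact (((heAm.min measurable_const).mul (hg.comp hX)).mul hppm).aestronglyMeasurable
      · exact integrable_const C
      · intro n
        refine ae_of_all _ fun ω => ?_
        have h1 : 0 ≤ min (eA ω) (n : ℝ) := le_min (heApos ω).le (Nat.cast_nonneg n)
        have h2 := (hpppos ω).le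
        have h5 := hpple1 ω
        simp only [Real.norm_eq_abs, abs_mul, abs_of_nonneg h1, abs_of_nonneg h2]
        have h3 := hminpp n ω
        have h4 := abs_nonneg (g (X ω))
        have h6 := hgC (X ω)
        nlinarith
      · refine ae_of_all _ fun ω => ?_
        refine Tendsto.congr' ?_ tendsto_const_nhds
        filter_upwards [htendmin ω] with n hn
        rw [hn]
    have heq : ∀ n : ℕ, ∫ ω, min (eA ω) n * g (X ω) * R ω ∂P
        = ∫ ω, min (eA ω) n * g (X ω) * pp ω ∂P := fun n => keymin n g hg hgC
    have := tendsto_nhds_unique (Tendsto.congr heq T1) T2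
    rw [this]
    refine integral_congr_ae (ae_of_all _ fun ω => ?_)
    show (1 - pp ω) * g (X ω) = eA ω * g (X ω) * pp ω
    linear_combination (-(g (X ω))) * hppeA ω
  -- ∫ (1-R) g = ∫ (1-pp) g
  have hgXint : Integrable (fun ω => g (X ω)) P :=
    (integrable_const C).mono' (hg.comp hX).aestronglyMeasurable
      (ae_of_all _ fun ω => by rw [Real.norm_eq_abs]; exact hgC _)
  have hgRint : Integrable (fun ω => g (X ω) * R ω) P := by
    refine (integrable_const (C * 1)).mono' ((hg.comp hX).mul hR).aestronglyMeasurable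
      (ae_of_all _ fun ω => ?_)
    rw [norm_mul]
    exact mul_le_mul (by rw [Real.norm_eq_abs]; exact hgC _) (hRb ω) (norm_nonneg _) hC0
  have hgppint : Integrable (fun ω => g (X ω) * pp ω) P := by
    refine (integrable_const (C * 1)).mono' ((hg.comp hX).mul hppm).aestronglyMeasurable
      (ae_of_all _ fun ω => ?_)
    rw [norm_mul]
    refine mul_le_mul (by rw [Real.norm_eq_abs]; exact hgC _) ?_ (norm_nonneg _) hC0
    rw [Real.norm_eq_abs, abs_of_nonneg (hpppos ω).le]
    exact hpple1 ω
  have ekey : ∫ ω, g (X ω) * R ω ∂P = ∫ ω, g (X ω) * pp ω ∂P :=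
    key (fun p => g p.1) (hg.comp measurable_fst) C (fun p => hgC p.1)
  have E3 : ∫ ω, (1 - R ω) * g (X ω) ∂P = ∫ ω, (1 - pp ω) * g (X ω) ∂P := by
    have l1 : ∫ ω, (1 - R ω) * g (X ω) ∂P
        = ∫ ω, g (X ω) ∂P - ∫ ω, g (X ω) * R ω ∂P := by
      rw [← integral_sub hgXint hgRint]
      refine integral_congr_ae (ae_of_all _ fun ω => ?_)
      show (1 - R ω) * g (X ω) = g (X ω) - g (X ω) * R ω
      ring
    have l2 : ∫ ω, (1 - pp ω) * g (X ω) ∂P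
        = ∫ ω, g (X ω) ∂P - ∫ ω, g (X ω) * pp ω ∂P := by
      rw [← integral_sub hgXint hgppint]
      refine integral_congr_ae (ae_of_all _ fun ω => ?_)
      show (1 - pp ω) * g (X ω) = g (X ω) - g (X ω) * pp ω
      ring
    rw [l1, l2, ekey]
  -- conditional measure computations
  have condint : ∀ (t : Set Ω) (f : Ω → ℝ),
      ∫ ω, f ω ∂(P[|t]) = ((P t)⁻¹).toReal * ∫ ω in t, f ω ∂P := by
    intro t f
    show ∫ ω, f ω ∂((P t)⁻¹ • P.restrict t) = _
    rw [integral_smul_measure, smul_eq_mul]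
  have hset1 : ∀ f : Ω → ℝ, ∫ ω in s1, f ω ∂P = ∫ ω, f ω * R ω ∂P := by
    intro f
    rw [← integral_indicator hs1]
    refine integral_congr_ae (ae_of_all _ fun ω => ?_)
    show s1.indicator f ω = f ω * R ω
    by_cases h : ω ∈ s1
    · rw [Set.indicator_of_mem h]
      have h1 : R ω = 1 := h
      rw [h1, mul_one]
    · rw [Set.indicator_of_notMem h]
      have h1 : R ω = 0 := by
        rcases hR01 ω with h0 | h1
        · exact h0
        · exact absurd h1 h
      rw [h1, mul_zero]
  have hs0m : MeasurableSet s0 := by rw [hs0c]; exact hs1.compl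
  have hset0 : ∫ ω in s0, g (X ω) ∂P = ∫ ω, (1 - R ω) * g (X ω) ∂P := by
    rw [← integral_indicator hs0m]
    refine integral_congr_ae (ae_of_all _ fun ω => ?_)
    show s0.indicator (fun ω => g (X ω)) ω = (1 - R ω) * g (X ω)
    by_cases h : ω ∈ s0
    · rw [Set.indicator_of_mem h]
      have h1 : R ω = 0 := h
      rw [h1]
      ring
    · rw [Set.indicator_of_notMem h]
      have h1 : R ω = 1 := by
        rcases hR01 ω with h0 | h1
        · exact absurd h0 h
        · exact h1
      rw [h1]
      ring
  -- step 6 : conditional expectation under P[|s1]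
  haveI hP'p : IsProbabilityMeasure (P[|s1]) := cond_isProbabilityMeasure hp1ne
  have hexpYint : Integrable (fun ω => Real.exp (γ * Y ω)) (P[|s1]) := by
    by_contra hni
    have h0 := condExp_of_not_integrable (m := MeasurableSpace.comap X inferInstance) hni
    have h1 : (fun ω => Real.exp (c (X ω))) =ᵐ[P[|s1]] (0 : Ω → ℝ) := by
      refine hcver.trans ?_
      rw [h0]
    have h2 : ∀ᵐ ω ∂(P[|s1]), False := by
      filter_upwards [h1] with ω hω
      simp only [Pi.zero_apply] at hω
      exact Real.exp_ne_zero _ hω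
    rw [Filter.eventually_false_iff_eq_bot, ae_eq_bot] at h2
    exact IsProbabilityMeasure.ne_zero (P[|s1]) h2
  have hgeAintP' : Integrable (fun ω => eA ω * g (X ω)) (P[|s1]) := by
    show Integrable _ ((P s1)⁻¹ • P.restrict s1)
    refine Integrable.smul_measure ?_ (by simp [hp1ne])
    refine (hgeAintP.restrict (s := s1)).congr ?_
    rw [EventuallyEq, ae_restrict_iff' hs1]
    refine ae_of_all _ fun ω hω => ?_
    have h1 : R ω = 1 := hω
    rw [h1, mul_one]
  have hfsm : StronglyMeasurable[MeasurableSpace.comap X inferInstance]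
      fun ω => g (X ω) * Real.exp (α₀ + ∑ i, β i * proj (X ω) i) :=
    ((hg.comp hXm).mul ((hB.comp hXm).exp)).stronglyMeasurable
  have hfgint : Integrable
      ((fun ω => g (X ω) * Real.exp (α₀ + ∑ i, β i * proj (X ω) i)) *
        fun ω => Real.exp (γ * Y ω)) (P[|s1]) := by
    refine hgeAintP'.congr (ae_of_all _ fun ω => ?_)
    simp only [Pi.mul_apply]
    rw [heAdef]
    beta_reduce
    rw [hAdef]
    beta_reduce
    rw [Real.exp_add]
    ring
  have hmulc := condExp_mul_of_stronglyMeasurable_left (μ := P[|s1]) (m := MeasurableSpace.comap X inferInstance) hfsm hfgint hexpYint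
  have E6 : ∫ ω, eA ω * g (X ω) ∂(P[|s1])
      = ∫ ω, g (X ω) * Real.exp (α₀ + ∑ i, β i * proj (X ω) i + c (X ω)) ∂(P[|s1]) := by
    have e0 : ∫ ω, eA ω * g (X ω) ∂(P[|s1])
        = ∫ ω, ((fun ω => g (X ω) * Real.exp (α₀ + ∑ i, β i * proj (X ω) i)) *
            fun ω => Real.exp (γ * Y ω)) ω ∂(P[|s1]) := by
      refine integral_congr_ae (ae_of_all _ fun ω => ?_)
      simp only [Pi.mul_apply]
      rw [heAdef]
      beta_reduce
      rw [hAdef]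
      beta_reduce
      rw [Real.exp_add]
      ring
    have e1 : ∫ ω, ((fun ω => g (X ω) * Real.exp (α₀ + ∑ i, β i * proj (X ω) i)) *
          fun ω => Real.exp (γ * Y ω)) ω ∂(P[|s1])
        = ∫ ω, ((P[|s1])[(fun ω => g (X ω) * Real.exp (α₀ + ∑ i, β i * proj (X ω) i)) *
            fun ω => Real.exp (γ * Y ω)|MeasurableSpace.comap X inferInstance]) ω ∂(P[|s1]) := (integral_condExp hmXle).symm
    have e2 : ∫ ω, ((P[|s1])[(fun ω => g (X ω) * Real.exp (α₀ + ∑ i, β i * proj (X ω) i)) *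
          fun ω => Real.exp (γ * Y ω)|MeasurableSpace.comap X inferInstance]) ω ∂(P[|s1])
        = ∫ ω, g (X ω) * Real.exp (α₀ + ∑ i, β i * proj (X ω) i + c (X ω)) ∂(P[|s1]) := by
      refine integral_congr_ae ?_
      filter_upwards [hmulc, hcver] with ω h1 h2
      rw [h1, Pi.mul_apply, ← h2,
        Real.exp_add (α₀ + ∑ i, β i * proj (X ω) i) (c (X ω))]
      ring
    rw [e0, e1, e2]
  -- final assembly
  have hfrac : Real.exp (α₁ - α₀) = η / (1 - η) := by
    rw [hα₁]
    have h1 : (0:ℝ) < η / (1 - η) := by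
      apply div_pos hη0
      linarith
    rw [show α₀ + Real.log (η / (1 - η)) - α₀ = Real.log (η / (1 - η)) by ring]
    exact Real.exp_log h1
  -- LHS
  have LHS1 : ∫ ω, g (X ω) ∂(P[|s0]) = (1 - η)⁻¹ * ∫ ω, eA ω * g (X ω) * R ω ∂P := by
    rw [condint s0 (fun ω => g (X ω)), hset0, E3, E2]
    congr 1
    rw [ENNReal.toReal_inv, hp0]
  -- RHS
  have RHS1 : ∫ ω, g (X ω) * Real.exp (α₁ + ∑ i, β i * proj (X ω) i + c (X ω)) ∂(P[|s1])
      = (η / (1 - η)) * ∫ ω, eA ω * g (X ω) ∂(P[|s1]) := by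
    rw [E6, ← integral_const_mul]
    refine integral_congr_ae (ae_of_all _ fun ω => ?_)
    show g (X ω) * Real.exp (α₁ + ∑ i, β i * proj (X ω) i + c (X ω))
      = (η / (1 - η)) * (g (X ω) * Real.exp (α₀ + ∑ i, β i * proj (X ω) i + c (X ω)))
    rw [show α₁ + ∑ i, β i * proj (X ω) i + c (X ω)
        = (α₁ - α₀) + (α₀ + ∑ i, β i * proj (X ω) i + c (X ω)) by ring,
      Real.exp_add, hfrac]
    ring
  have MID : ∫ ω, eA ω * g (X ω) ∂(P[|s1]) = η⁻¹ * ∫ ω, eA ω * g (X ω) * R ω ∂P := by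
    have h' : ∫ ω in s1, eA ω * g (X ω) ∂P = ∫ ω, eA ω * g (X ω) * R ω ∂P :=
      hset1 (fun ω => eA ω * g (X ω))
    rw [condint s1 (fun ω => eA ω * g (X ω)), h', ENNReal.toReal_inv, hp1]
  rw [LHS1, RHS1, MID]
  have h1 : η ≠ 0 := ne_of_gt hη0
  have h2 : (1:ℝ) - η ≠ 0 := by linarith
  field_simp
end

section
/- (Induced logistic regression model for the observed covariates.) Under the logistic missingness model, let c : ℝ^d → ℝ be a measurable function such that exp(c(X)) is a version of the conditional expectation of exp(γ·Y) given σ(X) under P(· | R = 1). Then 1/(1 + exp(α₀ + β·X₁ + c(X))) is a version of E[R | σ(X)]. -/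
open MeasureTheory ProbabilityTheory

/-- The σ-algebra generated by a map. -/
abbrev ilrComap {Ω E : Type*} [MeasurableSpace E] (X : Ω → E) : MeasurableSpace Ω :=
  MeasurableSpace.comap X inferInstance

/-- Algebraic identity behind the induced logistic regression. -/
lemma induced_logistic_aux_alg (E1 E2 E3 : ℝ) (h1 : 0 < E1) (h2 : 0 < E2) (h3 : 0 < E3) :
    (1 + E1 * E3)⁻¹ - (1 + E1 * E2)⁻¹
      = (1 + E1 * E3)⁻¹ * E1 * (E2 * (1 + E1 * E2)⁻¹)
        - (1 + E1 * E3)⁻¹ * E1 * (E3 * (1 + E1 * E2)⁻¹) := by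
  have hA : (1 : ℝ) + E1 * E3 ≠ 0 := by positivity
  have hB : (1 : ℝ) + E1 * E2 ≠ 0 := by positivity
  field_simp
  ring

/-- (Induced logistic regression model for the observed covariates.) -/
theorem induced_logistic_regression
    {Ω : Type*} [MeasurableSpace Ω] (P : Measure Ω) [IsProbabilityMeasure P]
    {d d₁ : ℕ}
    (X : Ω → (Fin d → ℝ)) (Y : Ω → ℝ) (R : Ω → ℝ)
    (hX : Measurable X) (hY : Measurable Y) (hR : Measurable R)
    (hR01 : ∀ ω, R ω = 0 ∨ R ω = 1)
    (proj : (Fin d → ℝ) →ₗ[ℝ] (Fin d₁ → ℝ))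
    (α₀ : ℝ) (β : Fin d₁ → ℝ) (γ : ℝ)
    (hmodel : (fun ω => (1 + Real.exp (α₀ + ∑ i, β i * proj (X ω) i + γ * Y ω))⁻¹)
      =ᵐ[P] P[R | MeasurableSpace.comap (fun ω => (X ω, Y ω)) inferInstance])
    (η : ℝ) (hη : η = (P {ω | R ω = 1}).toReal) (hη0 : 0 < η) (hη1 : η < 1)
    (α₁ : ℝ) (hα₁ : α₁ = α₀ + Real.log (η / (1 - η)))
    (c : (Fin d → ℝ) → ℝ) (hc : Measurable c)
    (hcver : (fun ω => Real.exp (c (X ω)))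
      =ᵐ[P[|{ω | R ω = 1}]]
        (P[|{ω | R ω = 1}])[fun ω => Real.exp (γ * Y ω) |
          MeasurableSpace.comap X inferInstance]) :
    (fun ω => (1 + Real.exp (α₀ + ∑ i, β i * proj (X ω) i + c (X ω)))⁻¹)
      =ᵐ[P] P[R | MeasurableSpace.comap X inferInstance] := by
  classical
  -- σ-algebras
  have hm₁ : ilrComap X ≤ _ := measurable_iff_comap_le.mp hX
  have hm₂ : ilrComap (fun ω => (X ω, Y ω)) ≤ _ := measurable_iff_comap_le.mp (hX.prodMk hY)
  have hm₁₂ : ilrComap X ≤ ilrComap (fun ω => (X ω, Y ω)) := by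
    show MeasurableSpace.comap X inferInstance ≤ _
    have hXeq : X = Prod.fst ∘ (fun ω => (X ω, Y ω)) := rfl
    rw [hXeq, ← MeasurableSpace.comap_comp]
    exact MeasurableSpace.comap_mono (measurable_iff_comap_le.mp measurable_fst)
  have hXm₁ : Measurable[ilrComap X] X := fun t ht => ⟨t, ht, rfl⟩
  have hXYm₂ : Measurable[ilrComap (fun ω => (X ω, Y ω))] (fun ω => (X ω, Y ω)) := fun t ht => ⟨t, ht, rfl⟩
  have hXm₂ : Measurable[ilrComap (fun ω => (X ω, Y ω))] X := measurable_fst.comp hXYm₂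
  have hYm₂ : Measurable[ilrComap (fun ω => (X ω, Y ω))] Y := measurable_snd.comp hXYm₂
  -- covariate-level functions
  set S : (Fin d → ℝ) → ℝ := fun x => α₀ + ∑ i, β i * proj x i with hSdef
  have hS : Measurable S := by
    apply measurable_const.add
    exact Finset.measurable_sum _ fun i _ =>
      ((measurable_pi_apply i).comp proj.continuous_of_finiteDimensional.measurable).const_mul
        (β i)
  set Gf : (Fin d → ℝ) → ℝ := fun x => (1 + Real.exp (S x + c x))⁻¹ with hGfdef
  set Φ : (Fin d → ℝ) → ℝ := fun x => Gf x * Real.exp (S x) with hΦdef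
  have hGf : Measurable Gf := by
    apply Measurable.inv
    exact measurable_const.add (Real.measurable_exp.comp (hS.add hc))
  have hΦ : Measurable Φ := hGf.mul (Real.measurable_exp.comp hS)
  -- ambient-level functions
  set piF : Ω → ℝ := fun ω => (1 + Real.exp (S (X ω) + γ * Y ω))⁻¹ with hpiFdef
  have hpiFmeas : Measurable piF := by
    apply Measurable.inv
    exact measurable_const.add (Real.measurable_exp.comp ((hS.comp hX).add (hY.const_mul γ)))
  have hpiF_nonneg : ∀ ω, 0 ≤ piF ω := fun ω => by positivity
  have hpiF_le_one : ∀ ω, piF ω ≤ 1 := fun ω => by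
    apply inv_le_one_of_one_le₀
    nlinarith [Real.exp_pos (S (X ω) + γ * Y ω)]
  -- the model assumption, rephrased
  have hmodel' : piF =ᵐ[P] P[R | ilrComap (fun ω => (X ω, Y ω))] := hmodel
  -- goal rephrased
  show (fun ω => Gf (X ω)) =ᵐ[P] P[R | ilrComap X]
  -- basic facts about s = {R = 1}
  set s : Set Ω := {ω | R ω = 1} with hsdef
  have hs : MeasurableSet s := hR (measurableSet_singleton 1)
  have hPs_ne_top : P s ≠ ⊤ := measure_ne_top P s
  have hPs_ne0 : P s ≠ 0 := by
    intro h
    rw [hη, h] at hη0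
    simp at hη0
  have hPsR_ne0 : (P s).toReal ≠ 0 := by
    simp [ENNReal.toReal_eq_zero_iff, hPs_ne0, hPs_ne_top]
  haveI hP' : IsProbabilityMeasure (P[|s]) := cond_isProbabilityMeasure hPs_ne0
  -- integrability of exp(γ Y) under the conditional measure
  have hIntY' : Integrable (fun ω => Real.exp (γ * Y ω)) (P[|s]) := by
    by_contra h
    rw [condExp_of_not_integrable h] at hcver
    haveI : (ae (P[|s])).NeBot := ae_neBot.mpr (IsProbabilityMeasure.ne_zero _)
    obtain ⟨ω, hω⟩ := hcver.exists
    exact (Real.exp_pos _).ne' hω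
  have hIntc' : Integrable (fun ω => Real.exp (c (X ω))) (P[|s]) :=
    integrable_condExp.congr hcver.symm
  -- transfer integrability from P[|s] to P
  have hIntOn : ∀ f : Ω → ℝ, Integrable f (P[|s]) → IntegrableOn f s P := by
    intro f hf
    have : P[|s] = (P s)⁻¹ • P.restrict s := rfl
    rw [this] at hf
    exact (integrable_smul_measure (ENNReal.inv_ne_zero.mpr hPs_ne_top)
      (ENNReal.inv_ne_top.mpr hPs_ne0)).mp hf
  have hindR : ∀ f : Ω → ℝ, (fun ω => f ω * R ω) = s.indicator f := by
    intro f
    funext ω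
    rcases hR01 ω with h | h
    · have hω : ω ∉ s := by simp [hsdef, h]
      simp [Set.indicator_of_notMem hω, h]
    · have hω : ω ∈ s := h
      simp [Set.indicator_of_mem hω, h]
  have hmulR_int : ∀ f : Ω → ℝ, Integrable f (P[|s]) → Integrable (fun ω => f ω * R ω) P := by
    intro f hf
    rw [hindR f]
    exact (integrable_indicator_iff hs).mpr (hIntOn f hf)
  -- transfer set integrals
  have hINT : ∀ (f : Ω → ℝ) (t : Set Ω), MeasurableSet t →
      ∫ ω in t, f ω * R ω ∂P = (P s).toReal * ∫ ω in t, f ω ∂(P[|s]) := by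
    intro f t ht
    have h1 : ∫ ω in t, f ω * R ω ∂P = ∫ ω in t, s.indicator f ω ∂P := by
      rw [hindR f]
    rw [h1, setIntegral_indicator hs]
    have h2 : P[|s] = (P s)⁻¹ • P.restrict s := rfl
    rw [h2, Measure.restrict_smul, integral_smul_measure, Measure.restrict_restrict ht,
      ENNReal.toReal_inv, smul_eq_mul, ← mul_assoc, mul_inv_cancel₀ hPsR_ne0, one_mul]
  -- KEY: set integrals of exp(c X)·R and exp(γY)·R agree on m₁-sets
  have hKEY : ∀ t : Set Ω, MeasurableSet[ilrComap X] t →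
      ∫ ω in t, Real.exp (c (X ω)) * R ω ∂P = ∫ ω in t, Real.exp (γ * Y ω) * R ω ∂P := by
    intro t ht
    have ht0 : MeasurableSet t := hm₁ t ht
    rw [hINT _ t ht0, hINT _ t ht0]
    congr 1
    calc ∫ ω in t, Real.exp (c (X ω)) ∂(P[|s])
        = ∫ ω in t, ((P[|s])[fun ω => Real.exp (γ * Y ω)|ilrComap X]) ω ∂(P[|s]) :=
          integral_congr_ae (ae_restrict_of_ae hcver)
      _ = ∫ ω in t, Real.exp (γ * Y ω) ∂(P[|s]) := setIntegral_condExp hm₁ hIntY' ht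
  -- integrability of R and of the products under P
  have hRint : Integrable R P := by
    refine (integrable_const (1 : ℝ)).mono' hR.aestronglyMeasurable (ae_of_all _ fun ω => ?_)
    rcases hR01 ω with h | h <;> simp [h]
  have hN₁int : Integrable (fun ω => Real.exp (γ * Y ω) * R ω) P := hmulR_int _ hIntY'
  have hN₂int : Integrable (fun ω => Real.exp (c (X ω)) * R ω) P := hmulR_int _ hIntc'
  -- pull-out: conditional expectations given m₂
  have hYsm₂ : StronglyMeasurable[ilrComap (fun ω => (X ω, Y ω))] (fun ω => Real.exp (γ * Y ω)) :=
    (Real.measurable_exp.comp (hYm₂.const_mul γ)).stronglyMeasurable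
  have hcsm₂ : StronglyMeasurable[ilrComap (fun ω => (X ω, Y ω))] (fun ω => Real.exp (c (X ω))) :=
    (Real.measurable_exp.comp (hc.comp hXm₂)).stronglyMeasurable
  set F₁ : Ω → ℝ := fun ω => Real.exp (γ * Y ω) * piF ω with hF₁def
  set F₂ : Ω → ℝ := fun ω => Real.exp (c (X ω)) * piF ω with hF₂def
  have hF₁eq : P[fun ω => Real.exp (γ * Y ω) * R ω|ilrComap (fun ω => (X ω, Y ω))] =ᵐ[P] F₁ := by
    have h1 := condExp_mul_of_stronglyMeasurable_left hYsm₂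
      (by exact hN₁int) hRint
    refine h1.trans ?_
    filter_upwards [hmodel'] with ω hω
    simp only [Pi.mul_apply, hF₁def]
    rw [← hω]
  have hF₂eq : P[fun ω => Real.exp (c (X ω)) * R ω|ilrComap (fun ω => (X ω, Y ω))] =ᵐ[P] F₂ := by
    have h1 := condExp_mul_of_stronglyMeasurable_left hcsm₂
      (by exact hN₂int) hRint
    refine h1.trans ?_
    filter_upwards [hmodel'] with ω hω
    simp only [Pi.mul_apply, hF₂def]
    rw [← hω]
  have hF₁int : Integrable F₁ P := integrable_condExp.congr hF₁eq
  have hF₂int : Integrable F₂ P := integrable_condExp.congr hF₂eq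
  -- F₁ and F₂ have the same set integrals on m₁-sets
  have hSET : ∀ t : Set Ω, MeasurableSet[ilrComap X] t →
      ∫ ω in t, F₁ ω ∂P = ∫ ω in t, F₂ ω ∂P := by
    intro t ht
    have ht₂ : MeasurableSet[ilrComap (fun ω => (X ω, Y ω))] t := hm₁₂ t ht
    calc ∫ ω in t, F₁ ω ∂P
        = ∫ ω in t, (P[fun ω => Real.exp (γ * Y ω) * R ω|ilrComap (fun ω => (X ω, Y ω))]) ω ∂P :=
          integral_congr_ae (ae_restrict_of_ae hF₁eq.symm)
      _ = ∫ ω in t, Real.exp (γ * Y ω) * R ω ∂P := setIntegral_condExp hm₂ hN₁int ht₂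
      _ = ∫ ω in t, Real.exp (c (X ω)) * R ω ∂P := (hKEY t ht).symm
      _ = ∫ ω in t, (P[fun ω => Real.exp (c (X ω)) * R ω|ilrComap (fun ω => (X ω, Y ω))]) ω ∂P :=
          (setIntegral_condExp hm₂ hN₂int ht₂).symm
      _ = ∫ ω in t, F₂ ω ∂P := integral_congr_ae (ae_restrict_of_ae hF₂eq)
  -- hence equal conditional expectations given m₁
  have hCOND : P[F₁|ilrComap X] =ᵐ[P] P[F₂|ilrComap X] :=
    ae_eq_condExp_of_forall_setIntegral_eq hm₁ hF₂int
      (fun t _ _ => integrable_condExp.integrableOn)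
      (fun t ht _ => by rw [setIntegral_condExp hm₁ hF₁int ht]; exact hSET t ht)
      stronglyMeasurable_condExp.aestronglyMeasurable
  -- measurability of Φ ∘ X and Gf ∘ X with respect to m₁
  have hΦm₁ : StronglyMeasurable[ilrComap X] (fun ω => Φ (X ω)) :=
    (hΦ.comp hXm₁).stronglyMeasurable
  have hGfm₁ : StronglyMeasurable[ilrComap X] (fun ω => Gf (X ω)) :=
    (hGf.comp hXm₁).stronglyMeasurable
  -- bounds on the weighted products
  have hGf_nonneg : ∀ x, 0 ≤ Gf x := fun x => by positivity
  have hGf_le_one : ∀ x, Gf x ≤ 1 := fun x => by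
    apply inv_le_one_of_one_le₀
    nlinarith [Real.exp_pos (S x + c x)]
  have hW₁ : ∀ ω, Φ (X ω) * F₁ ω
      = Gf (X ω) * (Real.exp (S (X ω) + γ * Y ω) * (1 + Real.exp (S (X ω) + γ * Y ω))⁻¹) := by
    intro ω
    simp only [hΦdef, hF₁def, hpiFdef, Real.exp_add]
    ring
  have hW₂ : ∀ ω, Φ (X ω) * F₂ ω
      = (Real.exp (S (X ω) + c (X ω)) * Gf (X ω)) * piF ω := by
    intro ω
    simp only [hΦdef, hF₂def, Real.exp_add]
    ring
  have hratio : ∀ u : ℝ, Real.exp u * (1 + Real.exp u)⁻¹ ≤ 1 := by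
    intro u
    rw [← div_eq_mul_inv]
    exact div_le_one_of_le₀ (by nlinarith [Real.exp_pos u]) (by positivity)
  have hW₁bd : ∀ ω, ‖Φ (X ω) * F₁ ω‖ ≤ 1 := by
    intro ω
    rw [hW₁ ω, Real.norm_eq_abs, abs_of_nonneg (by positivity)]
    exact mul_le_one₀ (hGf_le_one _) (by positivity) (hratio _)
  have hW₂bd : ∀ ω, ‖Φ (X ω) * F₂ ω‖ ≤ 1 := by
    intro ω
    rw [hW₂ ω, Real.norm_eq_abs, abs_of_nonneg (by positivity)]
    have h1 : Real.exp (S (X ω) + c (X ω)) * Gf (X ω) ≤ 1 := by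
      have := hratio (S (X ω) + c (X ω))
      simp only [hGfdef]
      linarith [this]
    exact mul_le_one₀ h1 (hpiF_nonneg ω) (hpiF_le_one ω)
  have hF₁meas : Measurable F₁ :=
    (Real.measurable_exp.comp (hY.const_mul γ)).mul hpiFmeas
  have hF₂meas : Measurable F₂ :=
    (Real.measurable_exp.comp (hc.comp hX)).mul hpiFmeas
  have hW₁int : Integrable (fun ω => Φ (X ω) * F₁ ω) P :=
    (integrable_const (1 : ℝ)).mono' (((hΦ.comp hX).mul hF₁meas).aestronglyMeasurable)
      (ae_of_all _ hW₁bd)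
  have hW₂int : Integrable (fun ω => Φ (X ω) * F₂ ω) P :=
    (integrable_const (1 : ℝ)).mono' (((hΦ.comp hX).mul hF₂meas).aestronglyMeasurable)
      (ae_of_all _ hW₂bd)
  -- weighted set-integral equality
  have hW : ∀ t : Set Ω, MeasurableSet[ilrComap X] t →
      ∫ ω in t, Φ (X ω) * F₁ ω ∂P = ∫ ω in t, Φ (X ω) * F₂ ω ∂P := by
    intro t ht
    have ht0 : MeasurableSet t := hm₁ t ht
    set u : Ω → ℝ := t.indicator (fun ω => Φ (X ω)) with hudef
    have husm : StronglyMeasurable[ilrComap X] u := hΦm₁.indicator ht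
    have huF₁eq : (u * F₁) = t.indicator (fun ω => Φ (X ω) * F₁ ω) := by
      funext ω
      by_cases hω : ω ∈ t <;> simp [hudef, hω, Set.indicator_of_mem, Set.indicator_of_notMem]
    have huF₂eq : (u * F₂) = t.indicator (fun ω => Φ (X ω) * F₂ ω) := by
      funext ω
      by_cases hω : ω ∈ t <;> simp [hudef, hω, Set.indicator_of_mem, Set.indicator_of_notMem]
    have huF₁int : Integrable (u * F₁) P := by
      rw [huF₁eq]
      exact hW₁int.indicator ht0
    have huF₂int : Integrable (u * F₂) P := by
      rw [huF₂eq]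
      exact hW₂int.indicator ht0
    have hpull₁ := condExp_mul_of_stronglyMeasurable_left husm huF₁int hF₁int
    have hpull₂ := condExp_mul_of_stronglyMeasurable_left husm huF₂int hF₂int
    calc ∫ ω in t, Φ (X ω) * F₁ ω ∂P
        = ∫ ω, (u * F₁) ω ∂P := by rw [huF₁eq, integral_indicator ht0]
      _ = ∫ ω, (P[u * F₁|ilrComap X]) ω ∂P := (integral_condExp hm₁).symm
      _ = ∫ ω, (u * P[F₁|ilrComap X]) ω ∂P := integral_congr_ae hpull₁
      _ = ∫ ω, (u * P[F₂|ilrComap X]) ω ∂P := by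
          refine integral_congr_ae ?_
          filter_upwards [hCOND] with ω hω
          simp only [Pi.mul_apply, hω]
      _ = ∫ ω, (P[u * F₂|ilrComap X]) ω ∂P := (integral_congr_ae hpull₂).symm
      _ = ∫ ω, (u * F₂) ω ∂P := integral_condExp hm₁
      _ = ∫ ω in t, Φ (X ω) * F₂ ω ∂P := by rw [huF₂eq, integral_indicator ht0]
  -- pointwise identity
  have hptw : ∀ ω, Gf (X ω) - piF ω = Φ (X ω) * F₁ ω - Φ (X ω) * F₂ ω := by
    intro ω
    rw [hW₁ ω, hW₂ ω]
    have key := induced_logistic_aux_alg (Real.exp (S (X ω))) (Real.exp (γ * Y ω))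
      (Real.exp (c (X ω))) (Real.exp_pos _) (Real.exp_pos _) (Real.exp_pos _)
    simp only [hGfdef, hpiFdef, Real.exp_add] at *
    nlinarith [key]
  -- integrability of piF and Gf ∘ X
  have hpiFint : Integrable piF P := by
    refine (integrable_const (1 : ℝ)).mono' hpiFmeas.aestronglyMeasurable
      (ae_of_all _ fun ω => ?_)
    rw [Real.norm_eq_abs, abs_of_nonneg (hpiF_nonneg ω)]
    exact hpiF_le_one ω
  have hGfint : Integrable (fun ω => Gf (X ω)) P := by
    refine (integrable_const (1 : ℝ)).mono' (hGf.comp hX).aestronglyMeasurable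
      (ae_of_all _ fun ω => ?_)
    rw [Real.norm_eq_abs, abs_of_nonneg (hGf_nonneg _)]
    exact hGf_le_one _
  -- final application
  refine ae_eq_condExp_of_forall_setIntegral_eq hm₁ hRint
    (fun t _ _ => hGfint.integrableOn)
    (fun t ht _ => ?_)
    hGfm₁.aestronglyMeasurable
  have ht0 : MeasurableSet t := hm₁ t ht
  have hπR : ∫ ω in t, piF ω ∂P = ∫ ω in t, R ω ∂P := by
    calc ∫ ω in t, piF ω ∂P
        = ∫ ω in t, (P[R|ilrComap (fun ω => (X ω, Y ω))]) ω ∂P := integral_congr_ae (ae_restrict_of_ae hmodel')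
      _ = ∫ ω in t, R ω ∂P := setIntegral_condExp hm₂ hRint (hm₁₂ t ht)
  have hdiff : ∫ ω in t, (Gf (X ω) - piF ω) ∂P = 0 := by
    have h1 : ∫ ω in t, (Gf (X ω) - piF ω) ∂P
        = ∫ ω in t, (Φ (X ω) * F₁ ω - Φ (X ω) * F₂ ω) ∂P := by
      apply integral_congr_ae
      exact ae_of_all _ fun ω => hptw ω
    rw [h1, integral_sub hW₁int.integrableOn hW₂int.integrableOn, hW t ht, sub_self]
  have hsplit : ∫ ω in t, (Gf (X ω) - piF ω) ∂P
      = ∫ ω in t, Gf (X ω) ∂P - ∫ ω in t, piF ω ∂P :=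
    integral_sub hGfint.integrableOn hpiFint.integrableOn
  rw [hsplit] at hdiff
  linarith [hπR, hdiff]
end

section
/- (Identifiability criterion.) Assume that no nontrivial affine function of x₁ vanishes ν-almost everywhere (i.e., if a + b·x₁ = 0 for ν-a.e. x with a ∈ ℝ, b ∈ ℝ^{d₁}, then a = 0 and b = 0). Then the map θ = (α, β, γ) ↦ φ_θ, from ℝ × ℝ^{d₁} × ℝ to ν-a.e.-equivalence classes of functions on ℝ^d, is injective if and only if μ is not ν-a.e. equal to an affine function of x₁ (i.e., there is no (a, b) ∈ ℝ × ℝ^{d₁} with μ(x) = a + b·x₁ for ν-a.e. x). -/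
open MeasureTheory

/-- (Identifiability criterion.) If no nontrivial affine function of `x₁` vanishes
ν-almost everywhere, then `θ = (α, β, γ) ↦ φ_θ = α + β·x₁ + γ·μ(x)` is injective modulo
ν-null sets if and only if `μ` is not ν-a.e. equal to an affine function of `x₁`. -/
theorem identifiability_criterion
    {d d₁ : ℕ} (ν : Measure (Fin d → ℝ)) [IsProbabilityMeasure ν]
    (proj : (Fin d → ℝ) →ₗ[ℝ] (Fin d₁ → ℝ))
    (μreg : (Fin d → ℝ) → ℝ) (hμ : Measurable μreg)
    (hnd : ∀ (a : ℝ) (b : Fin d₁ → ℝ),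
      (∀ᵐ x ∂ν, a + ∑ i, b i * proj x i = 0) → a = 0 ∧ b = 0) :
    (∀ θ θ' : ℝ × (Fin d₁ → ℝ) × ℝ,
        (∀ᵐ x ∂ν, θ.1 + (∑ i, θ.2.1 i * proj x i) + θ.2.2 * μreg x
            = θ'.1 + (∑ i, θ'.2.1 i * proj x i) + θ'.2.2 * μreg x) → θ = θ')
      ↔ ¬ ∃ (a : ℝ) (b : Fin d₁ → ℝ),
            ∀ᵐ x ∂ν, μreg x = a + ∑ i, b i * proj x i := by
  constructor
  · rintro hinj ⟨a, b, hab⟩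
    have h : ((a, b, (0:ℝ)) : ℝ × (Fin d₁ → ℝ) × ℝ) = (0, 0, 1) := by
      apply hinj
      filter_upwards [hab] with x hx
      simp [hx]
    simp at h
  · intro hna θ θ' heq
    set α := θ.1 - θ'.1
    set β := θ.2.1 - θ'.2.1
    set γ := θ.2.2 - θ'.2.2
    have key : ∀ᵐ x ∂ν, α + (∑ i, β i * proj x i) + γ * μreg x = 0 := by
      filter_upwards [heq] with x hx
      have : ∑ i, β i * proj x i = ∑ i, θ.2.1 i * proj x i - ∑ i, θ'.2.1 i * proj x i := by
        rw [← Finset.sum_sub_distrib]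
        exact Finset.sum_congr rfl fun i _ => by simp [β, sub_mul]
      simp [α, γ, this, sub_mul]
      linarith
    have hγ : γ = 0 := by
      by_contra hγ
      apply hna
      refine ⟨-α / γ, fun i => -β i / γ, ?_⟩
      filter_upwards [key] with x hx
      have h2 : ∑ i, -β i / γ * proj x i = (-∑ i, β i * proj x i) / γ := by
        rw [← Finset.sum_neg_distrib, Finset.sum_div]
        exact Finset.sum_congr rfl fun i _ => by ring
      rw [h2, ← add_div, eq_div_iff hγ]
      linear_combination hx
    have key2 : ∀ᵐ x ∂ν, α + ∑ i, β i * proj x i = 0 := by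
      filter_upwards [key] with x hx
      rw [hγ] at hx; linarith
    obtain ⟨hα, hβ⟩ := hnd α β key2
    have h1 : θ.1 = θ'.1 := by simpa [α, sub_eq_zero] using hα
    have h2 : θ.2.1 = θ'.2.1 := by
      funext i
      have := congrFun hβ i
      simpa [β, sub_eq_zero] using this
    have h3 : θ.2.2 = θ'.2.2 := by simpa [γ, sub_eq_zero] using hγ
    exact Prod.ext h1 (Prod.ext h2 h3)
end

section
/- (Identifiability with an instrumental variable.) Write x = (x₁, x₂) with x₂ nonempty, and suppose μ(x) = a + b₁·x₁ + b₂·x₂ is affine in the full covariate x with b₂ ≠ 0. If no nontrivial affine function of the full covariate x vanishes ν-almost everywhere (i.e., c + u·x = 0 for ν-a.e. x implies c = 0 and u = 0), then the map θ = (α, β, γ) ↦ φ_θ is injective modulo ν-null sets, i.e., θ is identifiable. -/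
open MeasureTheory

/-- (Identifiability with an instrumental variable.) Write `x = (x₁, x₂)` with `x₂`
nonempty, and suppose `μ(x) = a + b₁·x₁ + b₂·x₂` is affine in the full covariate with
`b₂ ≠ 0`. If no nontrivial affine function of the full covariate vanishes ν-a.e., then
`θ = (α, β, γ) ↦ φ_θ` is injective modulo ν-null sets, i.e. `θ` is identifiable. -/
theorem identifiability_with_instrument
    {d₁ d₂ : ℕ} (hd₂ : 0 < d₂)
    (ν : Measure ((Fin d₁ → ℝ) × (Fin d₂ → ℝ))) [IsProbabilityMeasure ν]
    (a : ℝ) (b₁ : Fin d₁ → ℝ) (b₂ : Fin d₂ → ℝ) (hb₂ : b₂ ≠ 0)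
    (μreg : (Fin d₁ → ℝ) × (Fin d₂ → ℝ) → ℝ)
    (hμ : ∀ x, μreg x = a + (∑ i, b₁ i * x.1 i) + ∑ j, b₂ j * x.2 j)
    (hnd : ∀ (c : ℝ) (u₁ : Fin d₁ → ℝ) (u₂ : Fin d₂ → ℝ),
      (∀ᵐ x ∂ν, c + (∑ i, u₁ i * x.1 i) + ∑ j, u₂ j * x.2 j = 0) →
      c = 0 ∧ u₁ = 0 ∧ u₂ = 0) :
    ∀ θ θ' : ℝ × (Fin d₁ → ℝ) × ℝ,
      (∀ᵐ x ∂ν, θ.1 + (∑ i, θ.2.1 i * x.1 i) + θ.2.2 * μreg x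
          = θ'.1 + (∑ i, θ'.2.1 i * x.1 i) + θ'.2.2 * μreg x) → θ = θ' := by
  rintro ⟨α, β, γ⟩ ⟨α', β', γ'⟩ h
  have key := hnd (α - α' + (γ - γ') * a) (fun i => β i - β' i + (γ - γ') * b₁ i)
    (fun j => (γ - γ') * b₂ j) ?_
  · obtain ⟨hc, hu₁, hu₂⟩ := key
    have hγ : γ = γ' := by
      by_contra hne
      apply hb₂
      funext j
      have := congrFun hu₂ j
      simp only [Pi.zero_apply] at this ⊢
      have hγγ : γ - γ' ≠ 0 := sub_ne_zero.mpr hne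
      exact (mul_eq_zero.mp this).resolve_left hγγ
    have hβ : β = β' := by
      funext i
      have := congrFun hu₁ i
      simp only [Pi.zero_apply, hγ, sub_self, zero_mul, add_zero] at this
      linarith
    have hα : α = α' := by
      rw [hγ] at hc; simp at hc; linarith
    simp [hα, hβ, hγ]
  · filter_upwards [h] with x hx
    simp only [hμ] at hx
    have e₁ : ∑ i, (β i - β' i + (γ - γ') * b₁ i) * x.1 i
        = (∑ i, β i * x.1 i) - (∑ i, β' i * x.1 i) + (γ - γ') * ∑ i, b₁ i * x.1 i := by
      rw [Finset.mul_sum, ← Finset.sum_sub_distrib, ← Finset.sum_add_distrib]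
      congr 1; funext i; ring
    have e₂ : ∑ j, (γ - γ') * b₂ j * x.2 j = (γ - γ') * ∑ j, b₂ j * x.2 j := by
      rw [Finset.mul_sum]
      congr 1; funext j; ring
    rw [e₁, e₂]
    ring_nf
    ring_nf at hx
    linarith
end

section
/- Under the logistic missingness model and the location-scale outcome model, if M₁(γ) < ∞, M₂(γ) is finite, and Y is integrable under P(· | R = 0), then E[Y | R = 0] = E[μ(X)·exp(α₁ + β·X₁ + γ·μ(X)) | R = 1] · M₁(γ) + E[exp(α₁ + β·X₁ + γ·μ(X)) | R = 1] · M₂(γ). -/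
open MeasureTheory ProbabilityTheory

lemma bdd_integral_mul_condexp {Ω : Type*} {m m0 : MeasurableSpace Ω} (hm : m ≤ m0)
    (P : Measure Ω) [IsProbabilityMeasure P]
    {g r : Ω → ℝ} (hg : Measurable[m] g) {c : ℝ} (hgb : ∀ ω, ‖g ω‖ ≤ c)
    (hr : Measurable r) {cr : ℝ} (hrb : ∀ ω, ‖r ω‖ ≤ cr) :
    ∫ ω, g ω * r ω ∂P = ∫ ω, g ω * (P[r|m]) ω ∂P := by
  have hgm0 : Measurable g := hg.mono hm le_rfl
  have hrint : Integrable r P :=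
    ⟨hr.aestronglyMeasurable, HasFiniteIntegral.of_bounded (ae_of_all _ hrb)⟩
  have hgr : Integrable (g * r) P := by
    refine ⟨(hgm0.mul hr).aestronglyMeasurable,
      HasFiniteIntegral.of_bounded (C := c * cr) (ae_of_all _ fun ω => ?_)⟩
    rw [Pi.mul_apply, norm_mul]
    exact mul_le_mul (hgb ω) (hrb ω) (norm_nonneg _) ((norm_nonneg (g ω)).trans (hgb ω))
  have hpull := condExp_mul_of_stronglyMeasurable_left (μ := P) hg.stronglyMeasurable hgr hrint
  calc ∫ ω, g ω * r ω ∂P = ∫ ω, (P[g * r|m]) ω ∂P := (integral_condExp hm).symm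
    _ = ∫ ω, g ω * (P[r|m]) ω ∂P := integral_congr_ae (hpull.mono fun ω h => h)

lemma lintegral_mul_condexp {Ω : Type*} {m m0 : MeasurableSpace Ω} (hm : m ≤ m0)
    (P : Measure Ω) [IsProbabilityMeasure P]
    {g r κ : Ω → ℝ} (hg : Measurable[m] g) (hg0 : ∀ ω, 0 ≤ g ω)
    (hr : Measurable r) (hr0 : ∀ ω, 0 ≤ r ω) (hr1 : ∀ ω, r ω ≤ 1)
    (hκ : Measurable[m] κ) (hκ0 : ∀ ω, 0 ≤ κ ω) (hκ1 : ∀ ω, κ ω ≤ 1)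
    (hcond : κ =ᵐ[P] P[r|m]) :
    ∫⁻ ω, ENNReal.ofReal (g ω * r ω) ∂P = ∫⁻ ω, ENNReal.ofReal (g ω * κ ω) ∂P := by
  have hgm0 : Measurable g := hg.mono hm le_rfl
  have hκm0 : Measurable κ := hκ.mono hm le_rfl
  set gn : ℕ → Ω → ℝ := fun n ω => min (g ω) n with hgn
  have hgnm : ∀ n, Measurable[m] (gn n) := fun n => hg.min measurable_const
  have hgn0 : ∀ n ω, 0 ≤ gn n ω := fun n ω => le_min (hg0 ω) (Nat.cast_nonneg n)
  have hgnb : ∀ n ω, ‖gn n ω‖ ≤ (n : ℝ) := fun n ω => by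
    rw [Real.norm_eq_abs, abs_of_nonneg (hgn0 n ω)]; exact min_le_right _ _
  -- bounded integral equalities
  have key : ∀ n : ℕ, ∫ ω, gn n ω * r ω ∂P = ∫ ω, gn n ω * κ ω ∂P := by
    intro n
    have h1 := bdd_integral_mul_condexp hm P (hgnm n) (hgnb n) hr
      (cr := 1) (fun ω => by rw [Real.norm_eq_abs, abs_of_nonneg (hr0 ω)]; exact hr1 ω)
    rw [h1]
    refine integral_congr_ae (hcond.mono fun ω h => ?_)
    show gn n ω * (P[r|m]) ω = gn n ω * κ ω
    rw [h]
  -- sup identity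
  have hsup : ∀ (h : Ω → ℝ), (∀ ω, 0 ≤ h ω) → ∀ ω,
      (⨆ n : ℕ, ENNReal.ofReal (gn n ω * h ω)) = ENNReal.ofReal (g ω * h ω) := by
    intro h h0 ω
    refine le_antisymm (iSup_le fun n => ENNReal.ofReal_le_ofReal
      (mul_le_mul_of_nonneg_right (min_le_left _ _) (h0 ω))) ?_
    obtain ⟨n, hn⟩ := exists_nat_ge (g ω)
    refine le_iSup_of_le n ?_
    have : gn n ω = g ω := min_eq_left hn
    rw [this]
  have hmono : ∀ (h : Ω → ℝ), (∀ ω, 0 ≤ h ω) →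
      Monotone fun n : ℕ => fun ω => ENNReal.ofReal (gn n ω * h ω) := by
    intro h h0 n k hnk ω
    exact ENNReal.ofReal_le_ofReal (mul_le_mul_of_nonneg_right
      (min_le_min le_rfl (Nat.cast_le.mpr hnk)) (h0 ω))
  have hint : ∀ n (h : Ω → ℝ), Measurable h → (∀ ω, 0 ≤ h ω) → (∀ ω, h ω ≤ 1) →
      ∫⁻ ω, ENNReal.ofReal (gn n ω * h ω) ∂P = ENNReal.ofReal (∫ ω, gn n ω * h ω ∂P) := by
    intro n h hmeas h0 h1
    refine (ofReal_integral_eq_lintegral_ofReal ?_ (ae_of_all _ fun ω =>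
      mul_nonneg (hgn0 n ω) (h0 ω))).symm
    refine ⟨(((hgnm n).mono hm le_rfl).mul hmeas).aestronglyMeasurable,
      HasFiniteIntegral.of_bounded (C := (n : ℝ)) (ae_of_all _ fun ω => ?_)⟩
    rw [Real.norm_eq_abs, abs_of_nonneg (mul_nonneg (hgn0 n ω) (h0 ω))]
    calc gn n ω * h ω ≤ gn n ω * 1 := mul_le_mul_of_nonneg_left (h1 ω) (hgn0 n ω)
      _ ≤ (n : ℝ) := by rw [mul_one]; exact min_le_right _ _
  calc ∫⁻ ω, ENNReal.ofReal (g ω * r ω) ∂P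
      = ∫⁻ ω, ⨆ n : ℕ, ENNReal.ofReal (gn n ω * r ω) ∂P := by
        refine lintegral_congr fun ω => (hsup r hr0 ω).symm
    _ = ⨆ n : ℕ, ∫⁻ ω, ENNReal.ofReal (gn n ω * r ω) ∂P :=
        lintegral_iSup (fun n => ENNReal.measurable_ofReal.comp
          ((((hgnm n).mono hm le_rfl)).mul hr)) (hmono r hr0)
    _ = ⨆ n : ℕ, ∫⁻ ω, ENNReal.ofReal (gn n ω * κ ω) ∂P := by
        refine iSup_congr fun n => ?_
        rw [hint n r hr hr0 hr1, hint n κ hκm0 hκ0 hκ1, key n]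
    _ = ∫⁻ ω, ⨆ n : ℕ, ENNReal.ofReal (gn n ω * κ ω) ∂P :=
        (lintegral_iSup (fun n => ENNReal.measurable_ofReal.comp
          ((((hgnm n).mono hm le_rfl)).mul hκm0)) (hmono κ hκ0)).symm
    _ = ∫⁻ ω, ENNReal.ofReal (g ω * κ ω) ∂P := lintegral_congr fun ω => hsup κ hκ0 ω
lemma cmmo_aux {Ω : Type*} {m m0 : MeasurableSpace Ω} (hm : m ≤ m0)
    (P : Measure Ω) [IsProbabilityMeasure P]
    {d d₁ : ℕ}
    (X : Ω → (Fin d → ℝ)) (Y : Ω → ℝ) (R : Ω → ℝ)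
    (hXm : Measurable[m] X) (hYm : Measurable[m] Y) (hR : Measurable R)
    (hR01 : ∀ ω, R ω = 0 ∨ R ω = 1)
    (proj : (Fin d → ℝ) →ₗ[ℝ] (Fin d₁ → ℝ))
    (α₀ : ℝ) (β : Fin d₁ → ℝ) (γ : ℝ)
    (hmodel : (fun ω => (1 + Real.exp (α₀ + ∑ i, β i * proj (X ω) i + γ * Y ω))⁻¹)
      =ᵐ[P] P[R | m])
    (η : ℝ) (hη : η = (P {ω | R ω = 1}).toReal) (hη0 : 0 < η) (hη1 : η < 1)
    (α₁ : ℝ) (hα₁ : α₁ = α₀ + Real.log (η / (1 - η)))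
    (μreg : (Fin d → ℝ) → ℝ) (hμ : Measurable μreg)
    (hindep : IndepFun (fun ω => Y ω - μreg (X ω)) X (P[|{ω | R ω = 1}]))
    (hM1 : Integrable (fun ω => Real.exp (γ * (Y ω - μreg (X ω)))) (P[|{ω | R ω = 1}]))
    (M₁γ : ℝ)
    (hM₁γ : M₁γ = ∫ ω, Real.exp (γ * (Y ω - μreg (X ω))) ∂(P[|{ω | R ω = 1}]))
    (hM2 : Integrable (fun ω => (Y ω - μreg (X ω)) * Real.exp (γ * (Y ω - μreg (X ω))))
      (P[|{ω | R ω = 1}]))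
    (M₂γ : ℝ)
    (hM₂γ : M₂γ = ∫ ω, (Y ω - μreg (X ω)) * Real.exp (γ * (Y ω - μreg (X ω)))
      ∂(P[|{ω | R ω = 1}]))
    (hYint : Integrable Y (P[|{ω | R ω = 0}])) :
    ∫ ω, Y ω ∂(P[|{ω | R ω = 0}])
      = (∫ ω, μreg (X ω) * Real.exp (α₁ + ∑ i, β i * proj (X ω) i + γ * μreg (X ω))
            ∂(P[|{ω | R ω = 1}])) * M₁γ
        + (∫ ω, Real.exp (α₁ + ∑ i, β i * proj (X ω) i + γ * μreg (X ω))
            ∂(P[|{ω | R ω = 1}])) * M₂γ := by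
  have hX : Measurable X := hXm.mono hm le_rfl
  have hY : Measurable Y := hYm.mono hm le_rfl
  have hprojm : Measurable fun x : Fin d → ℝ => proj x :=
    proj.continuous_of_finiteDimensional.measurable
  have hsXm : Measurable[m] fun ω => ∑ i, β i * proj (X ω) i :=
    Finset.measurable_sum _ fun i _ =>
      measurable_const.mul ((measurable_pi_apply i).comp (hprojm.comp hXm))
  -- the sets
  have hs1 : MeasurableSet {ω | R ω = 1} := hR (measurableSet_singleton 1)
  have hs0 : MeasurableSet {ω | R ω = 0} := hR (measurableSet_singleton 0)
  have hs0c : {ω | R ω = 0} = {ω | R ω = 1}ᶜ := by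
    ext ω
    simp only [Set.mem_setOf_eq, Set.mem_compl_iff]
    constructor
    · intro h h1; rw [h] at h1; norm_num at h1
    · intro h; rcases hR01 ω with h0 | h1
      · exact h0
      · exact absurd h1 h
  have hPs1 : P {ω | R ω = 1} = ENNReal.ofReal η := by
    rw [hη, ENNReal.ofReal_toReal (measure_ne_top P _)]
  have hPs0 : P {ω | R ω = 0} = ENNReal.ofReal (1 - η) := by
    rw [hs0c, prob_compl_eq_one_sub hs1, hPs1, ← ENNReal.ofReal_one,
      ← ENNReal.ofReal_sub _ hη0.le]
  have hPs1ne0 : P {ω | R ω = 1} ≠ 0 := by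
    rw [hPs1]; simp only [ne_eq, ENNReal.ofReal_eq_zero, not_le]; linarith
  have hPs0ne0 : P {ω | R ω = 0} ≠ 0 := by
    rw [hPs0]; simp only [ne_eq, ENNReal.ofReal_eq_zero, not_le]; linarith
  haveI hP1prob : IsProbabilityMeasure (P[|{ω | R ω = 1}]) := cond_isProbabilityMeasure hPs1ne0
  haveI hP0prob : IsProbabilityMeasure (P[|{ω | R ω = 0}]) := cond_isProbabilityMeasure hPs0ne0
  -- exponentials and the propensity function
  set e : Ω → ℝ := fun ω => Real.exp (α₀ + ∑ i, β i * proj (X ω) i + γ * Y ω) with he_def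
  set e₁ : Ω → ℝ := fun ω => Real.exp (α₁ + ∑ i, β i * proj (X ω) i + γ * Y ω) with he1_def
  set k : Ω → ℝ := fun ω => (1 + e ω)⁻¹ with hk_def
  have hem : Measurable[m] e := Real.measurable_exp.comp
    ((measurable_const.add hsXm).add (measurable_const.mul hYm))
  have he1m : Measurable[m] e₁ := Real.measurable_exp.comp
    ((measurable_const.add hsXm).add (measurable_const.mul hYm))
  have hkm : Measurable[m] k := (measurable_const.add hem).inv
  have hepos : ∀ ω, 0 < e ω := fun ω => Real.exp_pos _
  have he1pos : ∀ ω, 0 < e₁ ω := fun ω => Real.exp_pos _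
  have hk0 : ∀ ω, 0 ≤ k ω := fun ω => by have := hepos ω; positivity
  have hk1 : ∀ ω, k ω ≤ 1 := fun ω => by
    have h := hepos ω
    rw [hk_def]
    have h2 : (1:ℝ) ≤ 1 + e ω := by linarith
    simpa using inv_anti₀ one_pos h2
  have hRint : Integrable R P := ⟨hR.aestronglyMeasurable,
    HasFiniteIntegral.of_bounded (C := 1) (ae_of_all _ fun ω => by
      rcases hR01 ω with h | h <;> simp [h])⟩
  have hRnn : ∀ ω, 0 ≤ R ω := fun ω => by rcases hR01 ω with h | h <;> rw [h] <;> norm_num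
  have hRle : ∀ ω, R ω ≤ 1 := fun ω => by rcases hR01 ω with h | h <;> rw [h] <;> norm_num
  have hkR : k =ᵐ[P] P[R | m] := hmodel
  have hcond1 : (fun ω => 1 - k ω) =ᵐ[P] P[(fun ω => 1 - R ω) | m] := by
    have h3 : (fun ω => 1 - R ω) = (fun _ => (1:ℝ)) - R := rfl
    have h1 : P[(fun _ => (1:ℝ)) - R|m] =ᵐ[P] P[(fun _ => (1:ℝ))|m] - P[R|m] :=
      condExp_sub (integrable_const 1) hRint m
    have h2 : P[(fun _ => (1:ℝ))|m] = fun _ => (1:ℝ) := condExp_const hm 1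
    rw [h3]
    filter_upwards [h1, hkR] with ω hω hkω
    rw [hω]
    simp only [Pi.sub_apply, h2]
    rw [← hkω]
  have h1k : ∀ ω, 1 - k ω = e ω * k ω := by
    intro ω
    have h : (1:ℝ) + e ω ≠ 0 := by have := hepos ω; positivity
    rw [hk_def]
    field_simp
    ring
  have hcondM : ∀ s : Set Ω, P[|s] = (P s)⁻¹ • P.restrict s := fun s => rfl
  -- change of measure
  have CoM : ∀ g : Ω → ℝ, Measurable[m] g → (∀ ω, 0 ≤ g ω) →
      ∫⁻ ω, ENNReal.ofReal (g ω) ∂(P[|{ω | R ω = 0}])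
        = ∫⁻ ω, ENNReal.ofReal (g ω * e₁ ω) ∂(P[|{ω | R ω = 1}]) := by
    intro g hgm hg0
    have hgm0 : Measurable g := hgm.mono hm le_rfl
    have stepA : ∫⁻ ω in {ω | R ω = 0}, ENNReal.ofReal (g ω) ∂P
        = ∫⁻ ω, ENNReal.ofReal (g ω * (1 - R ω)) ∂P := by
      rw [← lintegral_indicator hs0]
      refine lintegral_congr fun ω => ?_
      rcases hR01 ω with h | h
      · simp [Set.indicator_apply, Set.mem_setOf_eq, h]
      · simp [Set.indicator_apply, Set.mem_setOf_eq, h]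
    have stepA1 : ∫⁻ ω, ENNReal.ofReal (g ω * (1 - R ω)) ∂P
        = ∫⁻ ω, ENNReal.ofReal (g ω * (1 - k ω)) ∂P :=
      lintegral_mul_condexp hm P hgm hg0 (measurable_const.sub hR)
        (fun ω => by have := hRle ω; linarith) (fun ω => by have := hRnn ω; linarith)
        (measurable_const.sub hkm) (fun ω => by have := hk1 ω; linarith)
        (fun ω => by have := hk0 ω; linarith) hcond1
    have stepB : ∫⁻ ω, ENNReal.ofReal (g ω * (1 - k ω)) ∂P
        = ∫⁻ ω, ENNReal.ofReal ((g ω * e ω) * k ω) ∂P := by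
      refine lintegral_congr fun ω => ?_
      rw [h1k ω]
      ring_nf
    have stepC : ∫⁻ ω, ENNReal.ofReal ((g ω * e ω) * k ω) ∂P
        = ∫⁻ ω, ENNReal.ofReal ((g ω * e ω) * R ω) ∂P :=
      (lintegral_mul_condexp hm P (hgm.mul hem) (fun ω => mul_nonneg (hg0 ω) (hepos ω).le)
        hR hRnn hRle hkm hk0 hk1 hkR).symm
    have stepD : ∫⁻ ω, ENNReal.ofReal ((g ω * e ω) * R ω) ∂P
        = ∫⁻ ω in {ω | R ω = 1}, ENNReal.ofReal (g ω * e ω) ∂P := by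
      rw [← lintegral_indicator hs1]
      refine lintegral_congr fun ω => ?_
      rcases hR01 ω with h | h
      · simp [Set.indicator_apply, Set.mem_setOf_eq, h]
      · simp [Set.indicator_apply, Set.mem_setOf_eq, h]
    have hc : (0:ℝ) < η / (1 - η) := div_pos hη0 (by linarith)
    have he1e : ∀ ω, e₁ ω = (η / (1 - η)) * e ω := by
      intro ω
      rw [he1_def, he_def, hα₁]
      simp only []
      rw [show α₀ + Real.log (η / (1 - η)) + (∑ i, β i * proj (X ω) i) + γ * Y ω
          = (α₀ + (∑ i, β i * proj (X ω) i) + γ * Y ω) + Real.log (η / (1 - η)) by ring,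
        Real.exp_add, Real.exp_log hc]
      ring
    have hre : ∫⁻ ω in {ω | R ω = 1}, ENNReal.ofReal (g ω * e₁ ω) ∂P
        = ENNReal.ofReal (η / (1 - η))
            * ∫⁻ ω in {ω | R ω = 1}, ENNReal.ofReal (g ω * e ω) ∂P := by
      rw [← lintegral_const_mul _ (f := fun ω => ENNReal.ofReal (g ω * e ω)) (hgm0.mul (hem.mono hm le_rfl)).ennreal_ofReal]
      refine lintegral_congr fun ω => ?_
      rw [he1e ω, ← ENNReal.ofReal_mul hc.le]
      ring_nf
    rw [hcondM, hcondM, lintegral_smul_measure, lintegral_smul_measure,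
      stepA, stepA1, stepB, stepC, stepD, hre, hPs0, hPs1, smul_eq_mul, smul_eq_mul, ← mul_assoc]
    congr 1
    rw [ENNReal.ofReal_div_of_pos (by linarith), div_eq_mul_inv, ← mul_assoc,
      ENNReal.inv_mul_cancel (by simp only [ne_eq, ENNReal.ofReal_eq_zero, not_le]; linarith)
        ENNReal.ofReal_ne_top, one_mul]
  -- helpers for ofReal / max
  have hmax1 : ∀ x : ℝ, ENNReal.ofReal (max x 0) = ENNReal.ofReal x := by
    intro x
    rcases le_total x 0 with hx | hx
    · rw [max_eq_right hx, ENNReal.ofReal_zero, ENNReal.ofReal_of_nonpos hx]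
    · rw [max_eq_left hx]
  have hmax2 : ∀ x y : ℝ, 0 < y → ENNReal.ofReal (max x 0 * y) = ENNReal.ofReal (x * y) := by
    intro x y hy
    rcases le_total x 0 with hx | hx
    · rw [max_eq_right hx, zero_mul, ENNReal.ofReal_zero,
        ENNReal.ofReal_of_nonpos (mul_nonpos_of_nonpos_of_nonneg hx hy.le)]
    · rw [max_eq_left hx]
  -- Bochner transfer
  have BT : ∀ h : Ω → ℝ, Measurable[m] h → Integrable h (P[|{ω | R ω = 0}]) →
      Integrable (fun ω => h ω * e₁ ω) (P[|{ω | R ω = 1}]) ∧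
        ∫ ω, h ω ∂(P[|{ω | R ω = 0}]) = ∫ ω, h ω * e₁ ω ∂(P[|{ω | R ω = 1}]) := by
    intro h hhm hhint
    have hhm0 : Measurable h := hhm.mono hm le_rfl
    have he1m0 : Measurable e₁ := he1m.mono hm le_rfl
    have habs : ∫⁻ ω, ENNReal.ofReal (|h ω|) ∂(P[|{ω | R ω = 0}])
        = ∫⁻ ω, ENNReal.ofReal (|h ω| * e₁ ω) ∂(P[|{ω | R ω = 1}]) :=
      CoM (fun ω => |h ω|) (measurable_abs.comp hhm) (fun ω => abs_nonneg _)
    have hfin : ∫⁻ ω, ENNReal.ofReal ‖h ω * e₁ ω‖ ∂(P[|{ω | R ω = 1}]) < ⊤ := by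
      have h1 : (fun ω => ENNReal.ofReal ‖h ω * e₁ ω‖)
          = fun ω => ENNReal.ofReal (|h ω| * e₁ ω) := by
        funext ω
        rw [Real.norm_eq_abs, abs_mul, abs_of_pos (he1pos ω)]
      rw [h1, ← habs]
      have h2 : (fun ω => ENNReal.ofReal (|h ω|)) = fun ω => ENNReal.ofReal ‖h ω‖ := by
        funext ω; rw [Real.norm_eq_abs]
      rw [h2]
      exact (hasFiniteIntegral_iff_norm h).mp hhint.2
    have hint1 : Integrable (fun ω => h ω * e₁ ω) (P[|{ω | R ω = 1}]) :=
      ⟨(hhm0.mul he1m0).aestronglyMeasurable, (hasFiniteIntegral_iff_norm _).mpr hfin⟩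
    refine ⟨hint1, ?_⟩
    have hpos := CoM (fun ω => max (h ω) 0) ((measurable_id'.max measurable_const).comp hhm) (fun ω => le_max_right _ _)
    have hneg := CoM (fun ω => max (-h ω) 0) ((measurable_id'.neg.max measurable_const).comp hhm)
      (fun ω => le_max_right _ _)
    rw [integral_eq_lintegral_pos_part_sub_lintegral_neg_part hhint,
      integral_eq_lintegral_pos_part_sub_lintegral_neg_part hint1]
    congr 1
    · congr 1
      calc ∫⁻ ω, ENNReal.ofReal (h ω) ∂(P[|{ω | R ω = 0}])
          = ∫⁻ ω, ENNReal.ofReal (max (h ω) 0) ∂(P[|{ω | R ω = 0}]) :=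
            lintegral_congr fun ω => (hmax1 (h ω)).symm
        _ = ∫⁻ ω, ENNReal.ofReal (max (h ω) 0 * e₁ ω) ∂(P[|{ω | R ω = 1}]) := hpos
        _ = ∫⁻ ω, ENNReal.ofReal (h ω * e₁ ω) ∂(P[|{ω | R ω = 1}]) :=
            lintegral_congr fun ω => hmax2 (h ω) (e₁ ω) (he1pos ω)
    · congr 1
      calc ∫⁻ ω, ENNReal.ofReal (-h ω) ∂(P[|{ω | R ω = 0}])
          = ∫⁻ ω, ENNReal.ofReal (max (-h ω) 0) ∂(P[|{ω | R ω = 0}]) :=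
            lintegral_congr fun ω => (hmax1 (-h ω)).symm
        _ = ∫⁻ ω, ENNReal.ofReal (max (-h ω) 0 * e₁ ω) ∂(P[|{ω | R ω = 1}]) := hneg
        _ = ∫⁻ ω, ENNReal.ofReal (-(h ω * e₁ ω)) ∂(P[|{ω | R ω = 1}]) := by
            refine lintegral_congr fun ω => ?_
            rw [hmax2 (-h ω) (e₁ ω) (he1pos ω), neg_mul]
  obtain ⟨hIntYe, hEqY⟩ := BT Y hYm hYint
  -- total mass identity : ∫⁻ ofReal e₁ dP₁ = 1
  have hE1 : ∫⁻ ω, ENNReal.ofReal (e₁ ω) ∂(P[|{ω | R ω = 1}]) = 1 := by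
    have h1 := CoM (fun _ => (1:ℝ)) measurable_const (fun _ => zero_le_one)
    have h2 : (fun ω => ENNReal.ofReal ((1:ℝ) * e₁ ω)) = fun ω => ENNReal.ofReal (e₁ ω) := by
      funext ω; rw [one_mul]
    rw [h2] at h1
    rw [← h1]
    simp
  -- Part 2: independence under P[ | R = 1 ]
  have hφ : Measurable fun x : Fin d → ℝ => Real.exp (α₁ + ∑ i, β i * proj x i + γ * μreg x) :=
    Real.measurable_exp.comp ((measurable_const.add
      (Finset.measurable_sum _ fun i _ =>
        measurable_const.mul ((measurable_pi_apply i).comp hprojm))).add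
      (measurable_const.mul hμ))
  have hψ : Measurable fun t : ℝ => Real.exp (γ * t) :=
    Real.measurable_exp.comp (measurable_const.mul measurable_id)
  have hψ₂ : Measurable fun t : ℝ => t * Real.exp (γ * t) := measurable_id.mul hψ
  have hAmeas : Measurable fun ω => Real.exp (α₁ + ∑ i, β i * proj (X ω) i + γ * μreg (X ω)) :=
    hφ.comp hX
  have hεmeas : Measurable fun ω => Y ω - μreg (X ω) := hY.sub (hμ.comp hX)
  have hBmeas : Measurable fun ω => Real.exp (γ * (Y ω - μreg (X ω))) := hψ.comp hεmeas
  have hABe : ∀ ω, Real.exp (α₁ + ∑ i, β i * proj (X ω) i + γ * μreg (X ω))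
      * Real.exp (γ * (Y ω - μreg (X ω))) = e₁ ω := by
    intro ω
    show _ = Real.exp (α₁ + ∑ i, β i * proj (X ω) i + γ * Y ω)
    rw [← Real.exp_add]
    congr 1
    ring
  -- independence facts
  have iAB : IndepFun (fun ω => ENNReal.ofReal
        (Real.exp (α₁ + ∑ i, β i * proj (X ω) i + γ * μreg (X ω))))
      (fun ω => ENNReal.ofReal (Real.exp (γ * (Y ω - μreg (X ω))))) (P[|{ω | R ω = 1}]) :=
    hindep.symm.comp hφ.ennreal_ofReal hψ.ennreal_ofReal
  -- the B-factor has nonzero, finite lintegral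
  have lB_ne0 : ∫⁻ ω, ENNReal.ofReal (Real.exp (γ * (Y ω - μreg (X ω))))
      ∂(P[|{ω | R ω = 1}]) ≠ 0 := by
    intro h0
    rw [lintegral_eq_zero_iff hBmeas.ennreal_ofReal] at h0
    have hFalse : ∀ᵐ ω ∂(P[|{ω | R ω = 1}]), False := by
      filter_upwards [h0] with ω hω
      have h1 : ENNReal.ofReal (Real.exp (γ * (Y ω - μreg (X ω)))) = 0 := hω
      rw [ENNReal.ofReal_eq_zero] at h1
      exact absurd h1 (not_le.mpr (Real.exp_pos _))
    rw [ae_iff] at hFalse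
    simp only [not_false_iff, Set.setOf_true] at hFalse
    rw [measure_univ] at hFalse
    exact one_ne_zero hFalse
  have lB_fin : ∫⁻ ω, ENNReal.ofReal (Real.exp (γ * (Y ω - μreg (X ω))))
      ∂(P[|{ω | R ω = 1}]) ≠ ⊤ := by
    have h1 := (hasFiniteIntegral_iff_norm _).mp hM1.2
    refine ne_of_lt (lt_of_eq_of_lt ?_ h1)
    refine lintegral_congr fun ω => ?_
    rw [Real.norm_eq_abs, abs_of_pos (Real.exp_pos _)]
  -- ∫⁻ A * ∫⁻ B = 1
  have prodAB : (∫⁻ ω, ENNReal.ofReal (Real.exp (α₁ + ∑ i, β i * proj (X ω) i + γ * μreg (X ω)))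
        ∂(P[|{ω | R ω = 1}]))
      * (∫⁻ ω, ENNReal.ofReal (Real.exp (γ * (Y ω - μreg (X ω)))) ∂(P[|{ω | R ω = 1}])) = 1 := by
    rw [← lintegral_mul_eq_lintegral_mul_lintegral_of_indepFun''
      hAmeas.ennreal_ofReal.aemeasurable hBmeas.ennreal_ofReal.aemeasurable iAB, ← hE1]
    refine lintegral_congr fun ω => ?_
    rw [← ENNReal.ofReal_mul (Real.exp_pos _).le, hABe ω]
  have lA_fin : ∫⁻ ω, ENNReal.ofReal
      (Real.exp (α₁ + ∑ i, β i * proj (X ω) i + γ * μreg (X ω))) ∂(P[|{ω | R ω = 1}]) < ⊤ :=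
    ENNReal.lt_top_of_mul_ne_top_left (by rw [prodAB]; exact ENNReal.one_ne_top) lB_ne0
  have IntA : Integrable (fun ω => Real.exp (α₁ + ∑ i, β i * proj (X ω) i + γ * μreg (X ω)))
      (P[|{ω | R ω = 1}]) := by
    refine ⟨hAmeas.aestronglyMeasurable, (hasFiniteIntegral_iff_norm _).mpr ?_⟩
    refine lt_of_eq_of_lt ?_ lA_fin
    refine lintegral_congr fun ω => ?_
    rw [Real.norm_eq_abs, abs_of_pos (Real.exp_pos _)]
  -- A * (ε B) is integrable
  have iAεB' : IndepFun (fun ω => ENNReal.ofReal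
        (Real.exp (α₁ + ∑ i, β i * proj (X ω) i + γ * μreg (X ω))))
      (fun ω => ENNReal.ofReal ‖(Y ω - μreg (X ω)) * Real.exp (γ * (Y ω - μreg (X ω)))‖)
      (P[|{ω | R ω = 1}]) :=
    hindep.symm.comp hφ.ennreal_ofReal hψ₂.norm.ennreal_ofReal
  have IntAεB : Integrable (fun ω =>
      Real.exp (α₁ + ∑ i, β i * proj (X ω) i + γ * μreg (X ω))
        * ((Y ω - μreg (X ω)) * Real.exp (γ * (Y ω - μreg (X ω))))) (P[|{ω | R ω = 1}]) := by
    refine ⟨(hAmeas.mul (hεmeas.mul hBmeas)).aestronglyMeasurable,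
      (hasFiniteIntegral_iff_norm _).mpr ?_⟩
    have h1 : ∫⁻ ω, ENNReal.ofReal ‖Real.exp (α₁ + ∑ i, β i * proj (X ω) i + γ * μreg (X ω))
        * ((Y ω - μreg (X ω)) * Real.exp (γ * (Y ω - μreg (X ω))))‖ ∂(P[|{ω | R ω = 1}])
        = (∫⁻ ω, ENNReal.ofReal
            (Real.exp (α₁ + ∑ i, β i * proj (X ω) i + γ * μreg (X ω))) ∂(P[|{ω | R ω = 1}]))
          * ∫⁻ ω, ENNReal.ofReal ‖(Y ω - μreg (X ω)) * Real.exp (γ * (Y ω - μreg (X ω)))‖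
            ∂(P[|{ω | R ω = 1}]) := by
      rw [← lintegral_mul_eq_lintegral_mul_lintegral_of_indepFun''
        (g := fun ω => ENNReal.ofReal ‖(Y ω - μreg (X ω)) * Real.exp (γ * (Y ω - μreg (X ω)))‖)
        hAmeas.ennreal_ofReal.aemeasurable ((hεmeas.mul hBmeas).norm.ennreal_ofReal).aemeasurable
        iAεB']
      refine lintegral_congr fun ω => ?_
      rw [norm_mul, Real.norm_eq_abs (Real.exp (α₁ + ∑ i, β i * proj (X ω) i + γ * μreg (X ω))),
        abs_of_pos (Real.exp_pos _), ENNReal.ofReal_mul (Real.exp_pos _).le]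
    rw [h1]
    exact ENNReal.mul_lt_top lA_fin ((hasFiniteIntegral_iff_norm _).mp hM2.2)
  -- μreg(X) * A * B is integrable
  have IntμAB : Integrable (fun ω => μreg (X ω)
      * Real.exp (α₁ + ∑ i, β i * proj (X ω) i + γ * μreg (X ω))
      * Real.exp (γ * (Y ω - μreg (X ω)))) (P[|{ω | R ω = 1}]) := by
    have heq : (fun ω => μreg (X ω)
        * Real.exp (α₁ + ∑ i, β i * proj (X ω) i + γ * μreg (X ω))
        * Real.exp (γ * (Y ω - μreg (X ω))))
        = fun ω => Y ω * e₁ ω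
            - Real.exp (α₁ + ∑ i, β i * proj (X ω) i + γ * μreg (X ω))
              * ((Y ω - μreg (X ω)) * Real.exp (γ * (Y ω - μreg (X ω)))) := by
      funext ω
      rw [← hABe ω]
      ring
    rw [heq]
    exact hIntYe.sub IntAεB
  -- μreg(X) * A is integrable
  have iμAB' : IndepFun (fun ω => ENNReal.ofReal
        ‖μreg (X ω) * Real.exp (α₁ + ∑ i, β i * proj (X ω) i + γ * μreg (X ω))‖)
      (fun ω => ENNReal.ofReal (Real.exp (γ * (Y ω - μreg (X ω))))) (P[|{ω | R ω = 1}]) :=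
    hindep.symm.comp (hμ.mul hφ).norm.ennreal_ofReal hψ.ennreal_ofReal
  have IntμA : Integrable (fun ω => μreg (X ω)
      * Real.exp (α₁ + ∑ i, β i * proj (X ω) i + γ * μreg (X ω))) (P[|{ω | R ω = 1}]) := by
    refine ⟨((hμ.comp hX).mul hAmeas).aestronglyMeasurable,
      (hasFiniteIntegral_iff_norm _).mpr ?_⟩
    have h1 : (∫⁻ ω, ENNReal.ofReal
          ‖μreg (X ω) * Real.exp (α₁ + ∑ i, β i * proj (X ω) i + γ * μreg (X ω))‖
          ∂(P[|{ω | R ω = 1}]))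
        * (∫⁻ ω, ENNReal.ofReal (Real.exp (γ * (Y ω - μreg (X ω)))) ∂(P[|{ω | R ω = 1}]))
        = ∫⁻ ω, ENNReal.ofReal ‖μreg (X ω)
            * Real.exp (α₁ + ∑ i, β i * proj (X ω) i + γ * μreg (X ω))
            * Real.exp (γ * (Y ω - μreg (X ω)))‖ ∂(P[|{ω | R ω = 1}]) := by
      have hμAn : Measurable fun ω => ENNReal.ofReal
          ‖μreg (X ω) * Real.exp (α₁ + ∑ i, β i * proj (X ω) i + γ * μreg (X ω))‖ :=
        ((hμ.comp hX).mul hAmeas).norm.ennreal_ofReal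
      rw [← lintegral_mul_eq_lintegral_mul_lintegral_of_indepFun'' hμAn.aemeasurable
        hBmeas.ennreal_ofReal.aemeasurable iμAB']
      refine lintegral_congr fun ω => ?_
      rw [← ENNReal.ofReal_mul (norm_nonneg _), norm_mul (μreg (X ω)
        * Real.exp (α₁ + ∑ i, β i * proj (X ω) i + γ * μreg (X ω))), Real.norm_eq_abs
        (Real.exp (γ * (Y ω - μreg (X ω)))), abs_of_pos (Real.exp_pos _)]
    have h2 : ∫⁻ ω, ENNReal.ofReal ‖μreg (X ω)
        * Real.exp (α₁ + ∑ i, β i * proj (X ω) i + γ * μreg (X ω))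
        * Real.exp (γ * (Y ω - μreg (X ω)))‖ ∂(P[|{ω | R ω = 1}]) < ⊤ :=
      (hasFiniteIntegral_iff_norm _).mp IntμAB.2
    refine ENNReal.lt_top_of_mul_ne_top_left ?_ lB_ne0
    rw [h1]
    exact h2.ne
  -- final computation
  rw [hEqY]
  have split : (fun ω => Y ω * e₁ ω)
      = fun ω => μreg (X ω) * Real.exp (α₁ + ∑ i, β i * proj (X ω) i + γ * μreg (X ω))
          * Real.exp (γ * (Y ω - μreg (X ω)))
        + Real.exp (α₁ + ∑ i, β i * proj (X ω) i + γ * μreg (X ω))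
          * ((Y ω - μreg (X ω)) * Real.exp (γ * (Y ω - μreg (X ω)))) := by
    funext ω
    rw [← hABe ω]
    ring
  rw [split, integral_add IntμAB IntAεB]
  have iμA_B : IndepFun (fun ω => μreg (X ω)
        * Real.exp (α₁ + ∑ i, β i * proj (X ω) i + γ * μreg (X ω)))
      (fun ω => Real.exp (γ * (Y ω - μreg (X ω)))) (P[|{ω | R ω = 1}]) :=
    hindep.symm.comp (hμ.mul hφ) hψ
  have iA_εB : IndepFun (fun ω => Real.exp (α₁ + ∑ i, β i * proj (X ω) i + γ * μreg (X ω)))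
      (fun ω => (Y ω - μreg (X ω)) * Real.exp (γ * (Y ω - μreg (X ω)))) (P[|{ω | R ω = 1}]) :=
    hindep.symm.comp hφ hψ₂
  have m1 : ∫ ω, μreg (X ω) * Real.exp (α₁ + ∑ i, β i * proj (X ω) i + γ * μreg (X ω))
      * Real.exp (γ * (Y ω - μreg (X ω))) ∂(P[|{ω | R ω = 1}])
      = (∫ ω, μreg (X ω) * Real.exp (α₁ + ∑ i, β i * proj (X ω) i + γ * μreg (X ω))
          ∂(P[|{ω | R ω = 1}])) * M₁γ := by
    rw [hM₁γ]
    exact iμA_B.integral_mul_eq_mul_integral IntμA.aestronglyMeasurable hM1.aestronglyMeasurable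
  have m2 : ∫ ω, Real.exp (α₁ + ∑ i, β i * proj (X ω) i + γ * μreg (X ω))
      * ((Y ω - μreg (X ω)) * Real.exp (γ * (Y ω - μreg (X ω)))) ∂(P[|{ω | R ω = 1}])
      = (∫ ω, Real.exp (α₁ + ∑ i, β i * proj (X ω) i + γ * μreg (X ω))
          ∂(P[|{ω | R ω = 1}])) * M₂γ := by
    rw [hM₂γ]
    exact iA_εB.integral_mul_eq_mul_integral IntA.aestronglyMeasurable hM2.aestronglyMeasurable
  rw [m1, m2]

/-- Under the logistic missingness model and the location-scale outcome model, if
`M₁(γ) < ∞`, `M₂(γ)` is finite, and `Y` is integrable under `P(· | R = 0)`, then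
`E[Y | R = 0] = E[μ(X)·exp(α₁ + β·X₁ + γ·μ(X)) | R = 1]·M₁(γ)
  + E[exp(α₁ + β·X₁ + γ·μ(X)) | R = 1]·M₂(γ)`. -/
theorem conditional_mean_of_missing_outcome
    {Ω : Type*} [MeasurableSpace Ω] (P : Measure Ω) [IsProbabilityMeasure P]
    {d d₁ : ℕ}
    (X : Ω → (Fin d → ℝ)) (Y : Ω → ℝ) (R : Ω → ℝ)
    (hX : Measurable X) (hY : Measurable Y) (hR : Measurable R)
    (hR01 : ∀ ω, R ω = 0 ∨ R ω = 1)
    (proj : (Fin d → ℝ) →ₗ[ℝ] (Fin d₁ → ℝ))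
    (α₀ : ℝ) (β : Fin d₁ → ℝ) (γ : ℝ)
    (hmodel : (fun ω => (1 + Real.exp (α₀ + ∑ i, β i * proj (X ω) i + γ * Y ω))⁻¹)
      =ᵐ[P] P[R | MeasurableSpace.comap (fun ω => (X ω, Y ω)) inferInstance])
    (η : ℝ) (hη : η = (P {ω | R ω = 1}).toReal) (hη0 : 0 < η) (hη1 : η < 1)
    (α₁ : ℝ) (hα₁ : α₁ = α₀ + Real.log (η / (1 - η)))
    -- location-scale outcome model
    (μreg : (Fin d → ℝ) → ℝ) (hμ : Measurable μreg)
    (hindep : IndepFun (fun ω => Y ω - μreg (X ω)) X (P[|{ω | R ω = 1}]))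
    (hεint : Integrable (fun ω => Y ω - μreg (X ω)) (P[|{ω | R ω = 1}]))
    (hεmean : ∫ ω, (Y ω - μreg (X ω)) ∂(P[|{ω | R ω = 1}]) = 0)
    -- M₁(γ) < ∞ and M₂(γ) finite
    (hM1 : Integrable (fun ω => Real.exp (γ * (Y ω - μreg (X ω)))) (P[|{ω | R ω = 1}]))
    (M₁γ : ℝ)
    (hM₁γ : M₁γ = ∫ ω, Real.exp (γ * (Y ω - μreg (X ω))) ∂(P[|{ω | R ω = 1}]))
    (hM2 : Integrable (fun ω => (Y ω - μreg (X ω)) * Real.exp (γ * (Y ω - μreg (X ω))))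
      (P[|{ω | R ω = 1}]))
    (M₂γ : ℝ)
    (hM₂γ : M₂γ = ∫ ω, (Y ω - μreg (X ω)) * Real.exp (γ * (Y ω - μreg (X ω)))
      ∂(P[|{ω | R ω = 1}]))
    -- Y integrable under P(· | R = 0)
    (hYint : Integrable Y (P[|{ω | R ω = 0}])) :
    ∫ ω, Y ω ∂(P[|{ω | R ω = 0}])
      = (∫ ω, μreg (X ω) * Real.exp (α₁ + ∑ i, β i * proj (X ω) i + γ * μreg (X ω))
            ∂(P[|{ω | R ω = 1}])) * M₁γ
        + (∫ ω, Real.exp (α₁ + ∑ i, β i * proj (X ω) i + γ * μreg (X ω))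
            ∂(P[|{ω | R ω = 1}])) * M₂γ := by
  have hXY : Measurable fun ω => (X ω, Y ω) := hX.prodMk hY
  have hXYm : Measurable[MeasurableSpace.comap (fun ω => (X ω, Y ω)) inferInstance]
      fun ω => (X ω, Y ω) := Measurable.of_comap_le le_rfl
  exact cmmo_aux hXY.comap_le P X Y R (measurable_fst.comp hXYm) (measurable_snd.comp hXYm)
    hR hR01 proj α₀ β γ hmodel η hη hη0 hη1 α₁ hα₁ μreg hμ hindep hM1 M₁γ hM₁γ hM2 M₂γ hM₂γ hYint
end

section
/- (Response-mean identity justifying the estimator of τ.) Under the logistic missingness model and the location-scale outcome model, if M₁(γ) < ∞, M₂(γ) is finite, and both Y and μ(X) are integrable under P, then the response mean τ = E[Y] satisfies τ = E[μ(X)] + (1 − η) · M₂(γ)/M₁(γ). -/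
open MeasureTheory ProbabilityTheory

set_option maxHeartbeats 1000000

/-- (Response-mean identity justifying the estimator of τ.) Under the logistic missingness
model and the location-scale outcome model, if `M₁(γ) < ∞`, `M₂(γ)` is finite, and both `Y`
and `μ(X)` are integrable under `P`, then the response mean `τ = E[Y]` satisfies
`τ = E[μ(X)] + (1 − η)·M₂(γ)/M₁(γ)`. -/
theorem response_mean_identity
    {Ω : Type*} [MeasurableSpace Ω] (P : Measure Ω) [IsProbabilityMeasure P]
    {d d₁ : ℕ}
    (X : Ω → (Fin d → ℝ)) (Y : Ω → ℝ) (R : Ω → ℝ)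
    (hX : Measurable X) (hY : Measurable Y) (hR : Measurable R)
    (hR01 : ∀ ω, R ω = 0 ∨ R ω = 1)
    (proj : (Fin d → ℝ) →ₗ[ℝ] (Fin d₁ → ℝ))
    (α₀ : ℝ) (β : Fin d₁ → ℝ) (γ : ℝ)
    (hmodel : (fun ω => (1 + Real.exp (α₀ + ∑ i, β i * proj (X ω) i + γ * Y ω))⁻¹)
      =ᵐ[P] P[R | MeasurableSpace.comap (fun ω => (X ω, Y ω)) inferInstance])
    (η : ℝ) (hη : η = (P {ω | R ω = 1}).toReal) (hη0 : 0 < η) (hη1 : η < 1)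
    (α₁ : ℝ) (hα₁ : α₁ = α₀ + Real.log (η / (1 - η)))
    -- location-scale outcome model
    (μreg : (Fin d → ℝ) → ℝ) (hμ : Measurable μreg)
    (hindep : IndepFun (fun ω => Y ω - μreg (X ω)) X (P[|{ω | R ω = 1}]))
    (hεint : Integrable (fun ω => Y ω - μreg (X ω)) (P[|{ω | R ω = 1}]))
    (hεmean : ∫ ω, (Y ω - μreg (X ω)) ∂(P[|{ω | R ω = 1}]) = 0)
    -- M₁(γ) < ∞ and M₂(γ) finite
    (hM1 : Integrable (fun ω => Real.exp (γ * (Y ω - μreg (X ω)))) (P[|{ω | R ω = 1}]))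
    (M₁γ : ℝ)
    (hM₁γ : M₁γ = ∫ ω, Real.exp (γ * (Y ω - μreg (X ω))) ∂(P[|{ω | R ω = 1}]))
    (hM2 : Integrable (fun ω => (Y ω - μreg (X ω)) * Real.exp (γ * (Y ω - μreg (X ω))))
      (P[|{ω | R ω = 1}]))
    (M₂γ : ℝ)
    (hM₂γ : M₂γ = ∫ ω, (Y ω - μreg (X ω)) * Real.exp (γ * (Y ω - μreg (X ω)))
      ∂(P[|{ω | R ω = 1}]))
    -- Y and μ(X) integrable under P
    (hYint : Integrable Y P) (hμXint : Integrable (fun ω => μreg (X ω)) P)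
    (τ : ℝ) (hτ : τ = ∫ ω, Y ω ∂P) :
    τ = ∫ ω, μreg (X ω) ∂P + (1 - η) * (M₂γ / M₁γ) := by
  classical
  -- basic measurability setup
  have hXY : Measurable fun ω => (X ω, Y ω) := hX.prodMk hY
  -- the set S of responders
  set S : Set Ω := {ω | R ω = 1} with hS_def
  have hSmeas : MeasurableSet S := hR (measurableSet_singleton 1)
  -- functions
  set ε : Ω → ℝ := fun ω => Y ω - μreg (X ω) with hε_def
  set A : Ω → ℝ := fun ω => α₀ + ∑ i, β i * proj (X ω) i + γ * Y ω with hA_def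
  set π : Ω → ℝ := fun ω => (1 + Real.exp (A ω))⁻¹ with hπ_def
  have hproj_cont : Continuous proj := proj.continuous_of_finiteDimensional
  have hφA : Measurable fun p : (Fin d → ℝ) × ℝ => α₀ + ∑ i, β i * proj p.1 i + γ * p.2 := by
    apply Measurable.add
    apply Measurable.add measurable_const
    · apply Finset.measurable_sum
      intro i _
      exact (measurable_const.mul (((measurable_pi_apply i).comp
        (hproj_cont.measurable.comp measurable_fst))))
    · exact measurable_const.mul measurable_snd
  have hφε : Measurable fun p : (Fin d → ℝ) × ℝ => p.2 - μreg p.1 :=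
    measurable_snd.sub (hμ.comp measurable_fst)
  have hAmeas : Measurable A := hφA.comp hXY
  have hεmeas : Measurable ε := hφε.comp hXY
  have hπaux : Continuous fun x : ℝ => (1 + Real.exp x)⁻¹ :=
    (continuous_const.add Real.continuous_exp).inv₀ (fun x => (by positivity : (0:ℝ) < 1 + Real.exp x).ne')
  have hπmeas : Measurable π := hπaux.measurable.comp hAmeas
  have hfmeas : Measurable fun x : Fin d → ℝ =>
      Real.exp (α₀ + ∑ i, β i * proj x i + γ * μreg x) := by
    apply Real.measurable_exp.comp
    apply Measurable.add
    apply Measurable.add measurable_const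
    · exact Finset.measurable_sum _ fun i _ =>
        measurable_const.mul ((measurable_pi_apply i).comp hproj_cont.measurable)
    · exact measurable_const.mul hμ
  have hgexp : Measurable fun t : ℝ => Real.exp (γ * t) :=
    Real.measurable_exp.comp (measurable_id.const_mul γ)
  -- pointwise facts about π
  have hπ_pos : ∀ ω, 0 < π ω := fun ω => by
    rw [hπ_def]; dsimp only; positivity
  have hπ_le1 : ∀ ω, π ω ≤ 1 := fun ω => by
    rw [hπ_def]; dsimp only
    rw [inv_le_one_iff₀]
    right; nlinarith [Real.exp_pos (A ω)]
  have hkey : ∀ ω, Real.exp (A ω) * π ω = 1 - π ω := by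
    intro ω
    rw [hπ_def]; dsimp only
    have h : (0:ℝ) < 1 + Real.exp (A ω) := by positivity
    field_simp
    ring
  -- R facts
  have hRnn : ∀ ω, 0 ≤ R ω := fun ω => by rcases hR01 ω with h | h <;> simp [h]
  have hRle1 : ∀ ω, R ω ≤ 1 := fun ω => by rcases hR01 ω with h | h <;> simp [h]
  have hRbd : ∀ ω, ‖R ω‖ ≤ 1 := fun ω => by rcases hR01 ω with h | h <;> simp [h]
  have hRint : Integrable R P :=
    (integrable_const (1:ℝ)).mono' hR.aestronglyMeasurable (ae_of_all _ hRbd)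
  have hmulR_eq : ∀ g : Ω → ℝ, (fun ω => g ω * R ω) = S.indicator g := by
    intro g; funext ω
    by_cases hω : ω ∈ S
    · have h1 : R ω = 1 := hω
      simp [Set.indicator_of_mem hω, h1]
    · have h0 : R ω = 0 := by
        rcases hR01 ω with h | h
        · exact h
        · exact absurd h hω
      simp [Set.indicator_of_notMem hω, h0]
  have hintR : ∫ ω, R ω ∂P = η := by
    have : (fun ω => R ω) = S.indicator (fun _ => (1:ℝ)) := by
      have := hmulR_eq (fun _ => (1:ℝ)); simpa using this
    rw [this, hη]
    simp [integral_indicator_const, hSmeas, measureReal_def]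
  -- conditional measure facts
  have hPS_ne0 : P S ≠ 0 := by
    intro h
    rw [hη, hS_def] at hη0
    rw [hS_def] at h
    rw [h] at hη0
    simp at hη0
  have hPS_ne_top : P S ≠ ⊤ := measure_ne_top P S
  haveI hP1prob : IsProbabilityMeasure (P[|S]) := cond_isProbabilityMeasure hPS_ne0
  have hcond_eq : P[|S] = (P S)⁻¹ • P.restrict S := rfl
  have hinv_ne0 : (P S)⁻¹ ≠ 0 := ENNReal.inv_ne_zero.mpr hPS_ne_top
  have hinv_ne_top : (P S)⁻¹ ≠ ⊤ := ENNReal.inv_ne_top.mpr hPS_ne0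
  have hcond_int : ∀ g : Ω → ℝ, ∫ ω, g ω ∂(P[|S]) = η⁻¹ * ∫ ω in S, g ω ∂P := by
    intro g
    rw [hcond_eq, integral_smul_measure, ENNReal.toReal_inv, ← hη, smul_eq_mul]
  have hcond_integrable : ∀ g : Ω → ℝ, Integrable g (P[|S]) ↔ Integrable g (P.restrict S) := by
    intro g
    rw [hcond_eq]
    exact integrable_smul_measure hinv_ne0 hinv_ne_top
  -- bridges between P and the conditional measure
  have hbridge : ∀ g : Ω → ℝ, Integrable (fun ω => g ω * R ω) P →
      Integrable g (P[|S]) ∧ ∫ ω, g ω * R ω ∂P = η * ∫ ω, g ω ∂(P[|S]) := by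
    intro g hg
    have hind : Integrable (S.indicator g) P := by rw [← hmulR_eq]; exact hg
    have hres : Integrable g (P.restrict S) := (integrable_indicator_iff hSmeas).mp hind
    refine ⟨(hcond_integrable g).mpr hres, ?_⟩
    have h1 : (fun ω => g ω * R ω) = S.indicator g := hmulR_eq g
    rw [h1, integral_indicator hSmeas, hcond_int g, ← mul_assoc,
      mul_inv_cancel₀ hη0.ne', one_mul]
  have hbridge' : ∀ g : Ω → ℝ, Integrable g (P[|S]) →
      Integrable (fun ω => g ω * R ω) P := by
    intro g hg
    rw [hmulR_eq]
    exact (integrable_indicator_iff hSmeas).mpr ((hcond_integrable g).mp hg)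
  -- now the sub-σ-algebra
  set m : MeasurableSpace Ω := MeasurableSpace.comap (fun ω => (X ω, Y ω)) inferInstance
    with hm_def
  have hm := hXY.comap_le
  rw [← hm_def] at hm
  haveI : IsFiniteMeasure (P.trim hm) := isFiniteMeasure_trim hm
  haveI : SigmaFinite (P.trim hm) := inferInstance
  have hpair : Measurable[m] fun ω => (X ω, Y ω) := Measurable.of_comap_le le_rfl
  have hA_m : Measurable[m] A := hφA.comp hpair
  have hε_m : Measurable[m] ε := hφε.comp hpair
  -- the transfer identity
  have hT : ∀ h : Ω → ℝ, StronglyMeasurable[m] h → Integrable (fun ω => h ω * R ω) P →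
      ∫ ω, h ω * R ω ∂P = ∫ ω, h ω * π ω ∂P := by
    intro h hhm hhR
    have h1 : P[h * R|m] =ᵐ[P] h * P[R|m] :=
      condExp_mul_of_stronglyMeasurable_left hhm hhR hRint
    have h2 : (h * P[R|m] : Ω → ℝ) =ᵐ[P] fun ω => h ω * π ω := by
      filter_upwards [hmodel] with ω hω
      simp only [Pi.mul_apply]
      rw [← hω]
    calc ∫ ω, h ω * R ω ∂P = ∫ ω, (P[h * R|m]) ω ∂P := (integral_condExp hm).symm
      _ = ∫ ω, h ω * π ω ∂P := integral_congr_ae (h1.trans h2)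
  -- π is integrable and has integral η
  have hππint : Integrable π P :=
    (integrable_const (1:ℝ)).mono' hπmeas.aestronglyMeasurable
      (ae_of_all _ fun ω => by
        rw [Real.norm_eq_abs, abs_of_pos (hπ_pos ω)]; exact hπ_le1 ω)
  have hintπ : ∫ ω, π ω ∂P = η := by
    have h1 := hT (fun _ => (1:ℝ)) stronglyMeasurable_const (by simpa using hRint)
    simp only [one_mul] at h1
    rw [← h1, hintR]
  -- truncation argument : exp(A) * R is integrable
  have hgm : ∀ n : ℕ, StronglyMeasurable[m] fun ω => min (Real.exp (A ω)) (n:ℝ) := fun n =>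
    ((Real.measurable_exp.comp hA_m).min measurable_const).stronglyMeasurable
  have hgnn : ∀ (n : ℕ) ω, 0 ≤ min (Real.exp (A ω)) (n:ℝ) := fun n ω =>
    le_min (Real.exp_pos _).le (Nat.cast_nonneg n)
  have hgR_int : ∀ n : ℕ, Integrable (fun ω => min (Real.exp (A ω)) (n:ℝ) * R ω) P := by
    intro n
    refine (integrable_const ((n:ℝ))).mono'
      (((Real.measurable_exp.comp hAmeas).min measurable_const).mul hR).aestronglyMeasurable
      (ae_of_all _ fun ω => ?_)
    rw [Real.norm_eq_abs, abs_of_nonneg (mul_nonneg (hgnn n ω) (hRnn ω))]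
    calc min (Real.exp (A ω)) (n:ℝ) * R ω ≤ (n:ℝ) * 1 := by
          apply mul_le_mul (min_le_right _ _) (hRle1 ω) (hRnn ω) (Nat.cast_nonneg n)
      _ = (n:ℝ) := mul_one _
  have hgπ_int : ∀ n : ℕ, Integrable (fun ω => min (Real.exp (A ω)) (n:ℝ) * π ω) P := by
    intro n
    refine (integrable_const ((n:ℝ))).mono'
      (((Real.measurable_exp.comp hAmeas).min measurable_const).mul hπmeas).aestronglyMeasurable
      (ae_of_all _ fun ω => ?_)
    rw [Real.norm_eq_abs, abs_of_nonneg (mul_nonneg (hgnn n ω) (hπ_pos ω).le)]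
    calc min (Real.exp (A ω)) (n:ℝ) * π ω ≤ (n:ℝ) * 1 := by
          apply mul_le_mul (min_le_right _ _) (hπ_le1 ω) (hπ_pos ω).le (Nat.cast_nonneg n)
      _ = (n:ℝ) := mul_one _
  have hExpR_int : Integrable (fun ω => Real.exp (A ω) * R ω) P := by
    have hsup : ∀ ω, (⨆ n : ℕ, ENNReal.ofReal (min (Real.exp (A ω)) (n:ℝ) * R ω))
        = ENNReal.ofReal (Real.exp (A ω) * R ω) := by
      intro ω
      apply le_antisymm
      · exact iSup_le fun n => ENNReal.ofReal_le_ofReal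
          (mul_le_mul_of_nonneg_right (min_le_left _ _) (hRnn ω))
      · obtain ⟨n, hn⟩ := exists_nat_ge (Real.exp (A ω))
        exact le_iSup_of_le n (by rw [min_eq_left hn])
    have hmono : Monotone fun (n : ℕ) =>
        fun ω => ENNReal.ofReal (min (Real.exp (A ω)) (n:ℝ) * R ω) := by
      intro a b hab ω
      exact ENNReal.ofReal_le_ofReal (mul_le_mul_of_nonneg_right
        (min_le_min le_rfl (by exact_mod_cast hab)) (hRnn ω))
    have hlim : ∫⁻ ω, ENNReal.ofReal (Real.exp (A ω) * R ω) ∂P ≤ 1 := by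
      have hstep : ∫⁻ ω, ENNReal.ofReal (Real.exp (A ω) * R ω) ∂P
          = ⨆ n : ℕ, ∫⁻ ω, ENNReal.ofReal (min (Real.exp (A ω)) (n:ℝ) * R ω) ∂P := by
        calc ∫⁻ ω, ENNReal.ofReal (Real.exp (A ω) * R ω) ∂P
            = ∫⁻ ω, ⨆ n : ℕ, ENNReal.ofReal (min (Real.exp (A ω)) (n:ℝ) * R ω) ∂P :=
              lintegral_congr fun ω => (hsup ω).symm
          _ = ⨆ n : ℕ, ∫⁻ ω, ENNReal.ofReal (min (Real.exp (A ω)) (n:ℝ) * R ω) ∂P :=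
              lintegral_iSup (fun n =>
                ((((Real.measurable_exp.comp hAmeas).min measurable_const).mul
                  hR).ennreal_ofReal)) hmono
      rw [hstep]
      refine iSup_le fun n => ?_
      rw [← ofReal_integral_eq_lintegral_ofReal (hgR_int n)
        (ae_of_all _ fun ω => mul_nonneg (hgnn n ω) (hRnn ω))]
      rw [hT (fun ω => min (Real.exp (A ω)) (n:ℝ)) (hgm n) (hgR_int n)]
      refine ENNReal.ofReal_le_one.mpr ?_
      have hle : ∀ ω, min (Real.exp (A ω)) (n:ℝ) * π ω ≤ 1 := fun ω => by
        calc min (Real.exp (A ω)) (n:ℝ) * π ω ≤ Real.exp (A ω) * π ω :=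
              mul_le_mul_of_nonneg_right (min_le_left _ _) (hπ_pos ω).le
          _ = 1 - π ω := hkey ω
          _ ≤ 1 := by linarith [hπ_pos ω]
      calc ∫ ω, min (Real.exp (A ω)) (n:ℝ) * π ω ∂P ≤ ∫ _, (1:ℝ) ∂P :=
            integral_mono (hgπ_int n) (integrable_const 1) hle
        _ = 1 := by simp
    refine ⟨((Real.measurable_exp.comp hAmeas).mul hR).aestronglyMeasurable, ?_⟩
    rw [hasFiniteIntegral_iff_ofReal
      (ae_of_all _ fun ω => mul_nonneg (Real.exp_pos _).le (hRnn ω))]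
    exact lt_of_le_of_lt hlim ENNReal.one_lt_top
  -- integral of exp(A) * R equals 1 - η
  have hE1 : ∫ ω, Real.exp (A ω) * R ω ∂P = 1 - η := by
    rw [hT (fun ω => Real.exp (A ω)) (Real.measurable_exp.comp hA_m).stronglyMeasurable
      hExpR_int]
    rw [show (fun ω => Real.exp (A ω) * π ω) = fun ω => 1 - π ω from funext hkey]
    rw [integral_sub (integrable_const 1) hππint, hintπ]
    simp
  -- ε facts
  have hεPint : Integrable ε P := hYint.sub hμXint
  have hεR_int : Integrable (fun ω => ε ω * R ω) P := by
    have h1 : Integrable (R * ε) P := hεPint.bdd_mul hR.aestronglyMeasurable (ae_of_all _ hRbd)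
    exact h1.congr (ae_of_all _ fun ω => mul_comm _ _)
  have hεπ_int : Integrable (fun ω => ε ω * π ω) P := by
    have h1 : Integrable (π * ε) P := hεPint.bdd_mul hπmeas.aestronglyMeasurable
      (ae_of_all _ fun ω => by rw [Real.norm_eq_abs, abs_of_pos (hπ_pos ω)]; exact hπ_le1 ω)
    exact h1.congr (ae_of_all _ fun ω => mul_comm _ _)
  have hεR_zero : ∫ ω, ε ω * R ω ∂P = 0 := by
    obtain ⟨h1, h2⟩ := hbridge ε hεR_int
    rw [h2]
    have h3 : ∫ ω, ε ω ∂(P[|S]) = 0 := hεmean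
    rw [h3, mul_zero]
  have hεπ_zero : ∫ ω, ε ω * π ω ∂P = 0 := by
    rw [← hT ε hε_m.stronglyMeasurable hεR_int]; exact hεR_zero
  -- conditional-measure analysis of exp(A)
  have hexpA_S : Integrable (fun ω => Real.exp (A ω)) (P[|S]) :=
    (hbridge _ hExpR_int).1
  have hexpA_S_int : ∫ ω, Real.exp (A ω) ∂(P[|S]) = η⁻¹ * (1 - η) := by
    have h2 := (hbridge _ hExpR_int).2
    rw [hE1] at h2
    field_simp at h2 ⊢
    linarith
  -- splitting exp(A) via the location-scale model
  have hAsplit : ∀ ω, Real.exp (A ω)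
      = Real.exp (α₀ + ∑ i, β i * proj (X ω) i + γ * μreg (X ω)) * Real.exp (γ * ε ω) := by
    intro ω
    rw [hε_def, hA_def]
    dsimp only
    rw [← Real.exp_add]
    congr 1
    ring
  have hindep' : IndepFun X ε (P[|S]) := hindep.symm
  have ind1 : IndepFun (fun ω => Real.exp (α₀ + ∑ i, β i * proj (X ω) i + γ * μreg (X ω)))
      (fun ω => Real.exp (γ * ε ω)) (P[|S]) := hindep'.comp hfmeas hgexp
  have ind2 : IndepFun (fun ω => Real.exp (α₀ + ∑ i, β i * proj (X ω) i + γ * μreg (X ω)))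
      (fun ω => ε ω * Real.exp (γ * ε ω)) (P[|S]) :=
    hindep'.comp hfmeas (measurable_id.mul hgexp)
  have hM1' : Integrable (fun ω => Real.exp (γ * ε ω)) (P[|S]) := hM1
  have hM2' : Integrable (fun ω => ε ω * Real.exp (γ * ε ω)) (P[|S]) := hM2
  have hprod1 : Integrable
      ((fun ω => Real.exp (α₀ + ∑ i, β i * proj (X ω) i + γ * μreg (X ω)))
        * fun ω => Real.exp (γ * ε ω)) (P[|S]) :=
    hexpA_S.congr (ae_of_all _ fun ω => hAsplit ω)
  have hexp_ne0 : ¬ (fun ω => Real.exp (γ * ε ω)) =ᵐ[P[|S]] 0 := by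
    intro h
    haveI : Filter.NeBot (ae (P[|S])) := ae_neBot.mpr (IsProbabilityMeasure.ne_zero _)
    obtain ⟨ω, hω⟩ := h.exists
    exact (Real.exp_pos _).ne' hω
  have hfX_int : Integrable
      (fun ω => Real.exp (α₀ + ∑ i, β i * proj (X ω) i + γ * μreg (X ω))) (P[|S]) :=
    ind1.integrable_left_of_integrable_op (· * ·) 1 one_ne_zero
      (fun x y => by rw [ENNReal.coe_one, one_mul]; exact (enorm_mul x y).ge) hprod1
      ((hfmeas.comp hX).aestronglyMeasurable) ((hgexp.comp hεmeas).aestronglyMeasurable)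
      hexp_ne0
  set C : ℝ := ∫ ω, Real.exp (α₀ + ∑ i, β i * proj (X ω) i + γ * μreg (X ω)) ∂(P[|S])
    with hC_def
  have heq1 : η⁻¹ * (1 - η) = C * M₁γ := by
    rw [← hexpA_S_int, hM₁γ]
    have h1 := ind1.integral_fun_mul_eq_mul_integral hfX_int.aestronglyMeasurable hM1'.aestronglyMeasurable
    have h2 : ∫ ω, Real.exp (A ω) ∂(P[|S])
        = ∫ ω, Real.exp (α₀ + ∑ i, β i * proj (X ω) i + γ * μreg (X ω))
            * Real.exp (γ * ε ω) ∂(P[|S]) :=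
      integral_congr_ae (ae_of_all _ fun ω => hAsplit ω)
    rw [h2]
    exact h1
  have hprod2 : Integrable
      ((fun ω => Real.exp (α₀ + ∑ i, β i * proj (X ω) i + γ * μreg (X ω)))
        * fun ω => ε ω * Real.exp (γ * ε ω)) (P[|S]) :=
    ind2.integrable_mul hfX_int hM2'
  have hεA_S : Integrable (fun ω => ε ω * Real.exp (A ω)) (P[|S]) := by
    refine hprod2.congr (ae_of_all _ fun ω => ?_)
    simp only [Pi.mul_apply, hAsplit]
    ring
  have heq2 : ∫ ω, ε ω * Real.exp (A ω) ∂(P[|S]) = C * M₂γ := by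
    rw [hM₂γ]
    have h1 := ind2.integral_fun_mul_eq_mul_integral hfX_int.aestronglyMeasurable hM2'.aestronglyMeasurable
    have h2 : ∫ ω, ε ω * Real.exp (A ω) ∂(P[|S])
        = ∫ ω, Real.exp (α₀ + ∑ i, β i * proj (X ω) i + γ * μreg (X ω))
            * (ε ω * Real.exp (γ * ε ω)) ∂(P[|S]) := by
      refine integral_congr_ae (ae_of_all _ fun ω => ?_)
      simp only [hAsplit]
      ring
    rw [h2]
    exact h1
  -- transfer back to P
  have hεAR_int : Integrable (fun ω => ε ω * Real.exp (A ω) * R ω) P :=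
    hbridge' _ hεA_S
  have hmain : ∫ ω, ε ω * Real.exp (A ω) * R ω ∂P = η * (C * M₂γ) := by
    have h2 := (hbridge _ hεAR_int).2
    rw [h2, heq2]
  have hTrans : ∫ ω, ε ω * Real.exp (A ω) * R ω ∂P = ∫ ω, ε ω ∂P := by
    rw [hT (fun ω => ε ω * Real.exp (A ω))
      (hε_m.mul (Real.measurable_exp.comp hA_m)).stronglyMeasurable hεAR_int]
    have hpt : (fun ω => ε ω * Real.exp (A ω) * π ω) = fun ω => ε ω - ε ω * π ω := by
      funext ω; rw [mul_assoc, hkey ω]; ring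
    rw [hpt, integral_sub hεPint hεπ_int, hεπ_zero, sub_zero]
  -- positivity of M₁γ
  have hM₁pos : 0 < M₁γ := by
    rw [hM₁γ]
    have hsupp : Function.support (fun ω => Real.exp (γ * ε ω)) = Set.univ :=
      Set.eq_univ_of_forall fun ω => (Real.exp_pos _).ne'
    rw [integral_pos_iff_support_of_nonneg_ae
      (ae_of_all _ fun ω => (Real.exp_pos (γ * ε ω)).le) hM1']
    rw [hsupp]
    simp
  -- final assembly
  have hεval : ∫ ω, ε ω ∂P = (1 - η) * (M₂γ / M₁γ) := by
    rw [← hTrans, hmain]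
    have hkeyC : η * C * M₁γ = 1 - η := by
      rw [mul_assoc, ← heq1, ← mul_assoc, mul_inv_cancel₀ hη0.ne', one_mul]
    have hM₁ne : M₁γ ≠ 0 := hM₁pos.ne'
    calc η * (C * M₂γ) = (η * C * M₁γ) * (M₂γ / M₁γ) := by field_simp
      _ = (1 - η) * (M₂γ / M₁γ) := by rw [hkeyC]
  have hsplitY : ∫ ω, Y ω ∂P = ∫ ω, μreg (X ω) ∂P + ∫ ω, ε ω ∂P := by
    rw [← integral_add hμXint hεPint]
    refine integral_congr_ae (ae_of_all _ fun ω => ?_)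
    rw [hε_def]; ring
  rw [hτ, hsplitY, hεval]
end
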